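/- arXiv:math/0507430 — 12 statements merged into one kernel-verified Lean document; each statement's English description precedes it below -/
import Mathlib

section
/- Let A_n = ((3n)!/(n!)^3) * (sum over k = 0..n of C(n,k)^3), an integer for every natural number n. Then, with the convention A_m = 0 for m < 0, for every integer n ≥ 1 one has n^4·A_n = 3(3n−1)(3n−2)(7n^2−7n+2)·A_{n−1} + 72(3n−1)(3n−2)(3n−4)(3n−5)·A_{n−2}. (Equivalently, y_0(z) = Σ A_n z^n with A_0 = 1 is the analytic solution of the Calabi–Yau differential equation θ^4 − 3z(3θ+1)(3θ+2)(7θ^2+7θ+2) − 72z^2(3θ+1)(3θ+2)(3θ+4)(3θ+5), case #15 of the table.) -/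
/-- The Zeilberger certificate polynomial for the Franel recurrence. -/
def Pp (n k : ℤ) : ℤ :=
  14*n^5 - 38*n^4 + 34*n^3 - 10*n^2
  + k*(-27*n^4 + 69*n^3 - 57*n^2 + 15*n)
  + k^2*(18*n^3 - 42*n^2 + 30*n - 6)
  + k^3*(-4*n^2 + 8*n - 4)

/-- Auxiliary telescoping function. -/
def Hf (m j : ℕ) : ℤ := (((m+1).choose j : ℤ))^3 * Pp ((m:ℤ)+2) ((j:ℤ)+1)

lemma Lgen (M K : ℕ) :
    ((K:ℤ)+1) * (M.choose (K+1) : ℤ) = ((M:ℤ) - K) * (M.choose K : ℤ) := by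
  rcases le_or_gt (K+1) M with h | h
  · have h0 := Nat.choose_succ_right_eq M K
    have hc : ((M - K : ℕ) : ℤ) = (M:ℤ) - K := by omega
    have h0' : (M.choose (K+1) : ℤ) * ((K:ℤ)+1) = (M.choose K : ℤ) * ((M:ℤ) - K) := by
      rw [← hc]; exact_mod_cast h0
    linear_combination h0'
  · have h1 : M.choose (K+1) = 0 := Nat.choose_eq_zero_of_lt (by omega)
    rcases eq_or_lt_of_le (Nat.lt_succ_iff.mp h) with rfl | h2
    · simp [h1]
    · have h3 : M.choose K = 0 := Nat.choose_eq_zero_of_lt h2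
      simp [h1, h3]

lemma Lgen2 (M K : ℕ) :
    ((M:ℤ)+1) * (M.choose K : ℤ) = ((K:ℤ)+1) * ((M+1).choose (K+1) : ℤ) := by
  have h := Nat.add_one_mul_choose_eq M K
  zify at h
  linear_combination h

lemma step (m j : ℕ) (hj : j ≤ m+1) :
    ((m:ℤ)+1)^3 * (((m:ℤ)+2)^2 * (((m+2).choose (j+1) : ℤ))^3
      - (7*((m:ℤ)+2)^2 - 7*((m:ℤ)+2) + 2) * (((m+1).choose (j+1) : ℤ))^3
      - 8*((m:ℤ)+1)^2 * ((m.choose (j+1) : ℤ))^3)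
    = Hf m j - Hf m (j+1) := by
  rcases Nat.lt_or_ge j (m+1) with hjm | hjm
  · have hj' : j ≤ m := by omega
    have h1 : ((j:ℤ)+1) * (((m+2).choose (j+1) : ℤ)) = ((m:ℤ)+2) * (((m+1).choose j : ℤ)) := by
      have h := Lgen2 (m+1) j
      simp only [show m+1+1 = m+2 from rfl] at h
      push_cast at h
      linear_combination -h
    have h3 : ((j:ℤ)+1) * (((m+1).choose (j+1) : ℤ)) = ((m:ℤ)+1) * ((m.choose j : ℤ)) := by
      have h := Lgen2 m j
      linear_combination -h
    have hA' : ((j:ℤ)+1) * (((m+1).choose (j+1) : ℤ)) = ((m:ℤ)+1-j) * (((m+1).choose j : ℤ)) := by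
      have h := Lgen (m+1) j
      push_cast at h
      linear_combination h
    have h2 : ((m:ℤ)+1-j) * (((m+1).choose j : ℤ)) = ((m:ℤ)+1) * ((m.choose j : ℤ)) := by
      linear_combination h3 - hA'
    have h4 : ((j:ℤ)+1) * ((m.choose (j+1) : ℤ)) = ((m:ℤ)-j) * ((m.choose j : ℤ)) :=
      Lgen m j
    have E1 : ((j:ℤ)+1)^3 * (((m+2).choose (j+1) : ℤ))^3
        = ((m:ℤ)+2)^3 * (((m+1).choose j : ℤ))^3 := by
      rw [← mul_pow, ← mul_pow, h1]
    have E2 : ((m:ℤ)+1-j)^3 * (((m+1).choose j : ℤ))^3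
        = ((m:ℤ)+1)^3 * ((m.choose j : ℤ))^3 := by
      rw [← mul_pow, ← mul_pow, h2]
    have E3 : ((j:ℤ)+1)^3 * (((m+1).choose (j+1) : ℤ))^3
        = ((m:ℤ)+1)^3 * ((m.choose j : ℤ))^3 := by
      rw [← mul_pow, ← mul_pow, h3]
    have E4 : ((j:ℤ)+1)^3 * ((m.choose (j+1) : ℤ))^3
        = ((m:ℤ)-j)^3 * ((m.choose j : ℤ))^3 := by
      rw [← mul_pow, ← mul_pow, h4]
    have hXY : (((j:ℤ)+1)^3 * ((m:ℤ)+1-(j:ℤ))^3) ≠ 0 := by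
      have l0 : (j:ℤ) ≤ (m:ℤ) := by exact_mod_cast hj'
      have l1 : (0:ℤ) < (j:ℤ)+1 := by positivity
      have l2 : (0:ℤ) < (m:ℤ)+1-(j:ℤ) := by linarith
      exact mul_ne_zero (pow_ne_zero _ l1.ne') (pow_ne_zero _ l2.ne')
    apply mul_left_cancel₀ hXY
    simp only [Hf]
    push_cast
    linear_combination (norm := (simp only [Pp]; ring1))
      (((m:ℤ)+1)^3 * ((m:ℤ)+2)^2 * ((m:ℤ)+1-(j:ℤ))^3) * E1
      + (((m:ℤ)+1)^3 * ((m:ℤ)+2)^2 * ((m:ℤ)+2)^3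
          - Pp ((m:ℤ)+2) ((j:ℤ)+1) * ((j:ℤ)+1)^3) * E2
      + ((Pp ((m:ℤ)+2) ((j:ℤ)+2)
          - ((m:ℤ)+1)^3 * (7*((m:ℤ)+2)^2 - 7*((m:ℤ)+2) + 2)) * ((m:ℤ)+1-(j:ℤ))^3) * E3
      + (-(((m:ℤ)+1)^3 * 8 * ((m:ℤ)+1)^2) * ((m:ℤ)+1-(j:ℤ))^3) * E4
  · have hj2 : j = m+1 := by omega
    subst hj2
    simp only [Hf, Pp, show m+1+1 = m+2 from rfl]
    rw [Nat.choose_self, Nat.choose_self,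
      Nat.choose_eq_zero_of_lt (show m+1 < m+2 by omega),
      Nat.choose_eq_zero_of_lt (show m < m+2 by omega)]
    push_cast
    ring

lemma franel (m : ℕ) :
    ((m:ℤ)+2)^2 * (∑ k ∈ Finset.range (m+2+1), (((m+2).choose k : ℤ))^3) =
      (7*((m:ℤ)+2)^2 - 7*((m:ℤ)+2) + 2) *
          (∑ k ∈ Finset.range (m+1+1), (((m+1).choose k : ℤ))^3) +
        8*((m:ℤ)+1)^2 * (∑ k ∈ Finset.range (m+1), ((m.choose k : ℤ))^3) := by
  have hW : (((m:ℤ)+1)^3 : ℤ) ≠ 0 := by positivity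
  have e1 : (∑ k ∈ Finset.range (m+1+1), (((m+1).choose k : ℤ))^3)
      = ∑ k ∈ Finset.range (m+2+1), (((m+1).choose k : ℤ))^3 := by
    rw [Finset.sum_range_succ (n := m+2)]
    rw [Nat.choose_eq_zero_of_lt (show m+1 < m+2 by omega)]
    norm_num
  have e2 : (∑ k ∈ Finset.range (m+1), ((m.choose k : ℤ))^3)
      = ∑ k ∈ Finset.range (m+2+1), ((m.choose k : ℤ))^3 := by
    rw [Finset.sum_range_succ (n := m+2), Finset.sum_range_succ (n := m+1)]
    rw [Nat.choose_eq_zero_of_lt (show m < m+2 by omega),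
      Nat.choose_eq_zero_of_lt (show m < m+1 by omega)]
    norm_num
  rw [e1, e2]
  apply mul_left_cancel₀ hW
  have key : ∑ k ∈ Finset.range (m+2+1),
      (((m:ℤ)+1)^3 * (((m:ℤ)+2)^2 * (((m+2).choose k : ℤ))^3
        - (7*((m:ℤ)+2)^2 - 7*((m:ℤ)+2) + 2) * (((m+1).choose k : ℤ))^3
        - 8*((m:ℤ)+1)^2 * ((m.choose k : ℤ))^3)) = 0 := by
    rw [Finset.sum_range_succ']
    have hstep : ∀ j ∈ Finset.range (m+2),
        ((m:ℤ)+1)^3 * (((m:ℤ)+2)^2 * (((m+2).choose (j+1) : ℤ))^3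
          - (7*((m:ℤ)+2)^2 - 7*((m:ℤ)+2) + 2) * (((m+1).choose (j+1) : ℤ))^3
          - 8*((m:ℤ)+1)^2 * ((m.choose (j+1) : ℤ))^3)
        = Hf m j - Hf m (j+1) := by
      intro j hjmem
      exact step m j (by simp at hjmem; omega)
    rw [Finset.sum_congr rfl hstep, Finset.sum_range_sub' (Hf m) (m+2)]
    simp only [Hf, Pp]
    rw [Nat.choose_eq_zero_of_lt (show m+1 < m+2 by omega)]
    simp
    ring
  have exp : ∑ k ∈ Finset.range (m+2+1),
      (((m:ℤ)+1)^3 * (((m:ℤ)+2)^2 * (((m+2).choose k : ℤ))^3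
        - (7*((m:ℤ)+2)^2 - 7*((m:ℤ)+2) + 2) * (((m+1).choose k : ℤ))^3
        - 8*((m:ℤ)+1)^2 * ((m.choose k : ℤ))^3))
      = ((m:ℤ)+1)^3 * (((m:ℤ)+2)^2 * ∑ k ∈ Finset.range (m+2+1), (((m+2).choose k : ℤ))^3)
        - ((m:ℤ)+1)^3 * ((7*((m:ℤ)+2)^2 - 7*((m:ℤ)+2) + 2) *
            (∑ k ∈ Finset.range (m+2+1), (((m+1).choose k : ℤ))^3)
          + 8*((m:ℤ)+1)^2 * (∑ k ∈ Finset.range (m+2+1), ((m.choose k : ℤ))^3)) := by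
    simp only [Finset.mul_sum, mul_add, ← Finset.sum_add_distrib, ← Finset.sum_sub_distrib]
    exact Finset.sum_congr rfl fun k _ => by ring
  linear_combination key - exp

lemma gfact (t : ℕ) :
    (3*t).factorial = ((3*t).choose t * (2*t).choose t) * (t.factorial)^3 := by
  have h1 := Nat.choose_mul_factorial_mul_factorial (show t ≤ 3*t by omega)
  have h2 := Nat.choose_mul_factorial_mul_factorial (show t ≤ 2*t by omega)
  rw [show 3*t - t = 2*t by omega] at h1
  rw [show 2*t - t = t by omega] at h2
  rw [← h2] at h1
  rw [← h1]
  ring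

lemma gdiv (t : ℕ) :
    (3*t).factorial / (t.factorial)^3 = (3*t).choose t * (2*t).choose t := by
  rw [gfact t]
  exact Nat.mul_div_cancel _ (by positivity)

lemma grec (t : ℕ) :
    ((t:ℤ)+1)^2 * (((3*(t+1)).choose (t+1) : ℤ) * ((2*(t+1)).choose (t+1) : ℤ)) =
      3*(3*(t:ℤ)+1)*(3*(t:ℤ)+2) * (((3*t).choose t : ℤ) * ((2*t).choose t : ℤ)) := by
  have H1 : ((3*t).factorial : ℤ)
      = ((3*t).choose t : ℤ) * ((2*t).choose t : ℤ) * ((t.factorial : ℤ))^3 := by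
    exact_mod_cast gfact t
  have H2 : ((3*(t+1)).factorial : ℤ)
      = ((3*(t+1)).choose (t+1) : ℤ) * ((2*(t+1)).choose (t+1) : ℤ)
        * (((t+1).factorial : ℤ))^3 := by
    exact_mod_cast gfact (t+1)
  have F3 : ((3*(t+1)).factorial : ℤ)
      = (3*(t:ℤ)+3)*(3*(t:ℤ)+2)*(3*(t:ℤ)+1) * ((3*t).factorial : ℤ) := by
    rw [show 3*(t+1) = (3*t) + 1 + 1 + 1 by ring]
    push_cast [Nat.factorial_succ]
    ring
  have F1c : (((t+1).factorial : ℤ))^3 = ((t:ℤ)+1)^3 * ((t.factorial : ℤ))^3 := by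
    rw [Nat.factorial_succ]
    push_cast
    ring
  have hfpos : (0:ℤ) < (t.factorial : ℤ) := by exact_mod_cast t.factorial_pos
  have hne : ((t:ℤ)+1) * ((t.factorial : ℤ))^3 ≠ 0 :=
    mul_ne_zero (by positivity) (pow_ne_zero _ hfpos.ne')
  apply mul_left_cancel₀ hne
  linear_combination
    (-(((3*(t+1)).choose (t+1) : ℤ) * ((2*(t+1)).choose (t+1) : ℤ))) * F1c
    - H2 + F3 + (3*(t:ℤ)+3)*(3*(t:ℤ)+2)*(3*(t:ℤ)+1) * H1

/-- Case #15: A_n = ((3n)!/(n!)^3) * ∑_{k=0}^n C(n,k)^3 satisfies the recurrence of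
θ^4 − 3z(3θ+1)(3θ+2)(7θ^2+7θ+2) − 72z^2(3θ+1)(3θ+2)(3θ+4)(3θ+5). -/
theorem stmt_0
    (A : ℤ → ℤ)
    (hneg : ∀ m : ℤ, m < 0 → A m = 0)
    (hA : ∀ n : ℕ, A (n : ℤ) =
      ((Nat.factorial (3 * n) / (Nat.factorial n) ^ 3 : ℕ) : ℤ) *
        ∑ k ∈ Finset.range (n + 1), ((n.choose k : ℤ)) ^ 3) :
    ∀ n : ℤ, 1 ≤ n →
      n ^ 4 * A n =
        3 * (3 * n - 1) * (3 * n - 2) * (7 * n ^ 2 - 7 * n + 2) * A (n - 1) +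
          72 * (3 * n - 1) * (3 * n - 2) * (3 * n - 4) * (3 * n - 5) * A (n - 2) := by
  intro n hn
  rcases eq_or_lt_of_le hn with h1 | h2
  · -- n = 1
    subst h1
    have hz : A (-1 : ℤ) = 0 := hneg _ (by norm_num)
    have h1 := hA 1
    have h0 := hA 0
    simp [Nat.factorial, Finset.sum_range_succ] at h1 h0
    norm_num [hz, h1, h0]
  · -- n ≥ 2
    obtain ⟨m, rfl⟩ : ∃ m : ℕ, n = (m:ℤ) + 2 := ⟨(n-2).toNat, by omega⟩
    have hAn := hA (m+2)
    have hA1 := hA (m+1)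
    have hA0 := hA m
    rw [gdiv] at hAn hA1 hA0
    push_cast at hAn hA1 hA0
    have hg1 := grec (m+1)
    simp only [show m+1+1 = m+2 from rfl] at hg1
    push_cast at hg1
    have hg2 := grec m
    push_cast at hg2
    have hf := franel m
    rw [show ((m:ℤ)+2-1) = (m:ℤ)+1 by ring, show ((m:ℤ)+2-2) = (m:ℤ) by ring]
    rw [hAn, hA1, hA0]
    linear_combination
      (((m:ℤ)+2)^2 * (∑ k ∈ Finset.range (m+2+1), (((m+2).choose k : ℤ))^3)) * hg1
      + (3*(3*(m:ℤ)+5)*(3*(m:ℤ)+4)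
          * (((3*(m+1)).choose (m+1) : ℤ) * ((2*(m+1)).choose (m+1) : ℤ))) * hf
      + (24*(3*(m:ℤ)+5)*(3*(m:ℤ)+4)
          * (∑ k ∈ Finset.range (m+1), ((m.choose k : ℤ))^3)) * hg2
end

section
/- For every natural number n, the sum over all quadruples (j,k,l,m) of natural numbers with j+k+l+m = n of the squared multinomial coefficient (n!/(j!·k!·l!·m!))^2 equals the sum over k = 0..n of C(n,k)^2 · C(2k,k) · C(2n−2k, n−k). (This is the equality of the two expressions for the coefficients A_n/C(2n,n) in case #16 of the table.) -/
lemma sq_sum (m : ℕ) :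
    ∑ i ∈ Finset.range (m + 1), (m.choose i) ^ 2 = (2 * m).choose m := by
  rw [two_mul, Nat.add_choose_eq, Finset.Nat.sum_antidiagonal_eq_sum_range_succ_mk]
  apply Finset.sum_congr rfl
  intro i hi
  rw [Finset.mem_range] at hi
  rw [Nat.choose_symm (Nat.lt_succ_iff.mp hi), sq]

lemma multinom (j k l m : ℕ) :
    (j + k + l + m).factorial /
      (j.factorial * k.factorial * l.factorial * m.factorial)
      = (j + k + l + m).choose (j + k) * (j + k).choose j * (l + m).choose l := by
  have h1 := Nat.choose_mul_factorial_mul_factorial (Nat.le_add_right j k)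
  have h2 := Nat.choose_mul_factorial_mul_factorial (Nat.le_add_right l m)
  have h3 := Nat.choose_mul_factorial_mul_factorial
    (show j + k ≤ j + k + l + m by omega)
  rw [Nat.add_sub_cancel_left] at h1 h2
  rw [show j + k + l + m - (j + k) = l + m by omega] at h3
  have key : (j + k + l + m).factorial =
      ((j + k + l + m).choose (j + k) * (j + k).choose j * (l + m).choose l) *
        (j.factorial * k.factorial * l.factorial * m.factorial) := by
    rw [← h3, ← h1, ← h2]; ring
  rw [key, Nat.mul_div_cancel _ (by positivity)]

lemma pair_sum (n b : ℕ) (hb : b ≤ n) (f : ℕ → ℕ) :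
    (∑ l ∈ Finset.range (n + 1), ∑ m ∈ Finset.range (n + 1),
      (if l + m = b then f l else 0)) = ∑ l ∈ Finset.range (b + 1), f l := by
  have inner : ∀ l, (∑ m ∈ Finset.range (n + 1), if l + m = b then f l else 0)
      = if l ≤ b then f l else 0 := by
    intro l
    by_cases h : l ≤ b
    · rw [Finset.sum_eq_single (b - l)]
      · rw [if_pos (by omega), if_pos h]
      · intro m _ hne; rw [if_neg (by omega)]
      · intro hmem; exfalso; apply hmem; rw [Finset.mem_range]; omega
    · rw [if_neg h]
      apply Finset.sum_eq_zero
      intro m _; rw [if_neg (by omega)]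
  simp_rw [inner]
  rw [← Finset.sum_subset (Finset.range_subset_range.mpr (by omega : b + 1 ≤ n + 1))]
  · apply Finset.sum_congr rfl
    intro l hl
    rw [Finset.mem_range] at hl
    rw [if_pos (by omega)]
  · intro l _ hl
    rw [Finset.mem_range] at hl
    rw [if_neg (by omega)]

/-- Case #16: the sum of squared multinomial coefficients over quadruples summing to n
equals ∑_{k=0}^n C(n,k)^2 C(2k,k) C(2n−2k,n−k). -/
theorem stmt_1 (n : ℕ) :
    (∑ j ∈ Finset.range (n + 1), ∑ k ∈ Finset.range (n + 1),
      ∑ l ∈ Finset.range (n + 1), ∑ m ∈ Finset.range (n + 1),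
        if j + k + l + m = n then
          (Nat.factorial n /
            (Nat.factorial j * Nat.factorial k * Nat.factorial l * Nat.factorial m)) ^ 2
        else 0) =
    ∑ k ∈ Finset.range (n + 1),
      (n.choose k) ^ 2 * Nat.choose (2 * k) k * Nat.choose (2 * n - 2 * k) (n - k) := by
  have step1 :
      (∑ j ∈ Finset.range (n + 1), ∑ k ∈ Finset.range (n + 1),
        ∑ l ∈ Finset.range (n + 1), ∑ m ∈ Finset.range (n + 1),
          if j + k + l + m = n then
            (Nat.factorial n /
              (Nat.factorial j * Nat.factorial k * Nat.factorial l * Nat.factorial m)) ^ 2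
          else 0) =
      ∑ j ∈ Finset.range (n + 1), ∑ k ∈ Finset.range (n + 1),
        ∑ l ∈ Finset.range (n + 1), ∑ m ∈ Finset.range (n + 1),
          if j + k + l + m = n then
            (n.choose (j + k) * (j + k).choose j) ^ 2 *
              ((n - (j + k)).choose l) ^ 2
          else 0 := by
    refine Finset.sum_congr rfl fun j _ => Finset.sum_congr rfl fun k _ =>
      Finset.sum_congr rfl fun l _ => Finset.sum_congr rfl fun m _ => ?_
    split_ifs with h
    · rw [← h, multinom, show j + k + l + m - (j + k) = l + m by omega]
      ring
    · rfl
  rw [step1]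
  have step2 : ∀ j k : ℕ,
      (∑ l ∈ Finset.range (n + 1), ∑ m ∈ Finset.range (n + 1),
        if j + k + l + m = n then
          (n.choose (j + k) * (j + k).choose j) ^ 2 *
            ((n - (j + k)).choose l) ^ 2
        else 0) =
      if j + k ≤ n then
        (n.choose (j + k) * (j + k).choose j) ^ 2 *
          (2 * (n - (j + k))).choose (n - (j + k)) else 0 := by
    intro j k
    by_cases hjk : j + k ≤ n
    · rw [if_pos hjk]
      have hcond : (∑ l ∈ Finset.range (n + 1), ∑ m ∈ Finset.range (n + 1),
          if j + k + l + m = n then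
            (n.choose (j + k) * (j + k).choose j) ^ 2 *
              ((n - (j + k)).choose l) ^ 2
          else 0) =
          ∑ l ∈ Finset.range (n + 1), ∑ m ∈ Finset.range (n + 1),
          if l + m = n - (j + k) then
            (n.choose (j + k) * (j + k).choose j) ^ 2 *
              ((n - (j + k)).choose l) ^ 2
          else 0 := by
        refine Finset.sum_congr rfl fun l _ => Finset.sum_congr rfl fun m _ => ?_
        congr 1
        simp only [eq_iff_iff]
        omega
      rw [hcond, pair_sum n (n - (j + k)) (by omega), ← Finset.mul_sum, sq_sum]
    · rw [if_neg hjk]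
      apply Finset.sum_eq_zero; intro l _
      apply Finset.sum_eq_zero; intro m _
      rw [if_neg (by omega)]
  simp_rw [step2]
  have step3 : ∀ j k : ℕ, j ∈ Finset.range (n + 1) → k ∈ Finset.range (n + 1) →
      (if j + k ≤ n then
        (n.choose (j + k) * (j + k).choose j) ^ 2 *
          (2 * (n - (j + k))).choose (n - (j + k)) else 0) =
      ∑ a ∈ Finset.range (n + 1),
        if j + k = a then
          (n.choose a * a.choose j) ^ 2 * (2 * (n - a)).choose (n - a) else 0 := by
    intro j k _ _
    rw [Finset.sum_ite_eq]
    simp only [Finset.mem_range, Nat.lt_succ_iff]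
  rw [Finset.sum_congr rfl fun j hj => Finset.sum_congr rfl fun k hk => step3 j k hj hk]
  have swap1 : ∀ j : ℕ,
      (∑ k ∈ Finset.range (n + 1), ∑ a ∈ Finset.range (n + 1),
        if j + k = a then
          (n.choose a * a.choose j) ^ 2 * (2 * (n - a)).choose (n - a) else 0) =
      ∑ a ∈ Finset.range (n + 1), ∑ k ∈ Finset.range (n + 1),
        if j + k = a then
          (n.choose a * a.choose j) ^ 2 * (2 * (n - a)).choose (n - a) else 0 :=
    fun j => Finset.sum_comm
  simp_rw [swap1]
  rw [Finset.sum_comm]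
  apply Finset.sum_congr rfl
  intro a ha
  rw [Finset.mem_range] at ha
  rw [pair_sum n a (by omega)]
  have : (∑ j ∈ Finset.range (a + 1),
      (n.choose a * a.choose j) ^ 2 * (2 * (n - a)).choose (n - a)) =
      ((n.choose a) ^ 2 * (2 * (n - a)).choose (n - a)) *
        ∑ j ∈ Finset.range (a + 1), (a.choose j) ^ 2 := by
    rw [Finset.mul_sum]
    apply Finset.sum_congr rfl
    intro j _
    ring
  rw [this, sq_sum, show 2 * (n - a) = 2 * n - 2 * a by omega]
  ring
end

section
/- Let A_n = C(2n,n) * (sum over all quadruples (j,k,l,m) of natural numbers with j+k+l+m = n of (n!/(j!·k!·l!·m!))^2). Then, with the convention A_m = 0 for m < 0, for every integer n ≥ 1 one has n^4·A_n = 4(2n−1)^2(5n^2−5n+2)·A_{n−1} − 256(n−1)^2(2n−1)(2n−3)·A_{n−2}. (Equivalently, Σ A_n z^n is the analytic solution of the operator θ^4 − 4z(2θ+1)^2(5θ^2+5θ+2) + 2^8 z^2(θ+1)^2(2θ+1)(2θ+3), case #16 of the table.) -/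
open Finset


lemma sum_choose_sq (n : ℕ) :
    ∑ i ∈ range (n+1), (n.choose i)^2 = (2*n).choose n := by
  rw [two_mul, Nat.add_choose_eq, Finset.Nat.sum_antidiagonal_eq_sum_range_succ_mk]
  refine Finset.sum_congr rfl fun i hi => ?_
  rw [sq, Nat.choose_symm (by simpa using Nat.lt_succ_iff.mp (mem_range.mp hi))]

lemma sum_sum_ite {M : Type*} [AddCommMonoid M] (n t : ℕ) (ht : t ≤ n) (u : ℕ → ℕ → M) :
    ∑ l ∈ range (n+1), ∑ m ∈ range (n+1), (if l + m = t then u l m else 0)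
      = ∑ l ∈ range (t+1), u l (t - l) := by
  have h1 : ∀ l ∈ range (n+1),
      (∑ m ∈ range (n+1), if l + m = t then u l m else 0)
        = if l ≤ t then u l (t - l) else 0 := by
    intro l _
    by_cases hl : l ≤ t
    · rw [if_pos hl]
      rw [Finset.sum_congr rfl (fun m _ => if_congr (show l+m=t ↔ m = t-l by omega) rfl rfl)]
      rw [Finset.sum_ite_eq' (range (n+1)) (t-l) (fun m => u l m)]
      rw [if_pos (mem_range.mpr (by omega))]
    · rw [if_neg hl]
      apply Finset.sum_eq_zero
      intro m _
      rw [if_neg (by omega)]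
  rw [Finset.sum_congr rfl h1]
  rw [← Finset.sum_subset (Finset.range_subset_range.mpr (by omega) : range (t+1) ⊆ range (n+1))
    (fun x _ hx => by rw [if_neg (by simp at hx ⊢; omega)])]
  exact Finset.sum_congr rfl fun l hl => if_pos (by simp at hl; omega)


lemma multin (j k l m : ℕ) :
    (j+k+l+m).factorial / (j.factorial * k.factorial * l.factorial * m.factorial)
      = ((j+k+l+m).choose (j+k)) * ((j+k).choose j) * ((l+m).choose l) := by
  have h1 : (j+k).choose j * (j.factorial * k.factorial) = (j+k).factorial := by
    have := Nat.choose_mul_factorial_mul_factorial (Nat.le_add_right j k)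
    simpa [Nat.add_sub_cancel_left, mul_assoc] using this
  have h2 : (l+m).choose l * (l.factorial * m.factorial) = (l+m).factorial := by
    have := Nat.choose_mul_factorial_mul_factorial (Nat.le_add_right l m)
    simpa [Nat.add_sub_cancel_left, mul_assoc] using this
  have h3 : (j+k+l+m).choose (j+k) * ((j+k).factorial * (l+m).factorial)
      = (j+k+l+m).factorial := by
    have h := Nat.choose_mul_factorial_mul_factorial
      (show j+k ≤ j+k+(l+m) from Nat.le_add_right _ _)
    rw [Nat.add_sub_cancel_left] at h
    calc (j+k+l+m).choose (j+k) * ((j+k).factorial * (l+m).factorial)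
        = (j+k+(l+m)).choose (j+k) * (j+k).factorial * (l+m).factorial := by
          rw [← add_assoc]; ring
      _ = (j+k+(l+m)).factorial := h
      _ = (j+k+l+m).factorial := by rw [← add_assoc]
  refine Nat.div_eq_of_eq_mul_left (by positivity) ?_
  calc (j+k+l+m).factorial
      = (j+k+l+m).choose (j+k) * ((j+k).factorial * (l+m).factorial) := h3.symm
    _ = (j+k+l+m).choose (j+k) * (((j+k).choose j * (j.factorial * k.factorial)) *
          ((l+m).choose l * (l.factorial * m.factorial))) := by rw [h1, h2]
    _ = (j+k+l+m).choose (j+k) * ((j+k).choose j) * ((l+m).choose l) *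
          (j.factorial * k.factorial * l.factorial * m.factorial) := by ring


lemma quad (n : ℕ) :
    (∑ j ∈ range (n+1), ∑ k ∈ range (n+1), ∑ l ∈ range (n+1), ∑ m ∈ range (n+1),
      if j+k+l+m = n then
        (n.factorial / (j.factorial * k.factorial * l.factorial * m.factorial))^2
      else 0)
    = ∑ s ∈ range (n+1), (n.choose s)^2 * ((2*s).choose s) * ((2*(n-s)).choose (n-s)) := by
  have stepA : ∀ j k l m : ℕ,
      (if j+k+l+m = n then
        (n.factorial / (j.factorial * k.factorial * l.factorial * m.factorial))^2 else 0)
      = (if j+k+l+m = n then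
          ((n.choose (j+k)) * ((j+k).choose j) * ((l+m).choose l))^2 else 0) := by
    intro j k l m
    split_ifs with h
    · rw [← h, multin]
    · rfl
  calc
    (∑ j ∈ range (n+1), ∑ k ∈ range (n+1), ∑ l ∈ range (n+1), ∑ m ∈ range (n+1),
      if j+k+l+m = n then
        (n.factorial / (j.factorial * k.factorial * l.factorial * m.factorial))^2 else 0)
      = ∑ j ∈ range (n+1), ∑ k ∈ range (n+1), ∑ l ∈ range (n+1), ∑ m ∈ range (n+1),
        (if j+k+l+m = n then
          ((n.choose (j+k)) * ((j+k).choose j) * ((l+m).choose l))^2 else 0) := by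
        refine Finset.sum_congr rfl fun j _ => Finset.sum_congr rfl fun k _ =>
          Finset.sum_congr rfl fun l _ => Finset.sum_congr rfl fun m _ => stepA j k l m
    _ = ∑ j ∈ range (n+1), ∑ k ∈ range (n+1),
        (if j+k ≤ n then ((n.choose (j+k)) * ((j+k).choose j))^2
            * ((2*(n-(j+k))).choose (n-(j+k))) else 0) := by
        refine Finset.sum_congr rfl fun j _ => Finset.sum_congr rfl fun k _ => ?_
        by_cases hjk : j + k ≤ n
        · rw [if_pos hjk]
          have hcond : ∀ l m : ℕ, (j+k+l+m = n) ↔ (l + m = n - (j+k)) := by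
            intro l m; omega
          rw [Finset.sum_congr rfl (fun l _ => Finset.sum_congr rfl fun m _ =>
            if_congr (hcond l m) rfl rfl)]
          rw [sum_sum_ite n (n-(j+k)) (by omega)
            (fun l m => ((n.choose (j+k)) * ((j+k).choose j) * ((l+m).choose l))^2)]
          have : ∀ l ∈ range (n-(j+k)+1),
              ((n.choose (j+k)) * ((j+k).choose j) * ((l+(n-(j+k)-l)).choose l))^2
              = ((n.choose (j+k)) * ((j+k).choose j))^2 * ((n-(j+k)).choose l)^2 := by
            intro l hl
            rw [show l+(n-(j+k)-l) = n-(j+k) from by simp at hl; omega, mul_pow]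
          rw [Finset.sum_congr rfl this, ← Finset.mul_sum, sum_choose_sq]
        · rw [if_neg hjk]
          apply Finset.sum_eq_zero; intro l _
          apply Finset.sum_eq_zero; intro m _
          rw [if_neg (by omega)]
    _ = ∑ j ∈ range (n+1), ∑ k ∈ range (n+1), ∑ s ∈ range (n+1),
        (if j+k = s then ((n.choose s) * (s.choose j))^2
            * ((2*(n-s)).choose (n-s)) else 0) := by
        refine Finset.sum_congr rfl fun j _ => Finset.sum_congr rfl fun k _ => ?_
        rw [Finset.sum_ite_eq (range (n+1)) (j+k)
          (fun s => ((n.choose s) * (s.choose j))^2 * ((2*(n-s)).choose (n-s)))]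
        exact if_congr (by simp [Nat.lt_succ_iff]) rfl rfl
    _ = ∑ s ∈ range (n+1), ∑ j ∈ range (n+1), ∑ k ∈ range (n+1),
        (if j+k = s then ((n.choose s) * (s.choose j))^2
            * ((2*(n-s)).choose (n-s)) else 0) := by
        rw [Finset.sum_congr rfl (fun j (_ : j ∈ range (n+1)) => Finset.sum_comm), Finset.sum_comm]
    _ = ∑ s ∈ range (n+1), (n.choose s)^2 * ((2*s).choose s) * ((2*(n-s)).choose (n-s)) := by
        refine Finset.sum_congr rfl fun s hs => ?_
        have hsn : s ≤ n := by simp at hs; omega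
        rw [sum_sum_ite n s hsn
          (fun j k => ((n.choose s) * (s.choose j))^2 * ((2*(n-s)).choose (n-s)))]
        have : ∀ j ∈ range (s+1),
            ((n.choose s) * (s.choose j))^2 * ((2*(n-s)).choose (n-s))
            = ((n.choose s)^2 * ((2*(n-s)).choose (n-s))) * (s.choose j)^2 := by
          intro j _; ring
        rw [Finset.sum_congr rfl this, ← Finset.mul_sum, sum_choose_sq]
        ring


noncomputable def fq (n k : ℕ) : ℚ :=
  ((n.choose k)^2 * ((2*k).choose k) * ((2*(n-k)).choose (n-k)) : ℕ)

lemma cc (a b : ℕ) : (((a+b).choose a : ℕ) : ℚ)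
    = ((a+b).factorial : ℚ) / ((a.factorial : ℚ) * (b.factorial : ℚ)) := by
  rw [Nat.cast_choose ℚ (Nat.le_add_right a b), Nat.add_sub_cancel_left]

lemma nzfact (m : ℕ) : ((m.factorial : ℚ)) ≠ 0 :=
  Nat.cast_ne_zero.mpr m.factorial_ne_zero

lemma fact_step (a : ℕ) : ((a+1).factorial : ℚ) = ((a:ℚ)+1) * (a.factorial : ℚ) := by
  rw [Nat.factorial_succ]; push_cast; ring

lemma fq_eq (a b : ℕ) : fq (a+b) a
    = (((a+b).factorial : ℚ) / ((a.factorial : ℚ) * (b.factorial : ℚ)))^2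
      * (((a+a).factorial : ℚ) / ((a.factorial : ℚ) * (a.factorial : ℚ)))
      * (((b+b).factorial : ℚ) / ((b.factorial : ℚ) * (b.factorial : ℚ))) := by
  unfold fq
  rw [Nat.add_sub_cancel_left, show 2*a = a+a from by omega, show 2*b = b+b from by omega]
  push_cast
  rw [cc a b, cc a a, cc b b]

lemma R2 (k j : ℕ) :
    2*((k:ℚ)+(j:ℚ)+2)^2*(2*(j:ℚ)+3) * fq (k+j+1) k = ((j:ℚ)+2)^3 * fq (k+j+2) k := by
  have E1 : fq (k+j+1) k = fq (k+(j+1)) k := by rw [show k+j+1 = k+(j+1) from by omega]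
  have E2 : fq (k+j+2) k = fq (k+(j+2)) k := by rw [show k+j+2 = k+(j+2) from by omega]
  rw [E1, E2, fq_eq k (j+1), fq_eq k (j+2)]
  have h1 : ((k+(j+2)).factorial : ℚ) = ((k:ℚ)+(j:ℚ)+2) * ((k+(j+1)).factorial : ℚ) := by
    rw [show k+(j+2) = (k+(j+1))+1 from by omega, fact_step]; push_cast; ring
  have h2 : ((j+2).factorial : ℚ) = ((j:ℚ)+2) * ((j+1).factorial : ℚ) := by
    rw [show j+2 = (j+1)+1 from by omega, fact_step]; push_cast; ring
  have h3 : (((j+2)+(j+2)).factorial : ℚ)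
      = (2*(j:ℚ)+4)*(2*(j:ℚ)+3) * (((j+1)+(j+1)).factorial : ℚ) := by
    rw [show (j+2)+(j+2) = ((j+1)+(j+1)+1)+1 from by omega, fact_step, fact_step]
    push_cast; ring
  rw [h1, h2, h3]
  field_simp
  ring

lemma R2' (k j : ℕ) :
    2*((k:ℚ)+(j:ℚ)+1)^2*(2*(j:ℚ)+1) * fq (k+j) k = ((j:ℚ)+1)^3 * fq (k+j+1) k := by
  have E2 : fq (k+j+1) k = fq (k+(j+1)) k := by rw [show k+j+1 = k+(j+1) from by omega]
  rw [E2, fq_eq k j, fq_eq k (j+1)]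
  have h1 : ((k+(j+1)).factorial : ℚ) = ((k:ℚ)+(j:ℚ)+1) * ((k+j).factorial : ℚ) := by
    rw [show k+(j+1) = (k+j)+1 from by omega, fact_step]; push_cast; ring
  have h2 : ((j+1).factorial : ℚ) = ((j:ℚ)+1) * (j.factorial : ℚ) := by
    rw [fact_step]
  have h3 : (((j+1)+(j+1)).factorial : ℚ)
      = (2*(j:ℚ)+2)*(2*(j:ℚ)+1) * ((j+j).factorial : ℚ) := by
    rw [show (j+1)+(j+1) = ((j+j)+1)+1 from by omega, fact_step, fact_step]
    push_cast; ring
  rw [h1, h2, h3]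
  field_simp

lemma R1 (k j : ℕ) :
    ((k:ℚ)+1)^3*(2*(j:ℚ)+3) * fq (k+j+2) (k+1)
      = ((j:ℚ)+2)^3*(2*(k:ℚ)+1) * fq (k+j+2) k := by
  have E1 : fq (k+j+2) (k+1) = fq ((k+1)+(j+1)) (k+1) := by
    rw [show k+j+2 = (k+1)+(j+1) from by omega]
  have E2 : fq (k+j+2) k = fq (k+(j+2)) k := by rw [show k+j+2 = k+(j+2) from by omega]
  rw [E1, E2, fq_eq (k+1) (j+1), fq_eq k (j+2)]
  have h0 : (((k+1)+(j+1)).factorial : ℚ) = ((k+(j+2)).factorial : ℚ) := by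
    rw [show (k+1)+(j+1) = k+(j+2) from by omega]
  have h1 : ((k+1).factorial : ℚ) = ((k:ℚ)+1) * (k.factorial : ℚ) := fact_step k
  have h2 : ((j+2).factorial : ℚ) = ((j:ℚ)+2) * ((j+1).factorial : ℚ) := by
    rw [show j+2 = (j+1)+1 from by omega, fact_step]; push_cast; ring
  have h3 : (((k+1)+(k+1)).factorial : ℚ)
      = (2*(k:ℚ)+2)*(2*(k:ℚ)+1) * ((k+k).factorial : ℚ) := by
    rw [show (k+1)+(k+1) = ((k+k)+1)+1 from by omega, fact_step, fact_step]
    push_cast; ring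
  have h4 : (((j+2)+(j+2)).factorial : ℚ)
      = (2*(j:ℚ)+4)*(2*(j:ℚ)+3) * (((j+1)+(j+1)).factorial : ℚ) := by
    rw [show (j+2)+(j+2) = ((j+1)+(j+1)+1)+1 from by omega, fact_step, fact_step]
    push_cast; ring
  rw [h0, h1, h2, h3, h4]
  field_simp
  ring



def Pq (n k : ℚ) : ℚ :=
  -48*n^5+136*n^4-128*n^3+40*n^2 + k*(104*n^4-268*n^3+224*n^2-60*n)
    + k^2*(-72*n^3+168*n^2-120*n+24) + k^3*(16*n^2-32*n+16)

noncomputable def gq (n k : ℕ) : ℚ :=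
  (k:ℚ)^3 * Pq (n:ℚ) (k:ℚ) * fq n k
    / (4*(n:ℚ)^2*((n:ℚ)-1)^2*(2*(n:ℚ)-2*(k:ℚ)-1))

lemma fq_zero {a b : ℕ} (h : a < b) : fq a b = 0 := by
  unfold fq; rw [Nat.choose_eq_zero_of_lt h]; simp

lemma gq_zero (n : ℕ) : gq n 0 = 0 := by simp [gq]

lemma gq_top (m : ℕ) : gq (m+2) (m+3) = 0 := by
  unfold gq; rw [fq_zero (by omega)]; simp

lemma cb_cast (m : ℕ) : ((m:ℚ)+2) * (((2*(m+2)).choose (m+2) : ℕ) : ℚ)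
    = 2*(2*(m:ℚ)+3) * (((2*(m+1)).choose (m+1) : ℕ) : ℚ) := by
  have h := Nat.succ_mul_centralBinom_succ (m+1)
  rw [Nat.centralBinom, Nat.centralBinom] at h
  have : ((m+1+1) * (2*(m+1+1)).choose (m+1+1) : ℕ) = ((2 * (2*(m+1)+1) * (2*(m+1)).choose (m+1) : ℕ)) := h
  have hq := congrArg (fun x : ℕ => (x : ℚ)) this
  push_cast at hq
  push_cast
  linear_combination hq

lemma fq_self (a : ℕ) : fq a a = (((2*a).choose a : ℕ) : ℚ) := by
  unfold fq; simp

lemma key_top (m : ℕ) :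
    ((m:ℚ)+2)^3 * fq (m+2) (m+2) = gq (m+2) (m+3) - gq (m+2) (m+2) := by
  rw [gq_top]
  have G2 : gq (m+2) (m+2)
      = -(((m:ℚ)+2)^3 * Pq ((m:ℚ)+2) ((m:ℚ)+2) * fq (m+2) (m+2)
          / (4*((m:ℚ)+2)^2*((m:ℚ)+1)^2)) := by
    unfold gq
    rw [show (2*(((m+2):ℕ):ℚ) - 2*(((m+2):ℕ):ℚ) - 1) = -1 from by push_cast; ring,
      mul_neg_one, div_neg]
    push_cast; ring
  rw [G2]
  unfold Pq
  have h1 : ((m:ℚ)+2) ≠ 0 := by positivity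
  have h2 : ((m:ℚ)+1) ≠ 0 := by positivity
  field_simp
  ring

lemma key_top2 (m : ℕ) :
    ((m:ℚ)+2)^3 * fq (m+2) (m+1)
      - 2*(2*((m:ℚ)+2)-1)*(5*((m:ℚ)+2)^2-5*((m:ℚ)+2)+2) * fq (m+1) (m+1)
    = gq (m+2) (m+2) - gq (m+2) (m+1) := by
  have T2 : fq (m+2) (m+1) = 2*((m:ℚ)+2)^2 * (((2*(m+1)).choose (m+1) : ℕ) : ℚ) := by
    unfold fq
    rw [Nat.choose_succ_self_right, show (m+2)-(m+1) = 1 from by omega]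
    norm_num
    push_cast
    ring
  have G2 : gq (m+2) (m+2)
      = -(((m:ℚ)+2)^3 * Pq ((m:ℚ)+2) ((m:ℚ)+2) * fq (m+2) (m+2)
          / (4*((m:ℚ)+2)^2*((m:ℚ)+1)^2)) := by
    unfold gq
    rw [show (2*(((m+2):ℕ):ℚ) - 2*(((m+2):ℕ):ℚ) - 1) = -1 from by push_cast; ring,
      mul_neg_one, div_neg]
    push_cast; ring
  have G1 : gq (m+2) (m+1)
      = ((m:ℚ)+1)^3 * Pq ((m:ℚ)+2) ((m:ℚ)+1) * fq (m+2) (m+1)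
          / (4*((m:ℚ)+2)^2*((m:ℚ)+1)^2) := by
    unfold gq; push_cast; ring
  have h1 : ((m:ℚ)+2) ≠ 0 := by positivity
  have h2 : ((m:ℚ)+1) ≠ 0 := by positivity
  have hcb : fq (m+2) (m+2)
      = 2*(2*(m:ℚ)+3) * (((2*(m+1)).choose (m+1) : ℕ) : ℚ) / ((m:ℚ)+2) := by
    rw [fq_self, eq_div_iff h1]
    linear_combination cb_cast m
  rw [G1, G2, hcb, T2, fq_self]
  unfold Pq
  field_simp
  ring





lemma key (k j : ℕ) :
    ((k:ℚ)+(j:ℚ)+2)^3 * fq (k+j+2) k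
      - 2*(2*((k:ℚ)+(j:ℚ)+2)-1)*(5*((k:ℚ)+(j:ℚ)+2)^2-5*((k:ℚ)+(j:ℚ)+2)+2) * fq (k+j+1) k
      + 64*((k:ℚ)+(j:ℚ)+1)^3 * fq (k+j) k
    = gq (k+j+2) (k+1) - gq (k+j+2) k := by
  have K0 : (0:ℚ) ≤ (k:ℚ) := Nat.cast_nonneg k
  have J0 : (0:ℚ) ≤ (j:ℚ) := Nat.cast_nonneg j
  have G1 : gq (k+j+2) (k+1)
      = ((k:ℚ)+1)^3 * Pq ((k:ℚ)+(j:ℚ)+2) ((k:ℚ)+1) * fq (k+j+2) (k+1)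
        / (4*((k:ℚ)+(j:ℚ)+2)^2*((k:ℚ)+(j:ℚ)+1)^2*(2*(j:ℚ)+1)) := by
    unfold gq Pq; push_cast; ring
  have G2 : gq (k+j+2) k
      = (k:ℚ)^3 * Pq ((k:ℚ)+(j:ℚ)+2) (k:ℚ) * fq (k+j+2) k
        / (4*((k:ℚ)+(j:ℚ)+2)^2*((k:ℚ)+(j:ℚ)+1)^2*(2*(j:ℚ)+3)) := by
    unfold gq Pq; push_cast; ring
  have h1 : fq (k+j+2) (k+1)
      = ((j:ℚ)+2)^3*(2*(k:ℚ)+1) * fq (k+j+2) k / (((k:ℚ)+1)^3*(2*(j:ℚ)+3)) := by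
    rw [eq_div_iff (by positivity)]; linear_combination R1 k j
  have h2 : fq (k+j+1) k
      = ((j:ℚ)+2)^3 * fq (k+j+2) k / (2*((k:ℚ)+(j:ℚ)+2)^2*(2*(j:ℚ)+3)) := by
    rw [eq_div_iff (by positivity)]; linear_combination R2 k j
  have h3 : fq (k+j) k
      = ((j:ℚ)+1)^3 * fq (k+j+1) k / (2*((k:ℚ)+(j:ℚ)+1)^2*(2*(j:ℚ)+1)) := by
    rw [eq_div_iff (by positivity)]; linear_combination R2' k j
  rw [G1, G2, h1, h3, h2]
  unfold Pq
  field_simp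
  ring





noncomputable def Sq (n : ℕ) : ℚ := ∑ k ∈ range (n+1), fq n k

lemma Sq_rec (m : ℕ) :
    ((m:ℚ)+2)^3 * Sq (m+2)
      = 2*(2*((m:ℚ)+2)-1)*(5*((m:ℚ)+2)^2-5*((m:ℚ)+2)+2) * Sq (m+1)
        - 64*((m:ℚ)+1)^3 * Sq m := by
  have ptw : ∀ k ∈ range (m+3),
      ((m:ℚ)+2)^3 * fq (m+2) k
        - 2*(2*((m:ℚ)+2)-1)*(5*((m:ℚ)+2)^2-5*((m:ℚ)+2)+2) * fq (m+1) k
        + 64*((m:ℚ)+1)^3 * fq m k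
      = gq (m+2) (k+1) - gq (m+2) k := by
    intro k hk
    rcases lt_trichotomy k (m+1) with h | h | h
    · have hk' : k ≤ m := by omega
      have hsub : k + (m-k) = m := by omega
      have h := key k (m-k)
      rw [hsub] at h
      have hc : ((m-k : ℕ) : ℚ) = (m:ℚ) - (k:ℚ) := by
        push_cast [Nat.cast_sub hk']; ring
      rw [hc] at h
      linear_combination h
    · subst h
      have z : fq m (m+1) = 0 := fq_zero (by omega)
      rw [z]
      linear_combination key_top2 m
    · have hk2 : k = m+2 := by simp at hk; omega
      subst hk2
      have z1 : fq (m+1) (m+2) = 0 := fq_zero (by omega)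
      have z2 : fq m (m+2) = 0 := fq_zero (by omega)
      rw [z1, z2]
      linear_combination key_top m
  have tel : ∑ k ∈ range (m+3), (gq (m+2) (k+1) - gq (m+2) k)
      = gq (m+2) (m+3) - gq (m+2) 0 := Finset.sum_range_sub (fun k => gq (m+2) k) (m+3)
  have hzero : ∑ k ∈ range (m+3),
      (((m:ℚ)+2)^3 * fq (m+2) k
        - 2*(2*((m:ℚ)+2)-1)*(5*((m:ℚ)+2)^2-5*((m:ℚ)+2)+2) * fq (m+1) k
        + 64*((m:ℚ)+1)^3 * fq m k) = 0 := by
    rw [Finset.sum_congr rfl ptw, tel, gq_top, gq_zero]; ring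
  have expand : ∑ k ∈ range (m+3),
      (((m:ℚ)+2)^3 * fq (m+2) k
        - 2*(2*((m:ℚ)+2)-1)*(5*((m:ℚ)+2)^2-5*((m:ℚ)+2)+2) * fq (m+1) k
        + 64*((m:ℚ)+1)^3 * fq m k)
      = ((m:ℚ)+2)^3 * (∑ k ∈ range (m+3), fq (m+2) k)
        - 2*(2*((m:ℚ)+2)-1)*(5*((m:ℚ)+2)^2-5*((m:ℚ)+2)+2) * (∑ k ∈ range (m+3), fq (m+1) k)
        + 64*((m:ℚ)+1)^3 * (∑ k ∈ range (m+3), fq m k) := by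
    rw [Finset.mul_sum, Finset.mul_sum, Finset.mul_sum, ← Finset.sum_sub_distrib,
      ← Finset.sum_add_distrib]
  have s1 : ∑ k ∈ range (m+3), fq (m+2) k = Sq (m+2) := rfl
  have s2 : ∑ k ∈ range (m+3), fq (m+1) k = Sq (m+1) := by
    rw [Finset.sum_range_succ, fq_zero (by omega), add_zero]; rfl
  have s3 : ∑ k ∈ range (m+3), fq m k = Sq m := by
    rw [Finset.sum_range_succ, fq_zero (by omega), add_zero,
      Finset.sum_range_succ, fq_zero (by omega), add_zero]; rfl
  rw [expand, s1, s2, s3] at hzero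
  linarith

def Sn (n : ℕ) : ℕ :=
  ∑ k ∈ range (n+1), (n.choose k)^2 * ((2*k).choose k) * ((2*(n-k)).choose (n-k))



lemma Sq_cast (n : ℕ) : Sq n = ((Sn n : ℕ) : ℚ) := by
  unfold Sq Sn fq; push_cast; rfl

lemma cb_cast0 (m : ℕ) : ((m:ℚ)+1) * (((2*(m+1)).choose (m+1) : ℕ) : ℚ)
    = 2*(2*(m:ℚ)+1) * (((2*m).choose m : ℕ) : ℚ) := by
  have h := Nat.succ_mul_centralBinom_succ m
  rw [Nat.centralBinom, Nat.centralBinom] at h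
  have hq := congrArg (fun x : ℕ => (x : ℚ)) h
  push_cast at hq
  push_cast
  linear_combination hq

lemma A_eq (A : ℤ → ℤ)
    (hA : ∀ n : ℕ, A (n : ℤ) =
      (Nat.choose (2 * n) n : ℤ) *
        ∑ j ∈ Finset.range (n + 1), ∑ k ∈ Finset.range (n + 1),
          ∑ l ∈ Finset.range (n + 1), ∑ m ∈ Finset.range (n + 1),
            if j + k + l + m = n then
              ((Nat.factorial n /
                (Nat.factorial j * Nat.factorial k * Nat.factorial l * Nat.factorial m) : ℕ) : ℤ) ^ 2
            else 0) (n : ℕ) :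
    A (n : ℤ) = (((2*n).choose n * Sn n : ℕ) : ℤ) := by
  rw [hA n]
  have h : (∑ j ∈ Finset.range (n + 1), ∑ k ∈ Finset.range (n + 1),
      ∑ l ∈ Finset.range (n + 1), ∑ m ∈ Finset.range (n + 1),
        if j + k + l + m = n then
          ((Nat.factorial n /
            (Nat.factorial j * Nat.factorial k * Nat.factorial l * Nat.factorial m) : ℕ) : ℤ) ^ 2
        else 0)
      = ((Sn n : ℕ) : ℤ) := by
    rw [Sn, ← quad n]
    push_cast [apply_ite (fun x : ℕ => (x : ℤ))]
    rfl
  rw [h]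
  push_cast
  ring



/-- Case #16: A_n = C(2n,n) * ∑_{j+k+l+m=n} (n!/(j!k!l!m!))^2 satisfies the recurrence of
θ^4 − 4z(2θ+1)^2(5θ^2+5θ+2) + 2^8 z^2(θ+1)^2(2θ+1)(2θ+3). -/
theorem stmt_2
    (A : ℤ → ℤ)
    (hneg : ∀ m : ℤ, m < 0 → A m = 0)
    (hA : ∀ n : ℕ, A (n : ℤ) =
      (Nat.choose (2 * n) n : ℤ) *
        ∑ j ∈ Finset.range (n + 1), ∑ k ∈ Finset.range (n + 1),
          ∑ l ∈ Finset.range (n + 1), ∑ m ∈ Finset.range (n + 1),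
            if j + k + l + m = n then
              ((Nat.factorial n /
                (Nat.factorial j * Nat.factorial k * Nat.factorial l * Nat.factorial m) : ℕ) : ℤ) ^ 2
            else 0) :
    ∀ n : ℤ, 1 ≤ n →
      n ^ 4 * A n =
        4 * (2 * n - 1) ^ 2 * (5 * n ^ 2 - 5 * n + 2) * A (n - 1) -
          256 * (n - 1) ^ 2 * (2 * n - 1) * (2 * n - 3) * A (n - 2) := by
  intro n hn
  obtain ⟨N, rfl⟩ : ∃ N : ℕ, n = (N:ℤ) := ⟨n.toNat, (Int.toNat_of_nonneg (by omega)).symm⟩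
  have hN1 : 1 ≤ N := by exact_mod_cast hn
  rcases Nat.lt_or_ge N 2 with h2 | h2
  · have hN : N = 1 := by omega
    subst hN
    have e1 : A ((1:ℕ):ℤ) = (((2*1).choose 1 * Sn 1 : ℕ) : ℤ) := A_eq A hA 1
    have e0 : A ((0:ℕ):ℤ) = (((2*0).choose 0 * Sn 0 : ℕ) : ℤ) := A_eq A hA 0
    have v1 : ((2*1).choose 1 * Sn 1 : ℕ) = 8 := by
      simp [Sn, Finset.sum_range_succ]
    have v0 : ((2*0).choose 0 * Sn 0 : ℕ) = 1 := by
      simp [Sn, Finset.sum_range_succ]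
    rw [v1] at e1; rw [v0] at e0
    push_cast at e1 e0
    norm_num [e1, e0]
  · obtain ⟨m, rfl⟩ : ∃ m, N = m+2 := ⟨N-2, by omega⟩
    have e0 := A_eq A hA m
    have e1 := A_eq A hA (m+1)
    have e2 := A_eq A hA (m+2)
    have hq : ((m:ℚ)+2)^4 * (((2*(m+2)).choose (m+2) * Sn (m+2) : ℕ) : ℚ)
        = 4*(2*((m:ℚ)+2)-1)^2*(5*((m:ℚ)+2)^2-5*((m:ℚ)+2)+2)
            * (((2*(m+1)).choose (m+1) * Sn (m+1) : ℕ) : ℚ)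
          - 256*((m:ℚ)+1)^2*(2*((m:ℚ)+2)-1)*(2*((m:ℚ)+2)-3)
            * (((2*m).choose m * Sn m : ℕ) : ℚ) := by
      have hrec := Sq_rec m
      rw [Sq_cast, Sq_cast, Sq_cast] at hrec
      have hcb1 := cb_cast0 (m+1)
      have hcb0 := cb_cast0 m
      push_cast at hcb1 hcb0 hrec ⊢
      linear_combination
        (((m:ℚ)+2)^3 * ((Sn (m+2) : ℕ) : ℚ)) * hcb1
        + (2*(2*(m:ℚ)+3) * (((2*(m+1)).choose (m+1) : ℕ) : ℚ)) * hrec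
        - (128*(2*(m:ℚ)+3)*((m:ℚ)+1)^2 * ((Sn m : ℕ) : ℚ)) * hcb0
    have g1 : ((m+2:ℕ):ℤ) - 1 = ((m+1:ℕ):ℤ) := by push_cast; ring
    have g2 : ((m+2:ℕ):ℤ) - 2 = ((m:ℕ):ℤ) := by push_cast; ring
    rw [g1, g2, e0, e1, e2]
    exact_mod_cast hq
end

section
/- Let A_n = ((3n)!/(n!)^3) * (sum over k = 0..n of C(n,k)^2 · C(n+k,k)). Then, with the convention A_m = 0 for m < 0, for every integer n ≥ 1 one has n^4·A_n = 3(3n−1)(3n−2)(11n^2−11n+3)·A_{n−1} + 9(3n−1)(3n−2)(3n−4)(3n−5)·A_{n−2}. (Equivalently, Σ A_n z^n is the analytic solution of θ^4 − 3z(3θ+2)(3θ+1)(11θ^2+11θ+3) − 9z^2(3θ+5)(3θ+2)(3θ+4)(3θ+1), case #24 of the table.) -/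
private def bb (n : ℕ) : ℤ :=
  ∑ k ∈ Finset.range (n + 1), ((n.choose k : ℤ)) ^ 2 * (Nat.choose (n + k) k : ℤ)

private def cc_s6 (n : ℕ) : ℤ := ((Nat.factorial (3 * n) / (Nat.factorial n) ^ 3 : ℕ) : ℤ)

private def gg (m : ℕ) : ℕ → ℤ
  | 0 => 0
  | (k+1) => (((m+1).choose k : ℤ))^2 * (((m+1+k).choose k : ℤ)) *
      ((k:ℤ)^2 + (6*(m:ℤ)+9)*(k:ℤ) - 11*(m:ℤ)^2 - 31*(m:ℤ) - 22)

private lemma chq1 (n k : ℕ) :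
    ((n.choose (k+1) : ℚ)) * ((k:ℚ)+1) = (n.choose k : ℚ) * ((n:ℚ) - k) := by
  rcases le_or_gt k n with h | h
  · have h1 := Nat.choose_succ_right_eq n k
    have h3 : ((n.choose (k+1) : ℚ)) * ((k:ℚ)+1) = (n.choose k : ℚ) * ((n - k : ℕ) : ℚ) := by
      exact_mod_cast congrArg (Nat.cast (R := ℚ)) h1
    rwa [Nat.cast_sub h] at h3
  · rw [Nat.choose_eq_zero_of_lt h, Nat.choose_eq_zero_of_lt (Nat.lt_succ_of_lt h)]
    simp

private lemma chq2 (n k : ℕ) :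
    (((n+1).choose k : ℚ)) * ((n:ℚ) + 1 - k) = (n.choose k : ℚ) * ((n:ℚ)+1) := by
  rcases le_or_gt k (n+1) with h | h
  · have h1 := Nat.choose_mul_succ_eq n k
    have h3 : (n.choose k : ℚ) * ((n:ℚ)+1) = ((n+1).choose k : ℚ) * (((n+1) - k : ℕ) : ℚ) := by
      exact_mod_cast congrArg (Nat.cast (R := ℚ)) h1
    rw [Nat.cast_sub h] at h3
    push_cast at h3 ⊢
    linarith
  · rw [Nat.choose_eq_zero_of_lt h, Nat.choose_eq_zero_of_lt (by omega : n < k)]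
    simp

private lemma chq3 (n k : ℕ) :
    ((n:ℚ)+1) * (n.choose k : ℚ) = (((n+1).choose (k+1) : ℚ)) * ((k:ℚ)+1) := by
  exact_mod_cast congrArg (Nat.cast (R := ℚ)) (Nat.add_one_mul_choose_eq n k)

private lemma key_s6 (m k : ℕ) :
    ((m:ℤ)+2)^2 * ((((m+2).choose k : ℤ))^2 * (((m+2+k).choose k : ℤ)))
      - (11*(m:ℤ)^2+33*(m:ℤ)+25) * ((((m+1).choose k : ℤ))^2 * (((m+1+k).choose k : ℤ)))
      - ((m:ℤ)+1)^2 * (((m.choose k : ℤ))^2 * (((m+k).choose k : ℤ)))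
    = gg m (k+1) - gg m k := by
  cases k with
  | zero => simp [gg]; ring
  | succ j =>
    simp only [gg]
    apply (Int.cast_injective (α := ℚ))
    push_cast
    -- atoms
    set x1 : ℚ := ((m+1).choose j : ℚ) with hx1
    set u0 : ℚ := (m.choose (j+1) : ℚ) with hu0
    set u1 : ℚ := ((m+1).choose (j+1) : ℚ) with hu1
    set u2 : ℚ := ((m+2).choose (j+1) : ℚ) with hu2
    set y1 : ℚ := ((m+1+j).choose j : ℚ) with hy1
    set v1 : ℚ := ((m+(j+1)).choose (j+1) : ℚ) with hv1
    set v2 : ℚ := ((m+1+(j+1)).choose (j+1) : ℚ) with hv2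
    set v3 : ℚ := ((m+2+(j+1)).choose (j+1) : ℚ) with hv3
    have ne1 : ((j:ℚ)+1)^3 * ((m:ℚ)+1)^2 * ((m:ℚ)+2) ≠ 0 := by positivity
    apply mul_left_cancel₀ ne1
    -- relations
    have a1 := chq1 m j
    have a2 := chq1 (m+1) j
    have a3 := chq1 (m+2) j
    have a4 := chq2 m j
    have a5 := chq2 (m+1) j
    have a6 := chq2 (m+j) j
    have a7 := chq2 (m+j+1) j
    have a8 := chq3 (m+j) j
    have a9 := chq3 (m+j+1) j
    have a10 := chq3 (m+j+2) j
    rw [show m+1+1 = m+2 by omega] at a5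
    rw [show m+j+1+1 = m+j+2 by omega] at a7 a9
    rw [show m+j+2+1 = m+j+3 by omega] at a10
    push_cast at a1 a2 a3 a4 a5 a6 a7 a8 a9 a10
    -- combined relations
    have H1 : u2^2*((j:ℚ)+1)^2 = x1^2*((m:ℚ)+2)^2 := by
      have e : (u2*((j:ℚ)+1))^2 = (x1*((m:ℚ)+2))^2 := by
        rw [hu2, hx1]
        have e1 : ((m+2).choose (j+1) : ℚ) * ((j:ℚ)+1)
            = ((m+2).choose j : ℚ) * ((m:ℚ)+2-j) := by
          have := a3; push_cast at this ⊢; linarith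
        have e2 : ((m+2).choose j : ℚ) * ((m:ℚ)+2-j)
            = ((m+1).choose j : ℚ) * ((m:ℚ)+2) := by
          have := a5; push_cast at this ⊢; linarith
        rw [e1, e2]
      linear_combination e
    have H2 : u1^2*((j:ℚ)+1)^2 = x1^2*((m:ℚ)+1-j)^2 := by
      have e : (u1*((j:ℚ)+1))^2 = (x1*((m:ℚ)+1-j))^2 := by
        rw [hu1, hx1]
        have e1 : ((m+1).choose (j+1) : ℚ) * ((j:ℚ)+1)
            = ((m+1).choose j : ℚ) * ((m:ℚ)+1-j) := by
          have := a2; push_cast at this ⊢; linarith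
        rw [e1]
      linear_combination e
    have H3 : u0^2*((j:ℚ)+1)^2*((m:ℚ)+1)^2 = x1^2*((m:ℚ)-j)^2*((m:ℚ)+1-j)^2 := by
      have e1 : (u0*((j:ℚ)+1))^2 = ((m.choose j : ℚ)*((m:ℚ)-j))^2 := by
        rw [hu0, a1]
      have e2 : (x1*((m:ℚ)+1-j))^2 = ((m.choose j : ℚ)*((m:ℚ)+1))^2 := by
        rw [hx1, a4]
      linear_combination ((m:ℚ)+1)^2 * e1 - ((m:ℚ)-(j:ℚ))^2 * e2
    have H4 : v1*((j:ℚ)+1) = y1*((m:ℚ)+1) := by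
      rw [hv1, hy1]
      have e1 : ((m+j+1).choose (j+1) : ℚ) * ((j:ℚ)+1)
          = ((m:ℚ)+j+1) * ((m+j).choose j : ℚ) := by
        have := a8; push_cast at this ⊢; linarith
      have e2 : ((m+j+1).choose j : ℚ) * ((m:ℚ)+1)
          = ((m+j).choose j : ℚ) * ((m:ℚ)+j+1) := by
        have := a6; push_cast at this ⊢; linarith
      have e3 : (m+(j+1)) = (m+j+1) := by omega
      have e4 : (m+1+j) = (m+j+1) := by omega
      rw [e3, e4]
      linarith [e1, e2]
    have H5 : v2*((j:ℚ)+1) = y1*((m:ℚ)+j+2) := by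
      rw [hv2, hy1]
      have e3 : (m+1+(j+1)) = (m+j+2) := by omega
      have e4 : (m+1+j) = (m+j+1) := by omega
      rw [e3, e4]
      have := a9; push_cast at this ⊢; linarith
    have H6 : v3*((j:ℚ)+1)*((m:ℚ)+2) = y1*((m:ℚ)+j+3)*((m:ℚ)+j+2) := by
      rw [hv3, hy1]
      have e3 : (m+2+(j+1)) = (m+j+3) := by omega
      have e4 : (m+1+j) = (m+j+1) := by omega
      rw [e3, e4]
      have e1 : ((m+j+3).choose (j+1) : ℚ) * ((j:ℚ)+1)
          = ((m:ℚ)+j+3) * ((m+j+2).choose j : ℚ) := by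
        have := a10; push_cast at this ⊢; linarith
      have e2 : ((m+j+2).choose j : ℚ) * ((m:ℚ)+2)
          = ((m+j+1).choose j : ℚ) * ((m:ℚ)+j+2) := by
        have := a7; push_cast at this ⊢; linarith
      calc ((m+j+3).choose (j+1) : ℚ) * ((j:ℚ)+1) * ((m:ℚ)+2)
          = (((m+j+3).choose (j+1) : ℚ) * ((j:ℚ)+1)) * ((m:ℚ)+2) := by ring
        _ = (((m:ℚ)+j+3) * ((m+j+2).choose j : ℚ)) * ((m:ℚ)+2) := by rw [e1]
        _ = ((m:ℚ)+j+3) * (((m+j+2).choose j : ℚ) * ((m:ℚ)+2)) := by ring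
        _ = ((m:ℚ)+j+3) * (((m+j+1).choose j : ℚ) * ((m:ℚ)+j+2)) := by rw [e2]
        _ = ((m+j+1).choose j : ℚ) * ((m:ℚ)+j+3) * ((m:ℚ)+j+2) := by ring
    linear_combination
      (((m:ℚ)+1)^2*((m:ℚ)+2)^3*((j:ℚ)+1)*v3) * H1
      + (((m:ℚ)+1)^2*((m:ℚ)+2)^4*x1^2) * H6
      + (-(((m:ℚ)+1)^2)*((m:ℚ)+2)*((11*(m:ℚ)^2+33*(m:ℚ)+25)
          + (((j:ℚ)+1)^2 + (6*(m:ℚ)+9)*((j:ℚ)+1) - 11*(m:ℚ)^2 - 31*(m:ℚ) - 22))*((j:ℚ)+1)*v2) * H2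
      + (-(((m:ℚ)+1)^2)*((m:ℚ)+2)*((11*(m:ℚ)^2+33*(m:ℚ)+25)
          + (((j:ℚ)+1)^2 + (6*(m:ℚ)+9)*((j:ℚ)+1) - 11*(m:ℚ)^2 - 31*(m:ℚ) - 22))*((m:ℚ)+1-j)^2*x1^2) * H5
      + (-(((m:ℚ)+1)^2)*((m:ℚ)+2)*((j:ℚ)+1)*v1) * H3
      + (-(((m:ℚ)+1)^2)*((m:ℚ)+2)*((m:ℚ)-j)^2*((m:ℚ)+1-j)^2*x1^2) * H4

private lemma brec (n : ℕ) :
    ((n:ℤ)+2)^2 * bb (n+2) = (11*(n:ℤ)^2+33*(n:ℤ)+25) * bb (n+1) + ((n:ℤ)+1)^2 * bb n := by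
  have hkey : ∀ k ∈ Finset.range (n+3),
      ((n:ℤ)+2)^2 * ((((n+2).choose k : ℤ))^2 * (((n+2+k).choose k : ℤ)))
      - (11*(n:ℤ)^2+33*(n:ℤ)+25) * ((((n+1).choose k : ℤ))^2 * (((n+1+k).choose k : ℤ)))
      - ((n:ℤ)+1)^2 * (((n.choose k : ℤ))^2 * (((n+k).choose k : ℤ)))
      = gg n (k+1) - gg n k := fun k _ => key_s6 n k
  have h2 := Finset.sum_congr rfl hkey
  rw [Finset.sum_range_sub (gg n)] at h2
  rw [Finset.sum_sub_distrib, Finset.sum_sub_distrib, ← Finset.mul_sum, ← Finset.mul_sum,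
    ← Finset.mul_sum] at h2
  have hg1 : gg n (n+3) = 0 := by
    have e : n+3 = (n+2)+1 := by omega
    rw [e]
    show (((n+1).choose (n+2) : ℤ))^2 * _ * _ = 0
    rw [Nat.choose_eq_zero_of_lt (by omega)]
    ring
  have hg0 : gg n 0 = 0 := rfl
  have e2 : (∑ k ∈ Finset.range (n+3), (((n+2).choose k : ℤ))^2 * (((n+2+k).choose k : ℤ)))
      = bb (n+2) := by
    rw [bb, show n+2+1 = n+3 by omega]
  have e1 : (∑ k ∈ Finset.range (n+3), (((n+1).choose k : ℤ))^2 * (((n+1+k).choose k : ℤ)))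
      = bb (n+1) := by
    rw [bb]
    refine (Finset.sum_subset (Finset.range_subset_range.2 (by omega)) ?_).symm
    intro x hx hnx
    simp only [Finset.mem_range] at hx hnx
    rw [Nat.choose_eq_zero_of_lt (by omega : n+1 < x)]
    push_cast; ring
  have e0 : (∑ k ∈ Finset.range (n+3), ((n.choose k : ℤ))^2 * (((n+k).choose k : ℤ)))
      = bb n := by
    rw [bb]
    refine (Finset.sum_subset (Finset.range_subset_range.2 (by omega)) ?_).symm
    intro x hx hnx
    simp only [Finset.mem_range] at hx hnx
    rw [Nat.choose_eq_zero_of_lt (by omega : n < x)]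
    push_cast; ring
  rw [e2, e1, e0, hg1, hg0] at h2
  linarith

private lemma cdvd (n : ℕ) : (n.factorial)^3 ∣ (3*n).factorial := by
  have h1 : n.factorial * n.factorial ∣ (n + n).factorial :=
    Nat.factorial_mul_factorial_dvd_factorial_add n n
  have h2 : (n+n).factorial * n.factorial ∣ ((n+n) + n).factorial :=
    Nat.factorial_mul_factorial_dvd_factorial_add (n+n) n
  have h3 : (n.factorial)^3 = (n.factorial * n.factorial) * n.factorial := by ring
  rw [h3, show 3*n = n+n+n by ring]
  exact dvd_trans (mul_dvd_mul_right h1 _) h2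

private lemma ccmul (n : ℕ) : cc_s6 n * ((n.factorial : ℤ))^3 = ((3*n).factorial : ℤ) := by
  rw [cc_s6]
  exact_mod_cast congrArg (Nat.cast (R := ℤ)) (Nat.div_mul_cancel (cdvd n))

private lemma crec (n : ℕ) :
    ((n:ℤ)+1)^2 * cc_s6 (n+1) = 3*(3*(n:ℤ)+2)*(3*(n:ℤ)+1) * cc_s6 n := by
  have h0 := ccmul n
  have h1 := ccmul (n+1)
  have f1 : (((n+1).factorial : ℤ)) = ((n:ℤ)+1) * ((n.factorial : ℤ)) := by
    rw [Nat.factorial_succ]; push_cast; ring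
  have f2 : (((3*(n+1)).factorial : ℤ))
      = (3*(n:ℤ)+3)*(3*(n:ℤ)+2)*(3*(n:ℤ)+1) * (((3*n).factorial : ℤ)) := by
    rw [show 3*(n+1) = ((3*n+1)+1)+1 by omega, Nat.factorial_succ, Nat.factorial_succ,
      Nat.factorial_succ]
    push_cast
    ring
  have hfne : ((n.factorial : ℤ)) ≠ 0 := by
    exact_mod_cast n.factorial_ne_zero
  have hne : ((n:ℤ)+1) * ((n.factorial : ℤ))^3 ≠ 0 :=
    mul_ne_zero (by positivity) (pow_ne_zero _ hfne)
  apply mul_right_cancel₀ hne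
  have h2 : cc_s6 (n+1) * (((n:ℤ)+1) * ((n.factorial : ℤ)))^3
      = (3*(n:ℤ)+3)*(3*(n:ℤ)+2)*(3*(n:ℤ)+1) * (cc_s6 n * ((n.factorial : ℤ))^3) := by
    rw [← f1, h1, f2, h0]
  linear_combination h2

/-- Case #24: A_n = ((3n)!/(n!)^3) * ∑_{k=0}^n C(n,k)^2 C(n+k,k) satisfies the recurrence of
θ^4 − 3z(3θ+2)(3θ+1)(11θ^2+11θ+3) − 9z^2(3θ+5)(3θ+2)(3θ+4)(3θ+1). -/
theorem stmt_6
    (A : ℤ → ℤ)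
    (hneg : ∀ m : ℤ, m < 0 → A m = 0)
    (hA : ∀ n : ℕ, A (n : ℤ) =
      ((Nat.factorial (3 * n) / (Nat.factorial n) ^ 3 : ℕ) : ℤ) *
        ∑ k ∈ Finset.range (n + 1),
          ((n.choose k : ℤ)) ^ 2 * (Nat.choose (n + k) k : ℤ)) :
    ∀ n : ℤ, 1 ≤ n →
      n ^ 4 * A n =
        3 * (3 * n - 1) * (3 * n - 2) * (11 * n ^ 2 - 11 * n + 3) * A (n - 1) +
          9 * (3 * n - 1) * (3 * n - 2) * (3 * n - 4) * (3 * n - 5) * A (n - 2) := by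
  have hA' : ∀ m : ℕ, A (m : ℤ) = cc_s6 m * bb m := fun m => hA m
  intro n hn
  rcases (by omega : n = 1 ∨ 2 ≤ n) with rfl | h2
  · have hcc1 : cc_s6 1 = 6 := by norm_num [cc_s6, Nat.factorial]
    have hbb1 : bb 1 = 3 := by norm_num [bb, Finset.sum_range_succ]
    have hcc0 : cc_s6 0 = 1 := by norm_num [cc_s6, Nat.factorial]
    have hbb0 : bb 0 = 1 := by norm_num [bb]
    have e1 : A 1 = 18 := by
      have := hA' 1
      push_cast at this
      rw [this, hcc1, hbb1]; norm_num
    have e0 : A 0 = 1 := by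
      have := hA' 0
      push_cast at this
      rw [this, hcc0, hbb0]; norm_num
    have em : A (-1) = 0 := hneg _ (by norm_num)
    rw [show (1:ℤ) - 1 = 0 by norm_num, show (1:ℤ) - 2 = -1 by norm_num, e1, e0, em]
    norm_num
  · lift n to ℕ using (by omega)
    obtain ⟨m, rfl⟩ : ∃ m, n = m + 2 := ⟨n - 2, by omega⟩
    have g1 : ((m+2 : ℕ) : ℤ) - 1 = ((m+1 : ℕ) : ℤ) := by push_cast; ring
    have g2 : ((m+2 : ℕ) : ℤ) - 2 = ((m : ℕ) : ℤ) := by push_cast; ring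
    rw [g1, g2, hA' (m+2), hA' (m+1), hA' m]
    have hc1 := crec (m+1)
    have hc0 := crec m
    have hb := brec m
    rw [show m+1+1 = m+2 by omega] at hc1
    push_cast at hc1 hc0 hb ⊢
    linear_combination
      (((m:ℤ)+2)^2*(bb (m+2))) * hc1
      + (3*(3*(m:ℤ)+5)*(3*(m:ℤ)+4)*(bb m)) * hc0
      + (3*(3*(m:ℤ)+5)*(3*(m:ℤ)+4)*(cc_s6 (m+1))) * hb
end

section
/- Let A_n = C(2n,n)^2 * (sum over k = 0..n of C(n,k)^2 · C(n+k,k)). Then, with the convention A_m = 0 for m < 0, for every integer n ≥ 1 one has n^4·A_n = 4(2n−1)^2(11n^2−11n+3)·A_{n−1} + 16(2n−1)^2(2n−3)^2·A_{n−2}. (Equivalently, Σ A_n z^n is the analytic solution of θ^4 − 4z(2θ+1)^2(11θ^2+11θ+3) − 16z^2(2θ+3)^2(2θ+1)^2, case #25 of the table.) -/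
private def G7 (n j : ℕ) : ℤ :=
  ((n : ℤ) + 1) * (j : ℤ) ^ 3 *
      ((j : ℤ) ^ 2 + (6 * (n : ℤ) + 7) * (j : ℤ) - (11 * (n : ℤ) + 15) * ((n : ℤ) + 2)) *
    (((n + 2).choose j : ℤ)) ^ 2 * (((n + j).choose j : ℤ))

private lemma lemA7 (m k : ℕ) :
    ((m : ℤ) + 1) * (m.choose k : ℤ) = ((m : ℤ) + 1 - (k : ℤ)) * ((m + 1).choose k : ℤ) := by
  rcases le_or_gt k (m + 1) with h | h
  · have h1 := Nat.choose_mul_succ_eq m k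
    have h3 : (m.choose k : ℤ) * ((m : ℤ) + 1)
        = ((m + 1).choose k : ℤ) * ((m + 1 - k : ℕ) : ℤ) := by exact_mod_cast h1
    have h2 : ((m + 1 - k : ℕ) : ℤ) = (m : ℤ) + 1 - (k : ℤ) := by omega
    rw [h2] at h3
    linear_combination h3
  · rw [Nat.choose_eq_zero_of_lt (by omega), Nat.choose_eq_zero_of_lt h]
    ring

private lemma lemB7 (m k : ℕ) :
    ((k : ℤ) + 1) * (m.choose (k + 1) : ℤ) = ((m : ℤ) - (k : ℤ)) * (m.choose k : ℤ) := by
  rcases le_or_gt k m with h | h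
  · have h1 := Nat.choose_succ_right_eq m k
    have h3 : (m.choose (k + 1) : ℤ) * ((k : ℤ) + 1)
        = (m.choose k : ℤ) * ((m - k : ℕ) : ℤ) := by exact_mod_cast h1
    have h2 : ((m - k : ℕ) : ℤ) = (m : ℤ) - (k : ℤ) := by omega
    rw [h2] at h3
    linear_combination h3
  · rw [Nat.choose_eq_zero_of_lt (by omega), Nat.choose_eq_zero_of_lt h]
    ring

private lemma lemC7 (m k : ℕ) :
    ((m : ℤ) + 1) * ((m + 1 + k).choose k : ℤ)
      = ((m : ℤ) + 1 + (k : ℤ)) * ((m + k).choose k : ℤ) := by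
  rw [show m + 1 + k = m + k + 1 by omega]
  have h1 : (m + k + 1).choose (k + 1) * (k + 1) = (m + k + 1).choose k * (m + 1) := by
    have := Nat.choose_succ_right_eq (m + k + 1) k
    rwa [show m + k + 1 - k = m + 1 by omega] at this
  have h2 : (m + k + 1) * (m + k).choose k = (m + k + 1).choose (k + 1) * (k + 1) := by
    have := Nat.add_one_mul_choose_eq (m + k) k
    simpa [Nat.succ_eq_add_one] using this
  have h1z : (((m + k + 1).choose (k + 1) : ℤ)) * ((k : ℤ) + 1)
      = (((m + k + 1).choose k : ℤ)) * ((m : ℤ) + 1) := by exact_mod_cast h1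
  have h2z : ((m : ℤ) + (k : ℤ) + 1) * (((m + k).choose k : ℤ))
      = (((m + k + 1).choose (k + 1) : ℤ)) * ((k : ℤ) + 1) := by exact_mod_cast h2
  linear_combination -h1z - h2z

private lemma lemD7 (n k : ℕ) :
    ((k : ℤ) + 1) * ((n + k + 1).choose (k + 1) : ℤ)
      = ((n : ℤ) + 1 + (k : ℤ)) * ((n + k).choose k : ℤ) := by
  have h2 : (n + k + 1) * (n + k).choose k = (n + k + 1).choose (k + 1) * (k + 1) := by
    have := Nat.add_one_mul_choose_eq (n + k) k
    simpa [Nat.succ_eq_add_one] using this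
  have h2z : ((n : ℤ) + (k : ℤ) + 1) * (((n + k).choose k : ℤ))
      = (((n + k + 1).choose (k + 1) : ℤ)) * ((k : ℤ) + 1) := by exact_mod_cast h2
  linear_combination -h2z

private lemma key7 (n k : ℕ) :
    ((n : ℤ) + 1) ^ 2 * ((n : ℤ) + 2) ^ 2 *
        (((n : ℤ) + 2) ^ 2 * (((n + 2).choose k : ℤ) ^ 2 * ((n + 2 + k).choose k : ℤ))
          - (11 * (n : ℤ) ^ 2 + 33 * (n : ℤ) + 25) *
              (((n + 1).choose k : ℤ) ^ 2 * ((n + 1 + k).choose k : ℤ))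
          - ((n : ℤ) + 1) ^ 2 * ((n.choose k : ℤ) ^ 2 * ((n + k).choose k : ℤ)))
      = G7 n (k + 1) - G7 n k := by
  have h1 := lemA7 n k
  have h2 : ((n : ℤ) + 2) * ((n + 1).choose k : ℤ)
      = ((n : ℤ) + 2 - (k : ℤ)) * ((n + 2).choose k : ℤ) := by
    have h := lemA7 (n + 1) k
    have e : n + 1 + 1 = n + 2 := by omega
    rw [e] at h
    push_cast at h
    linear_combination h
  have h3 := lemC7 n k
  have h4 : ((n : ℤ) + 2) * ((n + 2 + k).choose k : ℤ)
      = ((n : ℤ) + 2 + (k : ℤ)) * ((n + 1 + k).choose k : ℤ) := by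
    have h := lemC7 (n + 1) k
    have e : n + 1 + 1 = n + 2 := by omega
    have e2 : n + 1 + 1 + k = n + 2 + k := by omega
    rw [e2] at h
    push_cast at h
    linear_combination h
  have h5 : ((k : ℤ) + 1) * ((n + 2).choose (k + 1) : ℤ)
      = ((n : ℤ) + 2 - (k : ℤ)) * ((n + 2).choose k : ℤ) := by
    have h := lemB7 (n + 2) k
    push_cast at h
    linear_combination h
  have h6 := lemD7 n k
  have h12 : ((n : ℤ) + 1) * ((n : ℤ) + 2) * (n.choose k : ℤ)
      = ((n : ℤ) + 1 - (k : ℤ)) * (((n : ℤ) + 2 - (k : ℤ)) * ((n + 2).choose k : ℤ)) := by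
    linear_combination ((n : ℤ) + 2) * h1 + ((n : ℤ) + 1 - (k : ℤ)) * h2
  have hv : ((n : ℤ) + 1) * (((n : ℤ) + 2) * ((n + 2 + k).choose k : ℤ))
      = ((n : ℤ) + 2 + (k : ℤ)) * (((n : ℤ) + 1 + (k : ℤ)) * ((n + k).choose k : ℤ)) := by
    linear_combination ((n : ℤ) + 1) * h4 + ((n : ℤ) + 2 + (k : ℤ)) * h3
  have e1 : (((n : ℤ) + 1) * ((n : ℤ) + 2) * (n.choose k : ℤ)) ^ 2 * ((n + k).choose k : ℤ)
      = (((n : ℤ) + 1 - (k : ℤ)) * (((n : ℤ) + 2 - (k : ℤ)) * ((n + 2).choose k : ℤ))) ^ 2 *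
          ((n + k).choose k : ℤ) := by rw [h12]
  have e2 : (((n : ℤ) + 2) * ((n + 1).choose k : ℤ)) ^ 2 *
        (((n : ℤ) + 1) * ((n + 1 + k).choose k : ℤ))
      = (((n : ℤ) + 2 - (k : ℤ)) * ((n + 2).choose k : ℤ)) ^ 2 *
          (((n : ℤ) + 1 + (k : ℤ)) * ((n + k).choose k : ℤ)) := by rw [h2, h3]
  have e5 : (((k : ℤ) + 1) * ((n + 2).choose (k + 1) : ℤ)) ^ 2 *
        (((k : ℤ) + 1) * ((n + k + 1).choose (k + 1) : ℤ))
      = (((n : ℤ) + 2 - (k : ℤ)) * ((n + 2).choose k : ℤ)) ^ 2 *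
          (((n : ℤ) + 1 + (k : ℤ)) * ((n + k).choose k : ℤ)) := by rw [h5, h6]
  have eG : n + (k + 1) = n + k + 1 := rfl
  simp only [G7, eG]
  push_cast
  linear_combination
    (((n : ℤ) + 1) * ((n : ℤ) + 2) ^ 3 * ((n + 2).choose k : ℤ) ^ 2) * hv
    - (11 * (n : ℤ) ^ 2 + 33 * (n : ℤ) + 25) * ((n : ℤ) + 1) * e2
    - ((n : ℤ) + 1) ^ 2 * e1
    - ((n : ℤ) + 1) *
        (((k : ℤ) + 1) ^ 2 + (6 * (n : ℤ) + 7) * ((k : ℤ) + 1)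
          - (11 * (n : ℤ) + 15) * ((n : ℤ) + 2)) * e5

private lemma rec7 (n : ℕ) :
    ((n : ℤ) + 2) ^ 2 *
        (∑ k ∈ Finset.range (n + 3), (((n + 2).choose k : ℤ)) ^ 2 * ((n + 2 + k).choose k : ℤ))
      = (11 * (n : ℤ) ^ 2 + 33 * (n : ℤ) + 25) *
          (∑ k ∈ Finset.range (n + 2), (((n + 1).choose k : ℤ)) ^ 2 * ((n + 1 + k).choose k : ℤ))
        + ((n : ℤ) + 1) ^ 2 *
          (∑ k ∈ Finset.range (n + 1), ((n.choose k : ℤ)) ^ 2 * ((n + k).choose k : ℤ)) := by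
  have H : ∑ k ∈ Finset.range (n + 3),
      (((n : ℤ) + 1) ^ 2 * ((n : ℤ) + 2) ^ 2 *
        (((n : ℤ) + 2) ^ 2 * (((n + 2).choose k : ℤ) ^ 2 * ((n + 2 + k).choose k : ℤ))
          - (11 * (n : ℤ) ^ 2 + 33 * (n : ℤ) + 25) *
              (((n + 1).choose k : ℤ) ^ 2 * ((n + 1 + k).choose k : ℤ))
          - ((n : ℤ) + 1) ^ 2 * ((n.choose k : ℤ) ^ 2 * ((n + k).choose k : ℤ))))
      = G7 n (n + 3) - G7 n 0 := by
    rw [← Finset.sum_range_sub (fun j => G7 n j) (n + 3)]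
    exact Finset.sum_congr rfl fun k _ => key7 n k
  have hG0 : G7 n 0 = 0 := by simp [G7]
  have hGtop : G7 n (n + 3) = 0 := by
    have : (n + 2).choose (n + 3) = 0 := Nat.choose_eq_zero_of_lt (by omega)
    simp [G7, this]
  rw [hG0, hGtop, sub_zero] at H
  rw [Finset.sum_congr rfl (fun k _ => by ring :
    ∀ k ∈ Finset.range (n + 3),
      (((n : ℤ) + 1) ^ 2 * ((n : ℤ) + 2) ^ 2 *
        (((n : ℤ) + 2) ^ 2 * (((n + 2).choose k : ℤ) ^ 2 * ((n + 2 + k).choose k : ℤ))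
          - (11 * (n : ℤ) ^ 2 + 33 * (n : ℤ) + 25) *
              (((n + 1).choose k : ℤ) ^ 2 * ((n + 1 + k).choose k : ℤ))
          - ((n : ℤ) + 1) ^ 2 * ((n.choose k : ℤ) ^ 2 * ((n + k).choose k : ℤ))))
      = (((n : ℤ) + 1) ^ 2 * ((n : ℤ) + 2) ^ 2 * ((n : ℤ) + 2) ^ 2) *
            (((n + 2).choose k : ℤ) ^ 2 * ((n + 2 + k).choose k : ℤ))
        - (((n : ℤ) + 1) ^ 2 * ((n : ℤ) + 2) ^ 2 *
            (11 * (n : ℤ) ^ 2 + 33 * (n : ℤ) + 25)) *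
            (((n + 1).choose k : ℤ) ^ 2 * ((n + 1 + k).choose k : ℤ))
        - (((n : ℤ) + 1) ^ 2 * ((n : ℤ) + 2) ^ 2 * ((n : ℤ) + 1) ^ 2) *
            ((n.choose k : ℤ) ^ 2 * ((n + k).choose k : ℤ)))] at H
  rw [Finset.sum_sub_distrib, Finset.sum_sub_distrib, ← Finset.mul_sum, ← Finset.mul_sum,
    ← Finset.mul_sum] at H
  have hs1 : ∑ k ∈ Finset.range (n + 3), (((n + 1).choose k : ℤ)) ^ 2 * ((n + 1 + k).choose k : ℤ)
      = ∑ k ∈ Finset.range (n + 2), (((n + 1).choose k : ℤ)) ^ 2 * ((n + 1 + k).choose k : ℤ) := by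
    rw [Finset.sum_range_succ, Nat.choose_eq_zero_of_lt (by omega : n + 1 < n + 2)]
    push_cast; ring
  have hs0 : ∑ k ∈ Finset.range (n + 3), ((n.choose k : ℤ)) ^ 2 * ((n + k).choose k : ℤ)
      = ∑ k ∈ Finset.range (n + 1), ((n.choose k : ℤ)) ^ 2 * ((n + k).choose k : ℤ) := by
    rw [Finset.sum_range_succ, Finset.sum_range_succ,
      Nat.choose_eq_zero_of_lt (by omega : n < n + 1),
      Nat.choose_eq_zero_of_lt (by omega : n < n + 2)]
    push_cast; ring
  rw [hs1, hs0] at H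
  have hne : (((n : ℤ) + 1) ^ 2 * ((n : ℤ) + 2) ^ 2) ≠ 0 := by positivity
  apply mul_left_cancel₀ hne
  linear_combination H

private lemma cb7 (m : ℕ) :
    ((m : ℤ) + 1) ^ 2 * (((2 * (m + 1)).choose (m + 1) : ℤ)) ^ 2
      = 4 * (2 * (m : ℤ) + 1) ^ 2 * (((2 * m).choose m : ℤ)) ^ 2 := by
  have h := Nat.succ_mul_centralBinom_succ m
  simp only [Nat.centralBinom, Nat.succ_eq_add_one] at h
  have h2 : ((m : ℤ) + 1) * (((2 * (m + 1)).choose (m + 1) : ℤ))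
      = 2 * (2 * (m : ℤ) + 1) * (((2 * m).choose m : ℤ)) := by exact_mod_cast h
  linear_combination (((m : ℤ) + 1) * (((2 * (m + 1)).choose (m + 1) : ℤ))
      + 2 * (2 * (m : ℤ) + 1) * (((2 * m).choose m : ℤ))) * h2

/-- Case #25: A_n = C(2n,n)^2 * ∑_{k=0}^n C(n,k)^2 C(n+k,k) satisfies the recurrence of
θ^4 − 4z(2θ+1)^2(11θ^2+11θ+3) − 16z^2(2θ+3)^2(2θ+1)^2. -/
theorem stmt_7
    (A : ℤ → ℤ)
    (hneg : ∀ m : ℤ, m < 0 → A m = 0)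
    (hA : ∀ n : ℕ, A (n : ℤ) =
      (Nat.choose (2 * n) n : ℤ) ^ 2 *
        ∑ k ∈ Finset.range (n + 1),
          ((n.choose k : ℤ)) ^ 2 * (Nat.choose (n + k) k : ℤ)) :
    ∀ n : ℤ, 1 ≤ n →
      n ^ 4 * A n =
        4 * (2 * n - 1) ^ 2 * (11 * n ^ 2 - 11 * n + 3) * A (n - 1) +
          16 * (2 * n - 1) ^ 2 * (2 * n - 3) ^ 2 * A (n - 2) := by
  intro n hn
  obtain ⟨p, hp⟩ := Int.eq_ofNat_of_zero_le (by omega : (0 : ℤ) ≤ n - 1)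
  match p, hp with
  | 0, hp =>
    have hn1 : n = 1 := by omega
    subst hn1
    have h1 := hA 1
    have h0 := hA 0
    have hm : A (-1) = 0 := hneg (-1) (by norm_num)
    norm_num [Finset.sum_range_succ] at h1 h0
    norm_num [h1, h0, hm]
  | (q + 1 : ℕ), hp =>
    have hq2 : n = (q : ℤ) + 2 := by push_cast at hp; omega
    have hA2 : A n = ((2 * (q + 2)).choose (q + 2) : ℤ) ^ 2 *
        ∑ k ∈ Finset.range (q + 2 + 1),
          (((q + 2).choose k : ℤ)) ^ 2 * ((q + 2 + k).choose k : ℤ) := by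
      have := hA (q + 2)
      rw [show (((q + 2 : ℕ)) : ℤ) = n by push_cast; omega] at this
      exact this
    have hA1 : A (n - 1) = ((2 * (q + 1)).choose (q + 1) : ℤ) ^ 2 *
        ∑ k ∈ Finset.range (q + 1 + 1),
          (((q + 1).choose k : ℤ)) ^ 2 * ((q + 1 + k).choose k : ℤ) := by
      have := hA (q + 1)
      rw [show (((q + 1 : ℕ)) : ℤ) = n - 1 by push_cast; omega] at this
      exact this
    have hA0 : A (n - 2) = ((2 * q).choose q : ℤ) ^ 2 *
        ∑ k ∈ Finset.range (q + 1),
          ((q.choose k : ℤ)) ^ 2 * ((q + k).choose k : ℤ) := by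
      have := hA q
      rw [show ((q : ℕ) : ℤ) = n - 2 by omega] at this
      exact this
    have hrec := rec7 q
    have hc1 : ((q : ℤ) + 1 + 1) ^ 2 * (((2 * (q + 1 + 1)).choose (q + 1 + 1) : ℤ)) ^ 2
        = 4 * (2 * ((q : ℤ) + 1) + 1) ^ 2 * (((2 * (q + 1)).choose (q + 1) : ℤ)) ^ 2 := by
      have := cb7 (q + 1)
      push_cast at this ⊢
      linear_combination this
    have hc0 := cb7 q
    rw [hA2, hA1, hA0, hq2]
    rw [show q + 2 + 1 = q + 3 from rfl] at *
    rw [show q + 1 + 1 = q + 2 from rfl] at *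
    rw [show 2 * (q + 1 + 1) = 2 * (q + 2) from rfl] at hc1
    linear_combination
      (((q : ℤ) + 2) ^ 2 *
          (∑ k ∈ Finset.range (q + 3),
            (((q + 2).choose k : ℤ)) ^ 2 * ((q + 2 + k).choose k : ℤ))) * hc1
      + (4 * (2 * (q : ℤ) + 3) ^ 2 * (((2 * (q + 1)).choose (q + 1) : ℤ)) ^ 2) * hrec
      + (4 * (2 * (q : ℤ) + 3) ^ 2 *
          (∑ k ∈ Finset.range (q + 1),
            ((q.choose k : ℤ)) ^ 2 * ((q + k).choose k : ℤ))) * hc0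
end

section
/- For every natural number n, the sum over k = 0..n of C(n,k)^2 · C(n+k,k) · C(2k,n) equals the double sum over k = 0..n and l = 0..n of C(n,k)^2 · C(n,l)^2 · C(k+l,n). (This is the equality of the two expressions for A_n/C(2n,n) in case #26 of the table.) -/
/-!
Expanding `C(2k, n)` and `C(k + l, n)` by Vandermonde's identity as `∑ⱼ C(k, j) C(k, n - j)` and
`∑ⱼ C(k, j) C(l, n - j)`, both sides become `∑ⱼ C(n, j)² C(2n - j, n) C(n + j, n)`. On the right
the sums over `k` and `l` separate, and each is again a Vandermonde sum once
`C(n, k) C(k, j) = C(n, j) C(n - j, n - k)` is used. On the left the same substitution turns the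
sum over `k` into the Pfaff–Saalschütz sum
`∑ₘ C(a, m) C(b, m) C(y + a + b - m, a + b) = C(a + y, y) C(b + y, y)`, which follows by induction
on `y` from a Wilf–Zeilberger recurrence in which the sum over `m` telescopes.
-/

open Finset

namespace Nat

theorem choose_add_eq_sum_range (p q t : ℕ) :
    (p + q).choose t = ∑ i ∈ range (t + 1), p.choose i * q.choose (t - i) := by
  rw [add_choose_eq, Finset.Nat.sum_antidiagonal_eq_sum_range_succ_mk]

theorem choose_sub_mul_choose {n m : ℕ} (j : ℕ) (hm : m ≤ n) :
    n.choose (n - m) * (n - m).choose j = n.choose j * (n - j).choose m := by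
  rcases le_or_gt j (n - m) with hj | hj
  · rw [choose_mul hj, ← choose_symm (by omega : m ≤ n - j),
      show n - j - m = n - m - j by omega]
  · rw [choose_eq_zero_of_lt hj, Nat.mul_zero]
    rcases le_or_gt j n with hjn | hjn
    · rw [choose_eq_zero_of_lt (by omega : n - j < m), Nat.mul_zero]
    · rw [choose_eq_zero_of_lt hjn, Nat.zero_mul]

theorem sum_choose_sq_mul_choose (n j : ℕ) :
    ∑ k ∈ range (n + 1), n.choose k ^ 2 * k.choose j = n.choose j * (n - j + n).choose n := by
  rw [← sum_range_reflect, choose_add_eq_sum_range, mul_sum]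
  refine sum_congr rfl fun m hm => ?_
  have hmn : m ≤ n := mem_range_succ_iff.mp hm
  rw [Nat.add_sub_cancel, sq, mul_assoc, choose_sub_mul_choose j hmn, choose_symm hmn]
  ring

def saalschutzTerm (a b y m : ℕ) : ℕ :=
  a.choose m * b.choose m * (y + a + b - m).choose (a + b)

/-- Summed over `m`, the terms `m ^ 2 * saalschutzTerm a b (x + 1) m` telescope away. -/
theorem saalschutzTerm_recurrence (a b x m : ℕ) :
    (x + 1) ^ 2 * saalschutzTerm a b (x + 1) m +
        (m + 1) ^ 2 * saalschutzTerm a b (x + 1) (m + 1) =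
      (x + a + 1) * (x + b + 1) * saalschutzTerm a b x m +
        m ^ 2 * saalschutzTerm a b (x + 1) m := by
  simp only [saalschutzTerm, show x + 1 + a + b - (m + 1) = x + a + b - m by omega]
  rcases lt_or_ge a m with ha | ha
  · simp [choose_eq_zero_of_lt ha, choose_eq_zero_of_lt (ha.trans (lt_add_one m))]
  rcases lt_or_ge b m with hb | hb
  · simp [choose_eq_zero_of_lt hb, choose_eq_zero_of_lt (hb.trans (lt_add_one m))]
  rcases lt_or_ge x m with hx | hx
  · rw [choose_eq_zero_of_lt (show x + a + b - m < a + b by omega)]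
    obtain rfl | hx := (show x + 1 ≤ m by omega).eq_or_lt
    · ring
    · rw [choose_eq_zero_of_lt (show x + 1 + a + b - m < a + b by omega)]
      ring
  have e1 := choose_succ_right_eq a m
  have e2 := choose_succ_right_eq b m
  have e3 := choose_mul_succ_eq (x + a + b - m) (a + b)
  rw [show x + 1 + a + b - m = x + a + b - m + 1 by omega]
  zify [ha, hb, (show a + b ≤ x + a + b - m + 1 by omega), (show m ≤ x + a + b by omega)]
    at e1 e2 e3 ⊢
  apply mul_left_cancel₀ (show (x : ℤ) + 1 - m ≠ 0 by omega)
  linear_combination (-(((x : ℤ) + 1) ^ 2 - m ^ 2)) * a.choose m * b.choose m * e3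
    + ((x : ℤ) + 1 - m) * (x + a + b - m).choose (a + b) * (m + 1) * b.choose (m + 1) * e1
    + ((x : ℤ) + 1 - m) * (x + a + b - m).choose (a + b) * ((a : ℤ) - m) * a.choose m * e2

theorem sum_saalschutzTerm_recurrence {a N : ℕ} (b x : ℕ) (haN : a ≤ N) :
    (x + 1) ^ 2 * ∑ m ∈ range (N + 1), saalschutzTerm a b (x + 1) m =
      (x + a + 1) * (x + b + 1) * ∑ m ∈ range (N + 1), saalschutzTerm a b x m := by
  set g : ℕ → ℕ := fun m => m ^ 2 * saalschutzTerm a b (x + 1) m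
  have telescope : ∑ m ∈ range (N + 1), g (m + 1) = ∑ m ∈ range (N + 1), g m := by
    have hg0 : g 0 = 0 := by simp [g]
    have hgN : g (N + 1) = 0 := by
      simp [g, saalschutzTerm, choose_eq_zero_of_lt (Nat.lt_succ_of_le haN)]
    have h := (sum_range_succ' g (N + 1)).symm.trans (sum_range_succ g (N + 1))
    rwa [hg0, hgN] at h
  have h := sum_congr rfl fun m (_ : m ∈ range (N + 1)) => saalschutzTerm_recurrence a b x m
  rw [sum_add_distrib, sum_add_distrib, telescope, ← mul_sum, ← mul_sum] at h
  exact Nat.add_right_cancel h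

theorem sum_saalschutzTerm {a N : ℕ} (b y : ℕ) (haN : a ≤ N) :
    ∑ m ∈ range (N + 1), saalschutzTerm a b y m = (a + y).choose y * (b + y).choose y := by
  induction y with
  | zero =>
    rw [sum_range_succ', sum_eq_zero fun m _ => ?_]
    · simp [saalschutzTerm]
    · rcases lt_or_ge a (m + 1) with h | h
      · simp [saalschutzTerm, choose_eq_zero_of_lt h]
      · simp [saalschutzTerm, choose_eq_zero_of_lt (show a + b - (m + 1) < a + b by omega)]
  | succ x ih =>
    apply Nat.eq_of_mul_eq_mul_left (by positivity : 0 < (x + 1) ^ 2)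
    rw [sum_saalschutzTerm_recurrence b x haN, ih]
    calc (x + a + 1) * (x + b + 1) * ((a + x).choose x * (b + x).choose x)
        = ((a + x + 1) * (a + x).choose x) * ((b + x + 1) * (b + x).choose x) := by ring
      _ = (x + 1) ^ 2 * ((a + (x + 1)).choose (x + 1) * (b + (x + 1)).choose (x + 1)) := by
        rw [add_one_mul_choose_eq, add_one_mul_choose_eq, ← add_assoc, ← add_assoc]; ring

theorem sum_choose_sq_mul_choose_add_mul_choose_mul_choose {n j : ℕ} (hj : j ≤ n) :
    ∑ k ∈ range (n + 1), n.choose k ^ 2 * (n + k).choose k * (k.choose j * k.choose (n - j)) =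
      n.choose j ^ 2 * ((n - j + n).choose n * (j + n).choose n) := by
  rw [← sum_range_reflect, ← sum_saalschutzTerm j n (Nat.sub_le n j), mul_sum]
  refine sum_congr rfl fun m hm => ?_
  have hmn : m ≤ n := mem_range_succ_iff.mp hm
  have hcompl := choose_sub_mul_choose (n - j) hmn
  rw [Nat.sub_sub_self hj, choose_symm hj] at hcompl
  rw [saalschutzTerm, Nat.add_sub_cancel, show n + (n - j) + j - m = n + (n - m) by omega,
    Nat.sub_add_cancel hj, ← choose_symm_add]
  calc _ = (n.choose (n - m) * (n - m).choose j) *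
          (n.choose (n - m) * (n - m).choose (n - j)) * (n + (n - m)).choose n := by ring
    _ = _ := by rw [choose_sub_mul_choose j hmn, hcompl]; ring

theorem sum_sum_mul_choose_add (f g : ℕ → ℕ) (K L n : ℕ) :
    ∑ k ∈ range K, ∑ l ∈ range L, f k * g l * (k + l).choose n =
      ∑ j ∈ range (n + 1),
        (∑ k ∈ range K, f k * k.choose j) * ∑ l ∈ range L, g l * l.choose (n - j) := by
  calc _ = ∑ k ∈ range K, ∑ l ∈ range L, ∑ j ∈ range (n + 1),
          f k * k.choose j * (g l * l.choose (n - j)) := by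
        refine sum_congr rfl fun k _ => sum_congr rfl fun l _ => ?_
        rw [choose_add_eq_sum_range, mul_sum]
        exact sum_congr rfl fun j _ => by ring
    _ = ∑ j ∈ range (n + 1), ∑ k ∈ range K, ∑ l ∈ range L,
          f k * k.choose j * (g l * l.choose (n - j)) :=
        (sum_congr rfl fun k _ => sum_comm).trans sum_comm
    _ = _ := by simp_rw [sum_mul_sum]

end Nat

/-- Case #26: ∑_{k=0}^n C(n,k)^2 C(n+k,k) C(2k,n) = ∑_{k,l=0}^n C(n,k)^2 C(n,l)^2 C(k+l,n). -/
theorem stmt_8 (n : ℕ) :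
    (∑ k ∈ Finset.range (n + 1),
      (n.choose k) ^ 2 * Nat.choose (n + k) k * Nat.choose (2 * k) n) =
    ∑ k ∈ Finset.range (n + 1), ∑ l ∈ Finset.range (n + 1),
      (n.choose k) ^ 2 * (n.choose l) ^ 2 * Nat.choose (k + l) n := by
  calc _ = ∑ k ∈ range (n + 1), ∑ j ∈ range (n + 1),
          n.choose k ^ 2 * (n + k).choose k * (k.choose j * k.choose (n - j)) :=
        sum_congr rfl fun k _ => by rw [two_mul, Nat.choose_add_eq_sum_range k k n, mul_sum]
    _ = ∑ j ∈ range (n + 1), n.choose j ^ 2 * ((n - j + n).choose n * (j + n).choose n) := by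
        rw [sum_comm]
        exact sum_congr rfl fun j hj =>
          Nat.sum_choose_sq_mul_choose_add_mul_choose_mul_choose (mem_range_succ_iff.mp hj)
    _ = _ := by
      rw [Nat.sum_sum_mul_choose_add]
      refine sum_congr rfl fun j hj => ?_
      have hjn : j ≤ n := mem_range_succ_iff.mp hj
      rw [Nat.sum_choose_sq_mul_choose, Nat.sum_choose_sq_mul_choose, Nat.sub_sub_self hjn,
        Nat.choose_symm hjn]
      ring
end

section
/- For every natural number n, the triple sum over k = 0..n, l = 0..n, m = 0..n of C(n,k) · C(n,l) · C(m,k) · C(m,l) · C(k+l,k) · C(n,m)^2 equals the double sum over k = 0..n and l = 0..n of C(n,k)^2 · C(n,l)^2 · C(k+l,n)^2. (This is the equality of the two expressions for A_n in case #28 of the table.) -/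
/-!
Both sides equal `∑ a, ∑ b, (C(n,a) C(n,b))² C(a+b,a) C(2n-a-b,n-a)`. The key evaluation is
`S(a,b) := ∑ m, C(n,m)² C(m,a) C(m,b) = C(n,a) C(n,b) C(2n-a-b,n-a)`, which is Vandermonde's
identity once `C(n,m) C(m,a) = C(n,a) C(n-a,m-a)` and `C(n,m) C(m,b) = C(n,b) C(n-b,n-m)`.
On the left the sum over `m` is `S(k,l)`; on the right, expanding `C(k+l,n)²` by Vandermonde and
exchanging sums gives `∑ a, ∑ b, S(a,b) S(n-a,n-b)`.
-/

open Finset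

lemma Nat.add_choose_eq_sum_range (x y k : ℕ) :
    (x + y).choose k = ∑ i ∈ range (k + 1), x.choose i * y.choose (k - i) := by
  rw [Nat.add_choose_eq, Nat.sum_antidiagonal_eq_sum_range_succ_mk]

lemma Nat.choose_mul_choose_eq_choose_mul_choose_sub {n m b : ℕ} (hm : m ≤ n) :
    n.choose m * m.choose b = n.choose b * (n - b).choose (n - m) := by
  rcases le_or_gt b m with hbm | hmb
  · rw [Nat.choose_mul hbm]
    congr 1
    exact Nat.choose_symm_of_eq_add (by omega)
  · rcases le_or_gt b n with hbn | hnb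
    · simp [Nat.choose_eq_zero_of_lt hmb, Nat.choose_eq_zero_of_lt (show n - b < n - m by omega)]
    · simp [Nat.choose_eq_zero_of_lt hmb, Nat.choose_eq_zero_of_lt hnb]

lemma sum_choose_sq_mul_choose_mul_choose {n a b : ℕ} (ha : a ≤ n) :
    ∑ m ∈ range (n + 1), n.choose m ^ 2 * (m.choose a * m.choose b)
      = n.choose a * n.choose b * (n - a + (n - b)).choose (n - a) := by
  have below : ∑ m ∈ range a, n.choose m ^ 2 * (m.choose a * m.choose b) = 0 :=
    sum_eq_zero fun m hm => by simp [Nat.choose_eq_zero_of_lt (mem_range.mp hm)]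
  have shifted : ∀ i ∈ range (n + 1 - a),
      n.choose (a + i) ^ 2 * ((a + i).choose a * (a + i).choose b)
        = n.choose a * n.choose b * ((n - a).choose i * (n - b).choose (n - a - i)) := by
    intro i hi
    have hi : a + i ≤ n := by rw [mem_range] at hi; omega
    have h₁ := Nat.choose_mul (n := n) (Nat.le_add_right a i)
    have h₂ := Nat.choose_mul_choose_eq_choose_mul_choose_sub (b := b) hi
    rw [Nat.add_sub_cancel_left] at h₁
    rw [Nat.sub_sub]
    calc _ = (n.choose (a + i) * (a + i).choose a) * (n.choose (a + i) * (a + i).choose b) := by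
          ring
      _ = _ := by rw [h₁, h₂]; ring
  rw [← sum_range_add_sum_Ico _ (by omega : a ≤ n + 1), below, zero_add, sum_Ico_eq_sum_range,
    sum_congr rfl shifted, ← mul_sum, Nat.add_choose_eq_sum_range,
    show n + 1 - a = n - a + 1 by omega]

lemma sum_sum_choose_sq_mul_choose_sq_mul_choose_add_sq (n : ℕ) :
    ∑ k ∈ range (n + 1), ∑ l ∈ range (n + 1),
      n.choose k ^ 2 * n.choose l ^ 2 * (k + l).choose n ^ 2
    = ∑ a ∈ range (n + 1), ∑ b ∈ range (n + 1),
      (n.choose a * n.choose b) ^ 2 * (a + b).choose a * (n - a + (n - b)).choose (n - a) := by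
  have expand : ∀ k l, n.choose k ^ 2 * n.choose l ^ 2 * (k + l).choose n ^ 2
      = ∑ p ∈ range (n + 1) ×ˢ range (n + 1),
        (n.choose k ^ 2 * (k.choose p.1 * k.choose p.2)) *
          (n.choose l ^ 2 * (l.choose (n - p.1) * l.choose (n - p.2))) := by
    intro k l
    rw [sum_product, sq ((k + l).choose n), Nat.add_choose_eq_sum_range, sum_mul_sum, mul_sum]
    refine sum_congr rfl fun a _ => ?_
    rw [mul_sum]
    exact sum_congr rfl fun b _ => by ring
  simp_rw [expand]
  rw [sum_congr rfl fun k _ => sum_comm, sum_comm, sum_product]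
  refine sum_congr rfl fun a ha => sum_congr rfl fun b hb => ?_
  have ha : a ≤ n := Nat.lt_succ_iff.mp (mem_range.mp ha)
  have hb : b ≤ n := Nat.lt_succ_iff.mp (mem_range.mp hb)
  rw [← sum_mul_sum, sum_choose_sq_mul_choose_mul_choose ha,
    sum_choose_sq_mul_choose_mul_choose (Nat.sub_le n a), Nat.sub_sub_self ha, Nat.sub_sub_self hb,
    Nat.choose_symm ha, Nat.choose_symm hb]
  ring

/-- Case #28: the triple sum ∑_{k,l,m} C(n,k) C(n,l) C(m,k) C(m,l) C(k+l,k) C(n,m)^2 equals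
the double sum ∑_{k,l} C(n,k)^2 C(n,l)^2 C(k+l,n)^2. -/
theorem stmt_9 (n : ℕ) :
    (∑ k ∈ Finset.range (n + 1), ∑ l ∈ Finset.range (n + 1), ∑ m ∈ Finset.range (n + 1),
      n.choose k * n.choose l * m.choose k * m.choose l * Nat.choose (k + l) k *
        (n.choose m) ^ 2) =
    ∑ k ∈ Finset.range (n + 1), ∑ l ∈ Finset.range (n + 1),
      (n.choose k) ^ 2 * (n.choose l) ^ 2 * (Nat.choose (k + l) n) ^ 2 := by
  rw [sum_sum_choose_sq_mul_choose_sq_mul_choose_add_sq]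
  refine sum_congr rfl fun k hk => sum_congr rfl fun l _ => ?_
  have hk : k ≤ n := Nat.lt_succ_iff.mp (mem_range.mp hk)
  calc _ = n.choose k * n.choose l * (k + l).choose k *
        ∑ m ∈ range (n + 1), n.choose m ^ 2 * (m.choose k * m.choose l) := by
        rw [mul_sum]
        exact sum_congr rfl fun m _ => by ring
    _ = _ := by rw [sum_choose_sq_mul_choose_mul_choose hk]; ring
end

section
/- Let A_n = C(2n,n) * (sum over k = 0..n of C(n,k)^2 · C(n+k,k)^2), i.e. the central binomial coefficient times the n-th Apéry number. Then, with the convention A_m = 0 for m < 0, for every integer n ≥ 1 one has n^4·A_n = 2(2n−1)^2(17n^2−17n+5)·A_{n−1} − 4(2n−1)(2n−3)(n−1)^2·A_{n−2}. (Equivalently, Σ A_n z^n is the analytic solution of θ^4 − 2z(2θ+1)^2(17θ^2+17θ+5) + 4z^2(2θ+3)(2θ+1)(θ+1)^2, case #29 of the table.) -/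
lemma W (a k : ℕ) : ((a : ℚ) + 1) * (a.choose k) = ((a : ℚ) + 1 - k) * ((a + 1).choose k) := by
  rcases le_or_gt k (a + 1) with h | h
  · have hN : (a + 1) * a.choose k = (a + 1).choose k * (a + 1 - k) := by
      rw [Nat.add_one_mul_choose_eq, Nat.choose_succ_right_eq]
    have := congrArg (fun z : ℕ => (z : ℚ)) hN
    push_cast [Nat.cast_sub h] at this
    linarith [this]
  · rw [Nat.choose_eq_zero_of_lt (by omega), Nat.choose_eq_zero_of_lt h]
    norm_num

lemma R1_s11 (n k : ℕ) : ((k : ℚ) + 1) * (n.choose (k + 1)) = ((n : ℚ) - k) * (n.choose k) := by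
  rcases le_or_gt k n with h | h
  · have := congrArg (fun z : ℕ => (z : ℚ)) (Nat.choose_succ_right_eq n k)
    push_cast [Nat.cast_sub h] at this
    linarith [this]
  · rw [Nat.choose_eq_zero_of_lt h, Nat.choose_eq_zero_of_lt (by omega)]
    norm_num

lemma R2_s11 (a k : ℕ) : ((k : ℚ) + 1) * ((a + 1).choose (k + 1)) = ((a : ℚ) + 1) * (a.choose k) := by
  have := congrArg (fun z : ℕ => (z : ℚ)) (Nat.add_one_mul_choose_eq a k)
  push_cast at this
  linarith [this]

noncomputable def g (n k : ℕ) : ℚ :=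
  4 * (2 * (n : ℚ) - 1) * (2 * (k : ℚ) ^ 2 - 3 * k - 4 * (n : ℚ) ^ 2 + 4 * n) * (k : ℚ) ^ 4 *
    ((n.choose k : ℚ)) ^ 2 * (((n + k).choose k : ℚ)) ^ 2 /
    (((n : ℚ) + k) ^ 2 * ((n : ℚ) + k - 1) ^ 2)

set_option maxHeartbeats 4000000 in
set_option maxRecDepth 8000 in
lemma perk (n k : ℕ) (hn : 2 ≤ n) :
    (n : ℚ) ^ 3 * ((n.choose k : ℚ)) ^ 2 * (((n + k).choose k : ℚ)) ^ 2
      - (2 * (n : ℚ) - 1) * (17 * (n : ℚ) ^ 2 - 17 * n + 5) *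
        (((n - 1).choose k : ℚ)) ^ 2 * (((n - 1 + k).choose k : ℚ)) ^ 2
      + ((n : ℚ) - 1) ^ 3 *
        (((n - 2).choose k : ℚ)) ^ 2 * (((n - 2 + k).choose k : ℚ)) ^ 2
    = g n (k + 1) - g n k := by
  set x : ℚ := (n : ℚ) with hxdef
  set y : ℚ := (k : ℚ) with hydef
  set a : ℚ := (n.choose k : ℚ) with hadef
  set b : ℚ := ((n + k).choose k : ℚ) with hbdef
  set c2 : ℚ := ((n - 1).choose k : ℚ)
  set c3 : ℚ := ((n - 2).choose k : ℚ)
  set c4 : ℚ := ((n - 1 + k).choose k : ℚ)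
  set c5 : ℚ := ((n - 2 + k).choose k : ℚ)
  set c6 : ℚ := (n.choose (k + 1) : ℚ)
  set c7 : ℚ := ((n + (k + 1)).choose (k + 1) : ℚ)
  have h2Q : (2 : ℚ) ≤ x := by rw [hxdef]; exact_mod_cast hn
  have hy0 : (0 : ℚ) ≤ y := by positivity
  have hx0 : x ≠ 0 := by positivity
  have hx1 : x - 1 ≠ 0 := by intro h; nlinarith
  have hxy : x + y ≠ 0 := by positivity
  have hxy1 : x + y - 1 ≠ 0 := by intro h; nlinarith
  have hy1 : y + 1 ≠ 0 := by positivity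
  have hxy2 : x + y + 1 ≠ 0 := by positivity
  -- multiplied-form recurrences
  have m2 : x * c2 = (x - y) * a := by
    have w := W (n - 1) k
    rw [Nat.sub_add_cancel (by omega), Nat.cast_sub (by omega)] at w
    push_cast at w
    linarith [w]
  have m3 : (x - 1) * c3 = (x - 1 - y) * c2 := by
    have w := W (n - 2) k
    rw [show n - 2 + 1 = n - 1 from by omega, Nat.cast_sub (by omega)] at w
    push_cast at w
    linarith [w]
  have m4 : (x + y) * c4 = x * b := by
    have w := W (n - 1 + k) k
    rw [show n - 1 + k + 1 = n + k from by omega] at w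
    rw [show ((n - 1 + k : ℕ) : ℚ) = x - 1 + y from by
      push_cast [Nat.cast_sub (show 1 ≤ n by omega)]; ring] at w
    linarith [w]
  have m5 : (x + y - 1) * c5 = (x - 1) * c4 := by
    have w := W (n - 2 + k) k
    rw [show n - 2 + k + 1 = n - 1 + k from by omega] at w
    rw [show ((n - 2 + k : ℕ) : ℚ) = x - 2 + y from by
      push_cast [Nat.cast_sub (show 2 ≤ n from hn)]; ring] at w
    linarith [w]
  have m6 : (y + 1) * c6 = (x - y) * a := by
    have := R1_s11 n k; linarith [this]
  have m7 : (y + 1) * c7 = (x + y + 1) * b := by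
    have := R2_s11 (n + k) k
    push_cast at this
    have e : c7 = (((n + k + 1)).choose (k + 1) : ℚ) := rfl
    rw [e]
    linarith [this]
  -- chained forms
  have m3' : x * ((x - 1) * c3) = (x - 1 - y) * ((x - y) * a) := by
    linear_combination x * m3 + (x - 1 - y) * m2
  have m5' : (x + y) * ((x + y - 1) * c5) = (x - 1) * (x * b) := by
    linear_combination (x + y) * m5 + (x - 1) * m4
  -- product forms
  have H24 : (x * c2) * ((x + y) * c4) = ((x - y) * a) * (x * b) := by rw [m2, m4]
  have H35 : (x * ((x - 1) * c3)) * ((x + y) * ((x + y - 1) * c5))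
      = ((x - 1 - y) * ((x - y) * a)) * ((x - 1) * (x * b)) := by rw [m3', m5']
  have H67 : ((y + 1) * c6) * ((y + 1) * c7) = ((x - y) * a) * ((x + y + 1) * b) := by
    rw [m6, m7]
  -- cleared-denominator g values
  have hgk : g n k * ((x + y) ^ 2 * (x + y - 1) ^ 2)
      = 4 * (2 * x - 1) * (2 * y ^ 2 - 3 * y - 4 * x ^ 2 + 4 * x) * y ^ 4 * a ^ 2 * b ^ 2 := by
    unfold g
    rw [div_mul_cancel₀]
    exact mul_ne_zero (pow_ne_zero 2 hxy) (pow_ne_zero 2 hxy1)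
  have hgk1 : g n (k + 1) * ((x + y + 1) ^ 2 * (x + y) ^ 2)
      = 4 * (2 * x - 1) * (2 * (y + 1) ^ 2 - 3 * (y + 1) - 4 * x ^ 2 + 4 * x) * (y + 1) ^ 4
          * c6 ^ 2 * c7 ^ 2 := by
    unfold g
    push_cast
    rw [show x + (y + 1) - 1 = x + y from by ring, show x + (y + 1) = x + y + 1 from by ring]
    rw [div_mul_cancel₀]
    exact mul_ne_zero (pow_ne_zero 2 hxy2) (pow_ne_zero 2 hxy)
  -- the multiplied identity
  have BIGne : ((x + y) ^ 2 * (x + y - 1) ^ 2 * (x + y + 1) ^ 2 * x ^ 2 * (x - 1) ^ 2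
      * (y + 1) ^ 4) ≠ 0 := by
    refine mul_ne_zero (mul_ne_zero (mul_ne_zero (mul_ne_zero (mul_ne_zero ?_ ?_) ?_) ?_) ?_) ?_
      <;> positivity
  apply mul_right_cancel₀ BIGne
  have hRHS : (g n (k + 1) - g n k) *
      ((x + y) ^ 2 * (x + y - 1) ^ 2 * (x + y + 1) ^ 2 * x ^ 2 * (x - 1) ^ 2 * (y + 1) ^ 4)
      = x ^ 2 * (x - 1) ^ 2 * (y + 1) ^ 4 *
          (4 * (2 * x - 1) * (2 * (y + 1) ^ 2 - 3 * (y + 1) - 4 * x ^ 2 + 4 * x) * (y + 1) ^ 4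
              * c6 ^ 2 * c7 ^ 2 * (x + y - 1) ^ 2
            - 4 * (2 * x - 1) * (2 * y ^ 2 - 3 * y - 4 * x ^ 2 + 4 * x) * y ^ 4 * a ^ 2 * b ^ 2
              * (x + y + 1) ^ 2) := by
    linear_combination (x ^ 2 * (x - 1) ^ 2 * (y + 1) ^ 4 * (x + y - 1) ^ 2) * hgk1
      - (x ^ 2 * (x - 1) ^ 2 * (y + 1) ^ 4 * (x + y + 1) ^ 2) * hgk
  linear_combination (-1 : ℚ) * hRHS +
    (- (2 * x - 1) * (17 * x ^ 2 - 17 * x + 5) * (x - 1) ^ 2 * (y + 1) ^ 4 * (x + y - 1) ^ 2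
        * (x + y + 1) ^ 2 * ((x * c2) * ((x + y) * c4) + ((x - y) * a) * (x * b))) * H24
    + ((x - 1) ^ 3 * (y + 1) ^ 4 * (x + y + 1) ^ 2
        * ((x * ((x - 1) * c3)) * ((x + y) * ((x + y - 1) * c5))
            + ((x - 1 - y) * ((x - y) * a)) * ((x - 1) * (x * b)))) * H35
    + (- (y + 1) ^ 4 * x ^ 2 * (x - 1) ^ 2 * (x + y - 1) ^ 2 * 4 * (2 * x - 1)
        * (2 * (y + 1) ^ 2 - 3 * (y + 1) - 4 * x ^ 2 + 4 * x)
        * (((y + 1) * c6) * ((y + 1) * c7) + ((x - y) * a) * ((x + y + 1) * b))) * H67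

lemma gtop (n : ℕ) : g n (n + 1) = 0 := by
  unfold g
  rw [Nat.choose_eq_zero_of_lt (Nat.lt_succ_self n)]
  norm_num

lemma g0 (n : ℕ) : g n 0 = 0 := by
  unfold g
  norm_num


lemma keyS (n : ℕ) (hn : 2 ≤ n) :
    (n : ℚ) ^ 3 * (∑ k ∈ Finset.range (n + 1), ((n.choose k : ℚ)) ^ 2 * (((n + k).choose k : ℚ)) ^ 2)
      = (2 * (n : ℚ) - 1) * (17 * (n : ℚ) ^ 2 - 17 * n + 5) *
          (∑ k ∈ Finset.range (n - 1 + 1), (((n - 1).choose k : ℚ)) ^ 2 * (((n - 1 + k).choose k : ℚ)) ^ 2)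
        - ((n : ℚ) - 1) ^ 3 *
          (∑ k ∈ Finset.range (n - 2 + 1), (((n - 2).choose k : ℚ)) ^ 2 * (((n - 2 + k).choose k : ℚ)) ^ 2) := by
  have htel : ∑ k ∈ Finset.range (n + 1), (g n (k + 1) - g n k) = g n (n + 1) - g n 0 :=
    Finset.sum_range_sub (g n) (n + 1)
  have hsum : ∑ k ∈ Finset.range (n + 1),
      ((n : ℚ) ^ 3 * ((n.choose k : ℚ)) ^ 2 * (((n + k).choose k : ℚ)) ^ 2
      - (2 * (n : ℚ) - 1) * (17 * (n : ℚ) ^ 2 - 17 * n + 5) *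
        (((n - 1).choose k : ℚ)) ^ 2 * (((n - 1 + k).choose k : ℚ)) ^ 2
      + ((n : ℚ) - 1) ^ 3 *
        (((n - 2).choose k : ℚ)) ^ 2 * (((n - 2 + k).choose k : ℚ)) ^ 2) = 0 := by
    rw [Finset.sum_congr rfl (fun k _ => perk n k hn), htel, gtop n, g0 n, sub_zero]
  have hext1 : ∑ k ∈ Finset.range (n + 1),
      (((n - 1).choose k : ℚ)) ^ 2 * (((n - 1 + k).choose k : ℚ)) ^ 2
      = ∑ k ∈ Finset.range (n - 1 + 1),
      (((n - 1).choose k : ℚ)) ^ 2 * (((n - 1 + k).choose k : ℚ)) ^ 2 := by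
    rw [show n + 1 = (n - 1 + 1) + 1 from by omega, Finset.sum_range_succ]
    rw [show n - 1 + 1 = n from by omega, Nat.choose_eq_zero_of_lt (by omega : n - 1 < n)]
    norm_num
  have hext2 : ∑ k ∈ Finset.range (n + 1),
      (((n - 2).choose k : ℚ)) ^ 2 * (((n - 2 + k).choose k : ℚ)) ^ 2
      = ∑ k ∈ Finset.range (n - 2 + 1),
      (((n - 2).choose k : ℚ)) ^ 2 * (((n - 2 + k).choose k : ℚ)) ^ 2 := by
    rw [show n + 1 = ((n - 2 + 1) + 1) + 1 from by omega, Finset.sum_range_succ,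
      Finset.sum_range_succ]
    rw [show n - 2 + 1 + 1 = n from by omega, show n - 2 + 1 = n - 1 from by omega,
      Nat.choose_eq_zero_of_lt (by omega : n - 2 < n), Nat.choose_eq_zero_of_lt (by omega : n - 2 < n - 1)]
    norm_num
  simp only [Finset.sum_add_distrib, Finset.sum_sub_distrib] at hsum
  have f1 : ∑ k ∈ Finset.range (n + 1), (n : ℚ) ^ 3 * ((n.choose k : ℚ)) ^ 2 * (((n + k).choose k : ℚ)) ^ 2
      = (n : ℚ) ^ 3 * ∑ k ∈ Finset.range (n + 1), ((n.choose k : ℚ)) ^ 2 * (((n + k).choose k : ℚ)) ^ 2 := by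
    rw [Finset.mul_sum]; exact Finset.sum_congr rfl fun k _ => by ring
  have f2 : ∑ k ∈ Finset.range (n + 1), (2 * (n : ℚ) - 1) * (17 * (n : ℚ) ^ 2 - 17 * n + 5) * (((n - 1).choose k : ℚ)) ^ 2 * (((n - 1 + k).choose k : ℚ)) ^ 2
      = (2 * (n : ℚ) - 1) * (17 * (n : ℚ) ^ 2 - 17 * n + 5) * ∑ k ∈ Finset.range (n + 1), (((n - 1).choose k : ℚ)) ^ 2 * (((n - 1 + k).choose k : ℚ)) ^ 2 := by
    rw [Finset.mul_sum]; exact Finset.sum_congr rfl fun k _ => by ring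
  have f3 : ∑ k ∈ Finset.range (n + 1), ((n : ℚ) - 1) ^ 3 * (((n - 2).choose k : ℚ)) ^ 2 * (((n - 2 + k).choose k : ℚ)) ^ 2
      = ((n : ℚ) - 1) ^ 3 * ∑ k ∈ Finset.range (n + 1), (((n - 2).choose k : ℚ)) ^ 2 * (((n - 2 + k).choose k : ℚ)) ^ 2 := by
    rw [Finset.mul_sum]; exact Finset.sum_congr rfl fun k _ => by ring
  rw [f1, f2, f3, hext1, hext2] at hsum
  linarith [hsum]

lemma cb (m : ℕ) (hm : 1 ≤ m) :
    (m : ℚ) * ((2 * m).choose m) = 2 * (2 * (m : ℚ) - 1) * ((2 * (m - 1)).choose (m - 1)) := by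
  have h := Nat.succ_mul_centralBinom_succ (m - 1)
  rw [Nat.sub_add_cancel hm] at h
  have := congrArg (fun z : ℕ => (z : ℚ)) h
  simp only [Nat.centralBinom] at this
  push_cast [Nat.cast_sub hm] at this
  linarith [this]

lemma keyB (m : ℕ) (hm : 2 ≤ m) :
    (m : ℚ) ^ 4 * (((2 * m).choose m : ℚ) *
        ∑ k ∈ Finset.range (m + 1), ((m.choose k : ℚ)) ^ 2 * (((m + k).choose k : ℚ)) ^ 2)
      = 2 * (2 * (m : ℚ) - 1) ^ 2 * (17 * (m : ℚ) ^ 2 - 17 * m + 5) *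
          (((2 * (m - 1)).choose (m - 1) : ℚ) *
            ∑ k ∈ Finset.range (m - 1 + 1), (((m - 1).choose k : ℚ)) ^ 2 * (((m - 1 + k).choose k : ℚ)) ^ 2)
        - 4 * (2 * (m : ℚ) - 1) * (2 * (m : ℚ) - 3) * ((m : ℚ) - 1) ^ 2 *
          (((2 * (m - 2)).choose (m - 2) : ℚ) *
            ∑ k ∈ Finset.range (m - 2 + 1), (((m - 2).choose k : ℚ)) ^ 2 * (((m - 2 + k).choose k : ℚ)) ^ 2) := by
  have h1 := cb m (by omega)
  have h2 := cb (m - 1) (by omega)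
  rw [show m - 1 - 1 = m - 2 from by omega] at h2
  rw [show ((m - 1 : ℕ) : ℚ) = (m : ℚ) - 1 from by push_cast [Nat.cast_sub (by omega : 1 ≤ m)]; ring] at h2
  have h3 := keyS m hm
  set S0 : ℚ := ∑ k ∈ Finset.range (m + 1), ((m.choose k : ℚ)) ^ 2 * (((m + k).choose k : ℚ)) ^ 2
  set S1 : ℚ := ∑ k ∈ Finset.range (m - 1 + 1), (((m - 1).choose k : ℚ)) ^ 2 * (((m - 1 + k).choose k : ℚ)) ^ 2
  set S2 : ℚ := ∑ k ∈ Finset.range (m - 2 + 1), (((m - 2).choose k : ℚ)) ^ 2 * (((m - 2 + k).choose k : ℚ)) ^ 2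
  linear_combination ((m : ℚ) * ((2 * m).choose m : ℚ)) * h3
    + ((2 * (m : ℚ) - 1) * (17 * (m : ℚ) ^ 2 - 17 * m + 5) * S1 - ((m : ℚ) - 1) ^ 3 * S2) * h1
    - (2 * (2 * (m : ℚ) - 1) * ((m : ℚ) - 1) ^ 2 * S2) * h2

/-- Case #29: A_n = C(2n,n) times the n-th Apéry number ∑_{k=0}^n C(n,k)^2 C(n+k,k)^2
satisfies the recurrence of θ^4 − 2z(2θ+1)^2(17θ^2+17θ+5) + 4z^2(2θ+3)(2θ+1)(θ+1)^2. -/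
theorem stmt_11
    (A : ℤ → ℤ)
    (hneg : ∀ m : ℤ, m < 0 → A m = 0)
    (hA : ∀ n : ℕ, A (n : ℤ) =
      (Nat.choose (2 * n) n : ℤ) *
        ∑ k ∈ Finset.range (n + 1),
          ((n.choose k : ℤ)) ^ 2 * ((Nat.choose (n + k) k : ℤ)) ^ 2) :
    ∀ n : ℤ, 1 ≤ n →
      n ^ 4 * A n =
        2 * (2 * n - 1) ^ 2 * (17 * n ^ 2 - 17 * n + 5) * A (n - 1) -
          4 * (2 * n - 1) * (2 * n - 3) * (n - 1) ^ 2 * A (n - 2) := by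
  intro n hn
  lift n to ℕ using (by omega)
  have hm : 1 ≤ n := by exact_mod_cast hn
  rcases eq_or_lt_of_le hm with h1 | h2
  · -- n = 1
    subst h1
    have e1 : ((1 : ℕ) : ℤ) - 1 = ((0 : ℕ) : ℤ) := by norm_num
    have e2 : ((1 : ℕ) : ℤ) - 2 = (-1 : ℤ) := by norm_num
    rw [e1, e2, hA 1, hA 0, hneg (-1) (by norm_num)]
    simp [Finset.sum_range_succ]
  · -- n ≥ 2
    have hm2 : 2 ≤ n := h2
    have e1 : ((n : ℤ)) - 1 = ((n - 1 : ℕ) : ℤ) := by omega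
    have e2 : ((n : ℤ)) - 2 = ((n - 2 : ℕ) : ℤ) := by omega
    rw [e1, e2, hA n, hA (n - 1), hA (n - 2)]
    have hB := keyB n hm2
    rw [← @Int.cast_inj ℚ]
    push_cast [Nat.cast_sub (by omega : 1 ≤ n), Nat.cast_sub (by omega : 2 ≤ n)] at hB ⊢
    linear_combination hB
end

section
/- Let A_n = sum over all quintuples (i,j,k,l,m) of natural numbers with i+j+k+l+m = n of (n!/(i!·j!·k!·l!·m!))^2. Then, with the convention A_m = 0 for m < 0, for every integer n ≥ 1 one has n^4·A_n = (35(n−1)^4+70(n−1)^3+63(n−1)^2+28(n−1)+5)·A_{n−1} − (n−1)^2(259n^2−518n+285)·A_{n−2} + 225(n−1)^2(n−2)^2·A_{n−3}. (Equivalently, Σ A_n z^n is the analytic solution of θ^4 − z(35θ^4+70θ^3+63θ^2+28θ+5) + z^2(θ+1)^2(259θ^2+518θ+285) − 225z^3(θ+1)^2(θ+2)^2, case #34 of the table.) -/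
/-!
With `g = ∑ zⁿ / n!²`, the multinomial sum is `A_n = n!² [zⁿ] g⁵`. For `θ = z d/dz` the series `g`
solves the Bessel-type equation `θ² g = z g`, and the fifth power of any solution of that equation
is annihilated by one fixed operator of order six: expanding with the Leibniz rule, `θ z = z` and
`θ² g = z g`, this is a polynomial identity in `z`, `g` and `θ g`. Its coefficients give a
recurrence for `b_n = A_n / n!²`, which is the stated one multiplied out by `(n - 1)!²`.
-/

open PowerSeries Finset
open scoped LaurentSeries Nat

section QuinticBessel

variable {R A : Type*} [CommSemiring R] [CommRing A] [Algebra R A]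

def quinticBesselOperator (D : Derivation R A A) (x F : A) : A :=
  D^[6] F - 35 * D^[4] (x * F) + 70 * D^[3] (x * F) - 63 * D^[2] (x * F) + 28 * D (x * F)
    - 5 * (x * F) + 259 * D^[2] (x ^ 2 * F) - 518 * D (x ^ 2 * F) + 285 * (x ^ 2 * F)
    - 225 * (x ^ 3 * F)

theorem quinticBesselOperator_pow_five {D : Derivation R A A} {x f : A} (hx : D x = x)
    (hf : D (D f) = x * f) : quinticBesselOperator D x (f ^ 5) = 0 := by
  simp only [quinticBesselOperator, Function.iterate_succ_apply', Function.iterate_zero_apply,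
    Derivation.leibniz, Derivation.leibniz_pow, map_add, map_nsmul, smul_eq_mul, hx, hf]
  ring

end QuinticBessel

namespace PowerSeries

section CommSemiring

variable {R : Type*} [CommSemiring R]

noncomputable def eulerDeriv : Derivation R R⟦X⟧ R⟦X⟧ := (X : R⟦X⟧) • d⁄dX R

theorem eulerDeriv_X : eulerDeriv (X : R⟦X⟧) = X := by
  simp [eulerDeriv]

theorem coeff_eulerDeriv (n : ℕ) (f : R⟦X⟧) : coeff n (eulerDeriv f) = n * coeff n f := by
  cases n with
  | zero => simp [eulerDeriv]
  | succ m =>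
    simp only [eulerDeriv, Derivation.smul_apply, smul_eq_mul, coeff_succ_X_mul, coeff_derivative]
    push_cast; ring

theorem coeff_iterate_eulerDeriv (k n : ℕ) (f : R⟦X⟧) :
    coeff n (eulerDeriv^[k] f) = n ^ k * coeff n f := by
  induction k with
  | zero => simp
  | succ k ih => rw [Function.iterate_succ_apply', coeff_eulerDeriv, ih, pow_succ]; ring

theorem coeff_X_pow_mul_eq_coeff_coe (f : R⟦X⟧) (n j : ℕ) :
    coeff n (X ^ j * f) = (f : R⸨X⸩).coeff (n - j) := by
  rw [coeff_X_pow_mul']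
  by_cases hjn : j ≤ n
  · rw [if_pos hjn, ← Nat.cast_sub hjn, LaurentSeries.coeff_coe_powerSeries]
  · rw [if_neg hjn, PowerSeries.coeff_coe, if_pos (by omega)]

theorem coeff_pow_five (f : R⟦X⟧) (n : ℕ) :
    coeff n (f ^ 5) =
      ∑ i ∈ range (n + 1), ∑ j ∈ range (n + 1), ∑ k ∈ range (n + 1),
        ∑ l ∈ range (n + 1), ∑ m ∈ range (n + 1),
          if i + j + k + l + m = n then
            coeff i f * coeff j f * coeff k f * coeff l f * coeff m f
          else 0 := by
  have hn : n < n + 1 := Nat.lt_succ_self n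
  have htrunc : coeff n (f ^ 5) = (trunc (n + 1) f ^ 5).coeff n := calc
    coeff n (f ^ 5) = (trunc (n + 1) (f ^ 5)).coeff n := by rw [coeff_trunc, if_pos hn]
    _ = (trunc (n + 1) ((trunc (n + 1) f : R⟦X⟧) ^ 5)).coeff n := by rw [trunc_trunc_pow]
    _ = (trunc (n + 1) f ^ 5).coeff n := by
      rw [coeff_trunc, if_pos hn, ← Polynomial.coe_pow, Polynomial.coeff_coe]
  rw [htrunc, trunc_apply, ← range_eq_Ico]
  simp only [pow_succ', pow_zero, mul_one]
  -- `sum_mul_sum` before `mul_sum`, so that the indices come out in the order of the factors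
  simp only [sum_mul_sum]
  simp only [mul_sum, Polynomial.monomial_mul_monomial, Polynomial.finsetSum_coeff,
    Polynomial.coeff_monomial, ← add_assoc, ← mul_assoc]

/-- For `j > k` both sides vanish, which covers the boundary cases `n = 1, 2` of the recurrence. -/
theorem descFactorial_sq_mul_eq {a : ℤ → R} {F : R⟦X⟧}
    (ha : ∀ m : ℕ, a m = (m ! : R) ^ 2 * coeff m F) (k j : ℕ) :
    (k.descFactorial j : R) ^ 2 * a (k - j) = (k ! : R) ^ 2 * (F : R⸨X⸩).coeff (k - j) := by
  by_cases hjk : j ≤ k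
  · rw [← Nat.cast_sub hjk, ha, LaurentSeries.coeff_coe_powerSeries,
      ← Nat.factorial_mul_descFactorial hjk]
    push_cast
    ring
  · rw [Nat.descFactorial_eq_zero_iff_lt.mpr (by omega), PowerSeries.coeff_coe,
      if_pos (by omega)]
    simp

end CommSemiring

theorem coeff_quinticBesselOperator {R : Type*} [CommRing R] (F : R⟦X⟧) (n : ℕ) :
    coeff n (quinticBesselOperator eulerDeriv X F) =
      n ^ 6 * (F : R⸨X⸩).coeff n
        - (35 * n ^ 4 - 70 * n ^ 3 + 63 * n ^ 2 - 28 * n + 5) * (F : R⸨X⸩).coeff (n - 1)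
        + (259 * n ^ 2 - 518 * n + 285) * (F : R⸨X⸩).coeff (n - 2)
        - 225 * (F : R⸨X⸩).coeff (n - 3) := by
  have hX : ∀ f : R⟦X⟧, coeff n (X * f) = (f : R⸨X⸩).coeff (n - 1) := fun f => by
    simpa using coeff_X_pow_mul_eq_coeff_coe f n 1
  simp only [quinticBesselOperator, map_sub, map_add, ← map_ofNat C, coeff_C_mul,
    coeff_iterate_eulerDeriv, coeff_eulerDeriv, coeff_X_pow_mul_eq_coeff_coe, hX,
    LaurentSeries.coeff_coe_powerSeries]
  push_cast
  ring

end PowerSeries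

theorem factorial_prod_dvd_of_sum_eq {i j k l m n : ℕ} (h : i + j + k + l + m = n) :
    i ! * j ! * k ! * l ! * m ! ∣ n ! := by
  subst h
  simpa [Fin.prod_univ_five, Fin.sum_univ_five] using
    Dvd.intro _ (Nat.multinomial_spec Finset.univ ![i, j, k, l, m])

section Bessel

variable (K : Type*) [Field K] [CharZero K]

noncomputable def besselSeries : K⟦X⟧ := mk fun n => ((n ! : K) ^ 2)⁻¹

theorem eulerDeriv_eulerDeriv_besselSeries :
    eulerDeriv (eulerDeriv (besselSeries K)) = X * besselSeries K := by
  ext n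
  rw [coeff_eulerDeriv, coeff_eulerDeriv]
  cases n with
  | zero => simp
  | succ m =>
    rw [coeff_succ_X_mul]
    simp only [besselSeries, coeff_mk, Nat.factorial_succ]
    push_cast
    field_simp

theorem besselSeries_pow_five_recurrence (n : ℕ) :
    let b := ((besselSeries K ^ 5 : K⟦X⟧) : K⸨X⸩).coeff
    n ^ 6 * b n = (35 * n ^ 4 - 70 * n ^ 3 + 63 * n ^ 2 - 28 * n + 5) * b (n - 1)
      - (259 * n ^ 2 - 518 * n + 285) * b (n - 2) + 225 * b (n - 3) := by
  have h := congrArg (coeff n) <| quinticBesselOperator_pow_five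
    eulerDeriv_X (eulerDeriv_eulerDeriv_besselSeries K)
  rw [coeff_quinticBesselOperator, map_zero] at h
  linear_combination h

variable {K}

theorem multinomial_sq_eq {i j k l m n : ℕ} (h : i + j + k + l + m = n) :
    ((n ! / (i ! * j ! * k ! * l ! * m !) : ℕ) : K) ^ 2 =
      (n ! : K) ^ 2 * (((i ! : K) ^ 2)⁻¹ * ((j ! : K) ^ 2)⁻¹ * ((k ! : K) ^ 2)⁻¹ *
        ((l ! : K) ^ 2)⁻¹ * ((m ! : K) ^ 2)⁻¹) := by
  rw [Nat.cast_div (factorial_prod_dvd_of_sum_eq h) (Nat.cast_ne_zero.mpr (by positivity))]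
  push_cast
  field_simp

theorem sum_multinomial_sq_eq (n : ℕ) :
    ((∑ i ∈ range (n + 1), ∑ j ∈ range (n + 1), ∑ k ∈ range (n + 1),
        ∑ l ∈ range (n + 1), ∑ m ∈ range (n + 1),
          if i + j + k + l + m = n then
            ((n ! / (i ! * j ! * k ! * l ! * m !) : ℕ) : ℤ) ^ 2
          else 0 : ℤ) : K) = (n ! : K) ^ 2 * coeff n (besselSeries K ^ 5) := by
  simp only [coeff_pow_five, besselSeries, coeff_mk, mul_sum, mul_ite, mul_zero, Int.cast_sum,
    Int.cast_ite, Int.cast_pow, Int.cast_natCast, Int.cast_zero]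
  refine sum_congr rfl fun i _ => sum_congr rfl fun j _ => sum_congr rfl fun k _ =>
    sum_congr rfl fun l _ => sum_congr rfl fun m _ => ?_
  split_ifs with h
  · exact multinomial_sq_eq h
  · rfl

end Bessel

theorem stmt_12_general
    (A : ℤ → ℤ)
    (hA : ∀ n : ℕ, A (n : ℤ) =
      ∑ i ∈ Finset.range (n + 1), ∑ j ∈ Finset.range (n + 1), ∑ k ∈ Finset.range (n + 1),
        ∑ l ∈ Finset.range (n + 1), ∑ m ∈ Finset.range (n + 1),
          if i + j + k + l + m = n then
            ((Nat.factorial n /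
              (Nat.factorial i * Nat.factorial j * Nat.factorial k * Nat.factorial l *
                Nat.factorial m) : ℕ) : ℤ) ^ 2
          else 0) :
    ∀ n : ℤ, 1 ≤ n →
      n ^ 4 * A n =
        (35 * (n - 1) ^ 4 + 70 * (n - 1) ^ 3 + 63 * (n - 1) ^ 2 + 28 * (n - 1) + 5) * A (n - 1) -
          (n - 1) ^ 2 * (259 * n ^ 2 - 518 * n + 285) * A (n - 2) +
          225 * (n - 1) ^ 2 * (n - 2) ^ 2 * A (n - 3) := by
  intro n hn
  obtain ⟨k, rfl⟩ : ∃ k : ℕ, n = k + 1 := ⟨(n - 1).toNat, by omega⟩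
  have ha : ∀ m : ℕ, ((A m : ℤ) : ℚ) = (m ! : ℚ) ^ 2 * coeff m (besselSeries ℚ ^ 5) :=
    fun m => by rw [hA m, sum_multinomial_sq_eq]
  have hdesc := descFactorial_sq_mul_eq (a := fun m ↦ (A m : ℚ)) ha
  have hA_succ := hdesc (k + 1) 0
  have hA_self := hdesc k 0
  have hA_pred := hdesc k 1
  have hA_pred2 := hdesc k 2
  have hrec := besselSeries_pow_five_recurrence ℚ (k + 1)
  simp only [Nat.descFactorial_zero, Nat.descFactorial_one, Nat.cast_descFactorial_two,
    Nat.factorial_succ, Nat.cast_zero, sub_zero] at hA_succ hA_self hA_pred hA_pred2 hrec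
  apply Int.cast_injective (α := ℚ)
  push_cast at hA_succ hA_self hA_pred hA_pred2 hrec ⊢
  rw [show (k : ℤ) + 1 - 1 = k by ring, show (k : ℤ) + 1 - 2 = k - 1 by ring,
    show (k : ℤ) + 1 - 3 = k - 2 by ring] at hrec ⊢
  linear_combination (k + 1 : ℚ) ^ 4 * hA_succ + (k ! : ℚ) ^ 2 * hrec
    - (35 * k ^ 4 + 70 * k ^ 3 + 63 * k ^ 2 + 28 * k + 5 : ℚ) * hA_self
    + (259 * (k + 1) ^ 2 - 518 * (k + 1) + 285 : ℚ) * hA_pred - 225 * hA_pred2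

/-- Case #34: A_n = ∑_{i+j+k+l+m=n} (n!/(i!j!k!l!m!))^2 satisfies the recurrence of
θ^4 − z(35θ^4+70θ^3+63θ^2+28θ+5) + z^2(θ+1)^2(259θ^2+518θ+285) − 225z^3(θ+1)^2(θ+2)^2. -/
theorem stmt_12
    (A : ℤ → ℤ)
    (hneg : ∀ m : ℤ, m < 0 → A m = 0)
    (hA : ∀ n : ℕ, A (n : ℤ) =
      ∑ i ∈ Finset.range (n + 1), ∑ j ∈ Finset.range (n + 1), ∑ k ∈ Finset.range (n + 1),
        ∑ l ∈ Finset.range (n + 1), ∑ m ∈ Finset.range (n + 1),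
          if i + j + k + l + m = n then
            ((Nat.factorial n /
              (Nat.factorial i * Nat.factorial j * Nat.factorial k * Nat.factorial l *
                Nat.factorial m) : ℕ) : ℤ) ^ 2
          else 0) :
    ∀ n : ℤ, 1 ≤ n →
      n ^ 4 * A n =
        (35 * (n - 1) ^ 4 + 70 * (n - 1) ^ 3 + 63 * (n - 1) ^ 2 + 28 * (n - 1) + 5) * A (n - 1) -
          (n - 1) ^ 2 * (259 * n ^ 2 - 518 * n + 285) * A (n - 2) +
          225 * (n - 1) ^ 2 * (n - 2) ^ 2 * A (n - 3) :=
  stmt_12_general A hA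
end

section
/- Let A_n = ((4n)!/((n!)^2·(2n)!)) * (sum over k = 0..n of C(n,k)^3). Then, with the convention A_m = 0 for m < 0, for every integer n ≥ 1 one has n^4·A_n = 4(4n−3)(4n−1)(7n^2−7n+2)·A_{n−1} + 128(4n−7)(4n−5)(4n−3)(4n−1)·A_{n−2}. (Equivalently, Σ A_n z^n is the analytic solution of θ^4 − 4z(4θ+1)(4θ+3)(7θ^2+7θ+2) − 128z^2(4θ+1)(4θ+3)(4θ+5)(4θ+7), case #68 of the table.) -/
private def sI (m : ℕ) : ℤ := ∑ k ∈ Finset.range (m + 1), ((m.choose k : ℤ)) ^ 3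

private def cI (m : ℕ) : ℤ :=
  ((Nat.factorial (4 * m) / ((Nat.factorial m) ^ 2 * Nat.factorial (2 * m)) : ℕ) : ℤ)

private lemma cast_choose_mul (n k : ℕ) :
    ((n.choose k : ℚ)) * ((n : ℚ) + 1) = (((n + 1).choose k : ℚ)) * ((n : ℚ) + 1 - (k : ℚ)) := by
  rcases le_or_gt k (n + 1) with h | h
  · have h0 := Nat.choose_mul_succ_eq n k
    have h2 : ((n.choose k * (n + 1) : ℕ) : ℚ) = (((n + 1).choose k * (n + 1 - k) : ℕ) : ℚ) := by
      exact_mod_cast congrArg (fun t : ℕ => (t : ℚ)) h0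
    push_cast [h] at h2
    linarith
  · have h1 : n.choose k = 0 := Nat.choose_eq_zero_of_lt (by omega)
    have h2 : (n + 1).choose k = 0 := Nat.choose_eq_zero_of_lt (by omega)
    simp [h1, h2]

private lemma cast_choose_succ (n k : ℕ) :
    ((n.choose (k + 1) : ℚ)) * ((k : ℚ) + 1) = ((n.choose k : ℚ)) * ((n : ℚ) - (k : ℚ)) := by
  rcases le_or_gt k n with h | h
  · have h0 := Nat.choose_succ_right_eq n k
    have h2 : ((n.choose (k + 1) * (k + 1) : ℕ) : ℚ) = ((n.choose k * (n - k) : ℕ) : ℚ) := by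
      exact_mod_cast congrArg (fun t : ℕ => (t : ℚ)) h0
    push_cast [h] at h2
    linarith
  · have h1 : n.choose (k + 1) = 0 := Nat.choose_eq_zero_of_lt (by omega)
    have h2 : n.choose k = 0 := Nat.choose_eq_zero_of_lt (by omega)
    simp [h1, h2]

private def gfun (n k : ℕ) : ℚ :=
  (k : ℚ) ^ 3 *
    (4 * (k : ℚ) ^ 3 - (18 * (n : ℚ) + 30) * (k : ℚ) ^ 2
      + (27 * (n : ℚ) ^ 2 + 93 * (n : ℚ) + 78) * (k : ℚ)
      - (14 * (n : ℚ) ^ 3 + 74 * (n : ℚ) ^ 2 + 128 * (n : ℚ) + 72)) *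
    (((n + 2).choose k : ℚ)) ^ 3 / (((n : ℚ) + 1) * ((n : ℚ) + 2) ^ 3)

private lemma per_k (n k : ℕ) :
    ((n : ℚ) + 2) ^ 2 * (((n + 2).choose k : ℚ)) ^ 3
      - (7 * (n : ℚ) ^ 2 + 21 * (n : ℚ) + 16) * (((n + 1).choose k : ℚ)) ^ 3
      - 8 * ((n : ℚ) + 1) ^ 2 * ((n.choose k : ℚ)) ^ 3
    = gfun n (k + 1) - gfun n k := by
  have h1 := cast_choose_mul (n + 1) k
  have h2 := cast_choose_mul n k
  have h3 := cast_choose_succ (n + 2) k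
  push_cast at h1 h2 h3
  have hn2 : ((n : ℚ) + 2) ≠ 0 := by positivity
  have hn1 : ((n : ℚ) + 1) ≠ 0 := by positivity
  have hk1 : ((k : ℚ) + 1) ≠ 0 := by positivity
  have hy : (((n + 1).choose k : ℚ)) = (((n + 2).choose k : ℚ)) * ((n : ℚ) + 2 - k) / ((n : ℚ) + 2) := by
    rw [eq_div_iff hn2]; linarith
  have hz : ((n.choose k : ℚ)) = (((n + 1).choose k : ℚ)) * ((n : ℚ) + 1 - k) / ((n : ℚ) + 1) := by
    rw [eq_div_iff hn1]; linarith
  have hx' : (((n + 2).choose (k + 1) : ℚ)) = (((n + 2).choose k : ℚ)) * ((n : ℚ) + 2 - k) / ((k : ℚ) + 1) := by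
    rw [eq_div_iff hk1]; linarith
  unfold gfun
  rw [hz, hy, hx']
  push_cast
  field_simp
  ring

private lemma franelQ (n : ℕ) :
    ((n : ℚ) + 2) ^ 2 * ∑ k ∈ Finset.range (n + 2 + 1), (((n + 2).choose k : ℚ)) ^ 3
      = (7 * (n : ℚ) ^ 2 + 21 * (n : ℚ) + 16) * ∑ k ∈ Finset.range (n + 1 + 1), (((n + 1).choose k : ℚ)) ^ 3
        + 8 * ((n : ℚ) + 1) ^ 2 * ∑ k ∈ Finset.range (n + 1), ((n.choose k : ℚ)) ^ 3 := by
  have tele := Finset.sum_range_sub (gfun n) (n + 3)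
  have hg0 : gfun n 0 = 0 := by simp [gfun]
  have hgend : gfun n (n + 3) = 0 := by
    have : (n + 2).choose (n + 3) = 0 := Nat.choose_eq_zero_of_lt (by omega)
    simp [gfun, this]
  have hsum : ∑ k ∈ Finset.range (n + 3),
      (((n : ℚ) + 2) ^ 2 * (((n + 2).choose k : ℚ)) ^ 3
        - (7 * (n : ℚ) ^ 2 + 21 * (n : ℚ) + 16) * (((n + 1).choose k : ℚ)) ^ 3
        - 8 * ((n : ℚ) + 1) ^ 2 * ((n.choose k : ℚ)) ^ 3) = 0 := by
    rw [Finset.sum_congr rfl fun k _ => per_k n k, tele, hg0, hgend, sub_zero]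
  rw [Finset.sum_sub_distrib, Finset.sum_sub_distrib, ← Finset.mul_sum, ← Finset.mul_sum,
    ← Finset.mul_sum] at hsum
  have e1 : (n + 3) = (n + 2 + 1) := by omega
  have hy : ∑ k ∈ Finset.range (n + 3), (((n + 1).choose k : ℚ)) ^ 3
      = ∑ k ∈ Finset.range (n + 1 + 1), (((n + 1).choose k : ℚ)) ^ 3 := by
    rw [e1, Finset.sum_range_succ]
    have : (n + 1).choose (n + 2) = 0 := Nat.choose_eq_zero_of_lt (by omega)
    simp [this]
  have hz : ∑ k ∈ Finset.range (n + 3), ((n.choose k : ℚ)) ^ 3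
      = ∑ k ∈ Finset.range (n + 1), ((n.choose k : ℚ)) ^ 3 := by
    rw [e1, Finset.sum_range_succ, Finset.sum_range_succ]
    have h1 : n.choose (n + 2) = 0 := Nat.choose_eq_zero_of_lt (by omega)
    have h2 : n.choose (n + 1) = 0 := Nat.choose_eq_zero_of_lt (by omega)
    simp [h1, h2]
  rw [hy, hz] at hsum
  have hx : ∑ k ∈ Finset.range (n + 3), (((n + 2).choose k : ℚ)) ^ 3
      = ∑ k ∈ Finset.range (n + 2 + 1), (((n + 2).choose k : ℚ)) ^ 3 := by rw [e1]
  rw [hx] at hsum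
  linarith

private lemma franelZ (m : ℕ) :
    ((m : ℤ) + 2) ^ 2 * sI (m + 2)
      = (7 * (m : ℤ) ^ 2 + 21 * (m : ℤ) + 16) * sI (m + 1) + 8 * ((m : ℤ) + 1) ^ 2 * sI m := by
  have h := franelQ m
  have e : ∀ j : ℕ, ((sI j : ℤ) : ℚ) = ∑ k ∈ Finset.range (j + 1), ((j.choose k : ℚ)) ^ 3 := by
    intro j; unfold sI; push_cast; rfl
  rw [← e (m + 2), ← e (m + 1), ← e m] at h
  exact_mod_cast h

private lemma cdiv (m : ℕ) :
    Nat.factorial (4 * m) / ((Nat.factorial m) ^ 2 * Nat.factorial (2 * m))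
      = Nat.centralBinom m * Nat.centralBinom (2 * m) := by
  have hm : m ≤ 2 * m := by omega
  have h1 : (2 * m).choose m * Nat.factorial m * Nat.factorial (2 * m - m)
      = Nat.factorial (2 * m) := Nat.choose_mul_factorial_mul_factorial hm
  have hsub : 2 * m - m = m := by omega
  rw [hsub] at h1
  have hm2 : 2 * m ≤ 2 * (2 * m) := by omega
  have h2 : (2 * (2 * m)).choose (2 * m) * Nat.factorial (2 * m) * Nat.factorial (2 * (2 * m) - 2 * m)
      = Nat.factorial (2 * (2 * m)) := Nat.choose_mul_factorial_mul_factorial hm2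
  have hsub2 : 2 * (2 * m) - 2 * m = 2 * m := by omega
  rw [hsub2] at h2
  have h4 : 4 * m = 2 * (2 * m) := by omega
  apply Nat.div_eq_of_eq_mul_left
  · positivity
  · rw [h4]
    calc Nat.factorial (2 * (2 * m))
        = (2 * (2 * m)).choose (2 * m) * Nat.factorial (2 * m) * Nat.factorial (2 * m) := h2.symm
      _ = (2 * (2 * m)).choose (2 * m) * ((2 * m).choose m * Nat.factorial m * Nat.factorial m)
            * Nat.factorial (2 * m) := by rw [h1]
      _ = Nat.centralBinom m * Nat.centralBinom (2 * m)
            * ((Nat.factorial m) ^ 2 * Nat.factorial (2 * m)) := by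
          unfold Nat.centralBinom; ring

private lemma cratio (m : ℕ) :
    ((m : ℤ) + 1) ^ 2 * cI (m + 1) = 4 * (4 * (m : ℤ) + 1) * (4 * (m : ℤ) + 3) * cI m := by
  have e1 : cI (m + 1) = ((Nat.centralBinom (m + 1) : ℤ)) * ((Nat.centralBinom (2 * (m + 1)) : ℤ)) := by
    unfold cI; rw [cdiv]; push_cast; ring
  have e0 : cI m = ((Nat.centralBinom m : ℤ)) * ((Nat.centralBinom (2 * m) : ℤ)) := by
    unfold cI; rw [cdiv]; push_cast; ring
  have r1n := Nat.succ_mul_centralBinom_succ m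
  have r2n := Nat.succ_mul_centralBinom_succ (2 * m + 1)
  have r3n := Nat.succ_mul_centralBinom_succ (2 * m)
  have R1 : ((m : ℤ) + 1) * (Nat.centralBinom (m + 1) : ℤ)
      = 2 * (2 * (m : ℤ) + 1) * (Nat.centralBinom m : ℤ) := by exact_mod_cast r1n
  have R2 : (2 * (m : ℤ) + 2) * (Nat.centralBinom (2 * m + 1 + 1) : ℤ)
      = 2 * (2 * (2 * (m : ℤ) + 1) + 1) * (Nat.centralBinom (2 * m + 1) : ℤ) := by exact_mod_cast r2n
  have R3 : (2 * (m : ℤ) + 1) * (Nat.centralBinom (2 * m + 1) : ℤ)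
      = 2 * (2 * (2 * (m : ℤ)) + 1) * (Nat.centralBinom (2 * m) : ℤ) := by exact_mod_cast r3n
  have e2 : 2 * (m + 1) = 2 * m + 1 + 1 := by omega
  rw [e1, e0, e2]
  have R23 : (2 * (m : ℤ) + 2) * (2 * (m : ℤ) + 1) * (Nat.centralBinom (2 * m + 1 + 1) : ℤ)
      = 4 * (4 * (m : ℤ) + 3) * (4 * (m : ℤ) + 1) * (Nat.centralBinom (2 * m) : ℤ) := by
    linear_combination (2 * (m : ℤ) + 1) * R2 + 2 * (2 * (2 * (m : ℤ) + 1) + 1) * R3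
  have hc : (2 * ((2 : ℤ) * m + 1)) ≠ 0 := by positivity
  apply mul_left_cancel₀ hc
  linear_combination (((m : ℤ) + 1) * (Nat.centralBinom (m + 1) : ℤ)) * R23
    + (4 * (4 * (m : ℤ) + 1) * (4 * (m : ℤ) + 3) * (Nat.centralBinom (2 * m) : ℤ)) * R1

/-- Case #68: A_n = ((4n)!/((n!)^2 (2n)!)) * ∑_{k=0}^n C(n,k)^3 satisfies the recurrence of
θ^4 − 4z(4θ+1)(4θ+3)(7θ^2+7θ+2) − 128z^2(4θ+1)(4θ+3)(4θ+5)(4θ+7). -/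
theorem stmt_14
    (A : ℤ → ℤ)
    (hneg : ∀ m : ℤ, m < 0 → A m = 0)
    (hA : ∀ n : ℕ, A (n : ℤ) =
      ((Nat.factorial (4 * n) /
          ((Nat.factorial n) ^ 2 * Nat.factorial (2 * n)) : ℕ) : ℤ) *
        ∑ k ∈ Finset.range (n + 1), ((n.choose k : ℤ)) ^ 3) :
    ∀ n : ℤ, 1 ≤ n →
      n ^ 4 * A n =
        4 * (4 * n - 3) * (4 * n - 1) * (7 * n ^ 2 - 7 * n + 2) * A (n - 1) +
          128 * (4 * n - 7) * (4 * n - 5) * (4 * n - 3) * (4 * n - 1) * A (n - 2) := by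
  have hA' : ∀ n : ℕ, A (n : ℤ) = cI n * sI n := hA
  intro n hn
  obtain ⟨j, hj⟩ := Int.le.dest hn
  cases j with
  | zero =>
    have hn1 : n = 1 := by omega
    subst hn1
    have h1 := hA' 1
    have h0 := hA' 0
    have hm1 : A (-1) = 0 := hneg (-1) (by norm_num)
    norm_num at h1 h0
    have c1 : cI 1 = 12 := by decide
    have c0 : cI 0 = 1 := by decide
    have s1 : sI 1 = 2 := by decide
    have s0 : sI 0 = 1 := by decide
    rw [c1, s1] at h1
    rw [c0, s0] at h0
    norm_num [h1, h0, hm1]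
  | succ m =>
    have hn2 : n = (m : ℤ) + 2 := by omega
    subst hn2
    have e2 : ((m : ℤ) + 2) = ((m + 2 : ℕ) : ℤ) := by push_cast; ring
    have e1 : ((m : ℤ) + 2 - 1) = ((m + 1 : ℕ) : ℤ) := by push_cast; ring
    have e0 : ((m : ℤ) + 2 - 2) = ((m : ℕ) : ℤ) := by push_cast; ring
    rw [e1, e0, e2, hA' (m + 2), hA' (m + 1), hA' m]
    have h1 := cratio (m + 1)
    have h2 := cratio m
    have h3 := franelZ m
    push_cast at h1 h2 ⊢
    linear_combination (((m : ℤ) + 2) ^ 2 * sI (m + 2)) * h1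
      + (4 * (4 * (m : ℤ) + 5) * (4 * (m : ℤ) + 7) * cI (m + 1)) * h3
      + (32 * (4 * (m : ℤ) + 5) * (4 * (m : ℤ) + 7) * sI m) * h2
end

section
/- For every natural number n, C(2n,n)^2 * (sum over k = 0..n of C(n,k)^2 · C(2n+k,n)) equals the sum over all pairs (k,l) with 0 ≤ k ≤ l ≤ n of C(n,k) · C(n,l) · C(n+k,n) · C(n+l,n) · C(2n+l,n) · C(n,l−k). (This is the equality of the two expressions for A_n in case #99 of the table; the terms with k > l vanish because C(n,l−k) = 0 for l < k.) -/
/-!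
Exchanging the order of summation, it suffices to evaluate, for each `k ≤ n`, the sum over
`l`. Writing `l = k + m` and `C(2n+l, n) C(n+l, n) = C(2n+l, 2n) C(2n, n)`, this reduces to the
Pfaff–Saalschütz-type evaluation `∑ₘ C(n,m) C(n,k+m) C(2n+k+m, 2n) = C(2n+k, n+k) C(2n, n-k)`,
after which only an identity between products of binomial coefficients remains. That evaluation
expands `C(2n+k+m, 2n)` by Vandermonde, sums over `m` first (trinomial revision and Vandermonde),
and finishes with trinomial revision and one more Vandermonde convolution.
-/

open Finset

theorem Nat.add_choose_eq_sum_range_s15 (a b c : ℕ) :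
    (a + b).choose c = ∑ q ∈ range (c + 1), a.choose q * b.choose (c - q) := by
  rw [Nat.add_choose_eq, Finset.Nat.sum_antidiagonal_eq_sum_range_succ_mk]

theorem sum_range_succ_eq_of_forall_gt {M : Type*} [AddCommMonoid M] {f : ℕ → M} {a b : ℕ}
    (hab : a ≤ b) (hf : ∀ i, a < i → f i = 0) :
    ∑ i ∈ range (a + 1), f i = ∑ i ∈ range (b + 1), f i :=
  sum_subset (range_subset_range.2 (by omega)) fun i _ hi => hf i (by simpa using hi)

theorem sum_choose_mul_choose_add_mul_choose {n k : ℕ} (hk : k ≤ n) (q : ℕ) :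
    ∑ m ∈ range (n + 1), n.choose m * (n.choose (k + m) * (k + m).choose q)
      = n.choose q * (2 * n - q).choose (n - k) := by
  have hterm : ∀ m ≤ n - k,
      n.choose (k + m) * (k + m).choose q = n.choose q * (n - q).choose (n - k - m) := by
    intro m hm
    rcases le_or_gt q (k + m) with hqm | hqm
    · rw [Nat.choose_mul hqm,
        Nat.choose_symm_of_eq_add (show n - q = (k + m - q) + (n - k - m) by omega)]
    rcases le_or_gt q n with hq | hq
    · rw [Nat.choose_eq_zero_of_lt hqm, Nat.choose_eq_zero_of_lt (by omega : n - q < n - k - m),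
        mul_zero, mul_zero]
    · rw [Nat.choose_eq_zero_of_lt hqm, Nat.choose_eq_zero_of_lt hq, mul_zero, zero_mul]
  calc
    _ = ∑ m ∈ range (n - k + 1), n.choose m * (n.choose (k + m) * (k + m).choose q) :=
        (sum_range_succ_eq_of_forall_gt (by omega) fun m hm => by
          rw [Nat.choose_eq_zero_of_lt (by omega : n < k + m), zero_mul, mul_zero]).symm
    _ = n.choose q * ∑ m ∈ range (n - k + 1), n.choose m * (n - q).choose (n - k - m) := by
        rw [mul_sum]
        refine sum_congr rfl fun m hm => ?_
        rw [hterm m (Nat.lt_succ_iff.1 (mem_range.1 hm))]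
        ring
    _ = n.choose q * (2 * n - q).choose (n - k) := by
        rcases le_or_gt q n with hq | hq
        · rw [← Nat.add_choose_eq_sum_range_s15, show n + (n - q) = 2 * n - q by omega]
        · rw [Nat.choose_eq_zero_of_lt hq, zero_mul, zero_mul]

theorem sum_choose_mul_choose_add_mul_add_choose {n k : ℕ} (hk : k ≤ n) (y : ℕ) :
    ∑ m ∈ range (n + 1), n.choose m * (n.choose (k + m) * (y + (k + m)).choose (2 * n))
      = (y + k).choose (n + k) * y.choose (n - k) := by
  calc
    _ = ∑ q ∈ range (2 * n + 1), (∑ m ∈ range (n + 1),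
          n.choose m * (n.choose (k + m) * (k + m).choose q)) * y.choose (2 * n - q) := by
        simp_rw [sum_mul]
        rw [sum_comm]
        refine sum_congr rfl fun m _ => ?_
        rw [add_comm y, Nat.add_choose_eq_sum_range_s15 (k + m), mul_sum, mul_sum]
        exact sum_congr rfl fun q _ => by ring
    _ = ∑ q ∈ range (2 * n + 1),
          n.choose q * ((2 * n - q).choose (n - k) * y.choose (2 * n - q)) := by
        simp_rw [sum_choose_mul_choose_add_mul_choose hk, mul_assoc]
    _ = ∑ q ∈ range (n + 1),
          n.choose q * ((2 * n - q).choose (n - k) * y.choose (2 * n - q)) :=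
        (sum_range_succ_eq_of_forall_gt (by omega) fun q hq => by
          rw [Nat.choose_eq_zero_of_lt hq, zero_mul]).symm
    _ = y.choose (n - k) *
          ∑ q ∈ range (n + 1), n.choose q * (y - (n - k)).choose (n + k - q) := by
        rw [mul_sum]
        refine sum_congr rfl fun q hq => ?_
        have hq : q ≤ n := Nat.lt_succ_iff.1 (mem_range.1 hq)
        rw [mul_comm ((2 * n - q).choose _), Nat.choose_mul (by omega),
          show 2 * n - q - (n - k) = n + k - q by omega]
        ring
    _ = y.choose (n - k) *
          ∑ q ∈ range (n + k + 1), n.choose q * (y - (n - k)).choose (n + k - q) := by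
        rw [sum_range_succ_eq_of_forall_gt (a := n) (b := n + k) (by omega) fun q hq => by
          rw [Nat.choose_eq_zero_of_lt hq, zero_mul]]
    _ = (y + k).choose (n + k) * y.choose (n - k) := by
        rw [← Nat.add_choose_eq_sum_range_s15]
        rcases le_or_gt (n - k) y with h | h
        · rw [show n + (y - (n - k)) = y + k by omega, mul_comm]
        · rw [Nat.choose_eq_zero_of_lt h, zero_mul, mul_zero]

theorem choose_mul_choose_mul_choose_sub {n k : ℕ} (hk : k ≤ n) :
    (n + k).choose n * ((2 * n + k).choose (n + k) * (2 * n).choose (n - k))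
      = (2 * n).choose n * (n.choose k * (2 * n + k).choose n) := by
  have h₁ : (2 * n + k).choose (n + k) * (n + k).choose n
      = (2 * n + k).choose n * (n + k).choose k := by
    rw [Nat.choose_mul (by omega), show 2 * n + k - n = n + k by omega, Nat.add_sub_cancel_left]
  have h₂ : (2 * n).choose (n + k) * (n + k).choose k = (2 * n).choose n * n.choose k := by
    rw [Nat.choose_mul (by omega), Nat.add_sub_cancel, Nat.choose_mul hk,
      Nat.choose_symm_of_eq_add (show 2 * n - k = (n - k) + n by omega)]
  have h₃ : (2 * n).choose (n - k) = (2 * n).choose (n + k) :=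
    Nat.choose_symm_of_eq_add (by omega)
  linear_combination (2 * n).choose (n - k) * h₁ +
    (2 * n + k).choose n * ((n + k).choose k * h₃ + h₂)

theorem sum_Ico_choose_mul_choose_sub {n k : ℕ} (hk : k ≤ n) :
    ∑ l ∈ Ico k (n + 1), n.choose k * n.choose l * (n + k).choose n * (n + l).choose n *
        (2 * n + l).choose n * n.choose (l - k)
      = (2 * n).choose n ^ 2 * (n.choose k ^ 2 * (2 * n + k).choose n) := by
  have hsplit : ∀ l, (2 * n + l).choose n * (n + l).choose n
      = (2 * n + l).choose (2 * n) * (2 * n).choose n := fun l => by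
    rw [Nat.choose_mul (by omega), show 2 * n + l - n = n + l by omega,
      show 2 * n - n = n by omega]
  rw [sum_Ico_eq_sum_range, show n + 1 - k = n - k + 1 by omega]
  calc
    _ = n.choose k * (n + k).choose n * (2 * n).choose n * ∑ m ∈ range (n - k + 1),
          n.choose m * (n.choose (k + m) * (2 * n + (k + m)).choose (2 * n)) := by
        rw [mul_sum]
        refine sum_congr rfl fun m _ => ?_
        rw [Nat.add_sub_cancel_left]
        linear_combination n.choose k * n.choose (k + m) * (n + k).choose n * n.choose m *
          hsplit (k + m)
    _ = n.choose k * (n + k).choose n * (2 * n).choose n * ∑ m ∈ range (n + 1),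
          n.choose m * (n.choose (k + m) * (2 * n + (k + m)).choose (2 * n)) := by
        rw [sum_range_succ_eq_of_forall_gt (a := n - k) (b := n) (by omega) fun m hm => by
          rw [Nat.choose_eq_zero_of_lt (by omega : n < k + m), zero_mul, mul_zero]]
    _ = _ := by
        rw [sum_choose_mul_choose_add_mul_add_choose hk]
        linear_combination n.choose k * (2 * n).choose n * choose_mul_choose_mul_choose_sub hk

/-- Case #99: C(2n,n)^2 ∑_{k=0}^n C(n,k)^2 C(2n+k,n) equals the double sum over
0 ≤ k ≤ l ≤ n of C(n,k) C(n,l) C(n+k,n) C(n+l,n) C(2n+l,n) C(n,l−k). -/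
theorem stmt_15 (n : ℕ) :
    (Nat.choose (2 * n) n) ^ 2 *
      ∑ k ∈ Finset.range (n + 1), (n.choose k) ^ 2 * Nat.choose (2 * n + k) n =
    ∑ l ∈ Finset.range (n + 1), ∑ k ∈ Finset.range (l + 1),
      n.choose k * n.choose l * Nat.choose (n + k) n * Nat.choose (n + l) n *
        Nat.choose (2 * n + l) n * n.choose (l - k) := by
  have hswap := sum_Ico_Ico_comm 0 (n + 1) fun k l =>
    n.choose k * n.choose l * (n + k).choose n * (n + l).choose n *
      (2 * n + l).choose n * n.choose (l - k)
  simp only [← range_eq_Ico] at hswap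
  rw [← hswap, mul_sum]
  exact sum_congr rfl fun k hk =>
    (sum_Ico_choose_mul_choose_sub (Nat.lt_succ_iff.1 (mem_range.1 hk))).symm
end

section
/- Let A_n = (sum over k = 0..n of C(n,k)^3)^2, the square of the n-th Franel number. Then, with the convention A_m = 0 for m < 0, for every integer n ≥ 1 one has n^4·A_n = (73(n−1)^4+98(n−1)^3+77(n−1)^2+28(n−1)+4)·A_{n−1} − (520(n−2)^4−1040(n−2)^3−2904(n−2)^2−2048(n−2)−480)·A_{n−2} − 64·(65(n−3)^4+390(n−3)^3+417(n−3)^2+180(n−3)+28)·A_{n−3} + 512·(73(n−4)^4+194(n−4)^3+221(n−4)^2+124(n−4)+28)·A_{n−4} − 32768·(n−4)^4·A_{n−5}. (Equivalently, Σ A_n z^n is the analytic solution of the degree-5 operator of case #100 of the table.) -/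
set_option maxHeartbeats 1000000
set_option maxRecDepth 8000

def fr100 (m : ℕ) : ℤ := ∑ k ∈ Finset.range (m + 1), ((m.choose k : ℤ)) ^ 3

def Sc100 (n k : ℕ) : ℤ := ((-72)*(k:ℤ)^3 + 78*(k:ℤ)^4 + (-30)*(k:ℤ)^5 + 4*(k:ℤ)^6 + (-272)*(n:ℤ)*(k:ℤ)^3 + 249*(n:ℤ)*(k:ℤ)^4 + (-78)*(n:ℤ)*(k:ℤ)^5 + 8*(n:ℤ)*(k:ℤ)^6 + (-402)*(n:ℤ)^2*(k:ℤ)^3 + 291*(n:ℤ)^2*(k:ℤ)^4 + (-66)*(n:ℤ)^2*(k:ℤ)^5 + 4*(n:ℤ)^2*(k:ℤ)^6 + (-290)*(n:ℤ)^3*(k:ℤ)^3 + 147*(n:ℤ)^3*(k:ℤ)^4 + (-18)*(n:ℤ)^3*(k:ℤ)^5 + (-102)*(n:ℤ)^4*(k:ℤ)^3 + 27*(n:ℤ)^4*(k:ℤ)^4 + (-14)*(n:ℤ)^5*(k:ℤ)^3) * (((n+2).choose k : ℤ))^3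

lemma chooseId2 (m k : ℕ) :
    ((m:ℤ)+1-(k:ℤ)) * (((m+1).choose k : ℤ)) = ((m:ℤ)+1) * ((m.choose k : ℤ)) := by
  rcases le_or_gt k (m+1) with h | h
  · have h2 : ((m.choose k : ℤ)) * ((m:ℤ)+1)
        = (((m+1).choose k : ℤ)) * (((m+1-k : ℕ)) : ℤ) := by
      exact_mod_cast Nat.choose_mul_succ_eq m k
    rw [Nat.cast_sub h] at h2
    push_cast at h2
    linear_combination -h2
  · have h1 : (m+1).choose k = 0 := Nat.choose_eq_zero_of_lt h
    have h2 : m.choose k = 0 := Nat.choose_eq_zero_of_lt (by omega)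
    simp [h1, h2]

lemma chooseId1 (m k : ℕ) :
    ((k:ℤ)+1) * (((m+1).choose (k+1) : ℤ)) = ((m:ℤ)+1-(k:ℤ)) * (((m+1).choose k : ℤ)) := by
  have h' : ((m:ℤ)+1) * ((m.choose k : ℤ)) = (((m+1).choose (k+1) : ℤ)) * ((k:ℤ)+1) := by
    exact_mod_cast Nat.add_one_mul_choose_eq m k
  rw [chooseId2 m k]
  linear_combination -h'

lemma franel100 (n : ℕ) :
    ((n:ℤ)+2)^2 * fr100 (n+2)
      = (7*(n:ℤ)^2+21*(n:ℤ)+16) * fr100 (n+1) + 8*((n:ℤ)+1)^2 * fr100 n := by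
  have perk : ∀ k : ℕ, Sc100 n (k+1) - Sc100 n k
      = ((-160) + 480*(k:ℤ) + (-624)*(k:ℤ)^2 + 520*(k:ℤ)^3 + (-264)*(k:ℤ)^4 + 72*(k:ℤ)^5 + (-8)*(k:ℤ)^6 + (-984)*(n:ℤ) + 2652*(n:ℤ)*(k:ℤ) + (-3030)*(n:ℤ)*(k:ℤ)^2 + 2133*(n:ℤ)*(k:ℤ)^3 + (-888)*(n:ℤ)*(k:ℤ)^4 + 192*(n:ℤ)*(k:ℤ)^5 + (-16)*(n:ℤ)*(k:ℤ)^6 + (-2620)*(n:ℤ)^2 + 6204*(n:ℤ)^2*(k:ℤ) + (-6051)*(n:ℤ)^2*(k:ℤ)^2 + 3454*(n:ℤ)^2*(k:ℤ)^3 + (-1104)*(n:ℤ)^2*(k:ℤ)^4 + 168*(n:ℤ)^2*(k:ℤ)^5 + (-8)*(n:ℤ)^2*(k:ℤ)^6 + (-3942)*(n:ℤ)^3 + 7959*(n:ℤ)^3*(k:ℤ) + (-6354)*(n:ℤ)^3*(k:ℤ)^2 + 2756*(n:ℤ)^3*(k:ℤ)^3 + (-600)*(n:ℤ)^3*(k:ℤ)^4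 + 48*(n:ℤ)^3*(k:ℤ)^5 + (-3663)*(n:ℤ)^4 + 6042*(n:ℤ)^4*(k:ℤ) + (-3696)*(n:ℤ)^4*(k:ℤ)^2 + 1082*(n:ℤ)^4*(k:ℤ)^3 + (-120)*(n:ℤ)^4*(k:ℤ)^4 + (-2151)*(n:ℤ)^5 + 2712*(n:ℤ)^5*(k:ℤ) + (-1128)*(n:ℤ)^5*(k:ℤ)^2 + 167*(n:ℤ)^5*(k:ℤ)^3 + (-779)*(n:ℤ)^6 + 666*(n:ℤ)^6*(k:ℤ) + (-141)*(n:ℤ)^6*(k:ℤ)^2 + (-159)*(n:ℤ)^7 + 69*(n:ℤ)^7*(k:ℤ) + (-14)*(n:ℤ)^8) * (((n+2).choose k : ℤ))^3 := by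
    intro k
    have h1 := chooseId1 (n+1) k
    rw [show n+1+1 = n+2 from rfl] at h1
    push_cast at h1
    have h3 : (((k:ℤ)+1) * (((n+2).choose (k+1)) : ℤ))^3
        = (((n:ℤ)+2-(k:ℤ)) * (((n+2).choose k) : ℤ))^3 := by rw [h1]; ring
    have hk : ((k:ℤ)+1)^3 ≠ 0 := by positivity
    refine mul_left_cancel₀ hk ?_
    simp only [Sc100]
    push_cast
    linear_combination ((-20) + (-30)*(k:ℤ) + 12*(k:ℤ)^2 + 20*(k:ℤ)^3 + (-12)*(k:ℤ)^4 + (-6)*(k:ℤ)^5 + 4*(k:ℤ)^6 + (-93)*(n:ℤ) + (-162)*(n:ℤ)*(k:ℤ) + 18*(n:ℤ)*(k:ℤ)^2 + 104*(n:ℤ)*(k:ℤ)^3 + (-21)*(n:ℤ)*(k:ℤ)^4 + (-30)*(n:ℤ)*(k:ℤ)^5 + 8*(n:ℤ)*(k:ℤ)^6 + (-173)*(n:ℤ)^2 + (-348)*(n:ℤ)^2*(k:ℤ) + (-60)*(n:ℤ)^2*(k:ℤ)^2 + 182*(n:ℤ)^2*(k:ℤ)^3 + 21*(n:ℤ)^2*(k:ℤ)^4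 + (-42)*(n:ℤ)^2*(k:ℤ)^5 + 4*(n:ℤ)^2*(k:ℤ)^6 + (-161)*(n:ℤ)^3 + (-372)*(n:ℤ)^3*(k:ℤ) + (-168)*(n:ℤ)^3*(k:ℤ)^2 + 118*(n:ℤ)^3*(k:ℤ)^3 + 57*(n:ℤ)^3*(k:ℤ)^4 + (-18)*(n:ℤ)^3*(k:ℤ)^5 + (-75)*(n:ℤ)^4 + (-198)*(n:ℤ)^4*(k:ℤ) + (-144)*(n:ℤ)^4*(k:ℤ)^2 + 6*(n:ℤ)^4*(k:ℤ)^3 + 27*(n:ℤ)^4*(k:ℤ)^4 + (-14)*(n:ℤ)^5 + (-42)*(n:ℤ)^5*(k:ℤ) + (-42)*(n:ℤ)^5*(k:ℤ)^2 + (-14)*(n:ℤ)^5*(k:ℤ)^3) * h3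
  have tel : ∑ k ∈ Finset.range (n+3), (Sc100 n (k+1) - Sc100 n k)
      = Sc100 n (n+3) - Sc100 n 0 := Finset.sum_range_sub (Sc100 n) (n+3)
  have hend : Sc100 n (n+3) = 0 := by
    have hc : (n+2).choose (n+3) = 0 := Nat.choose_eq_zero_of_lt (by omega)
    unfold Sc100
    rw [hc]
    norm_num
  have hzero : Sc100 n 0 = 0 := by
    unfold Sc100
    simp only [Nat.cast_zero, Nat.choose_zero_right, Nat.cast_one]
    ring
  have sum0 : ∑ k ∈ Finset.range (n+3),
      ((-160) + 480*(k:ℤ) + (-624)*(k:ℤ)^2 + 520*(k:ℤ)^3 + (-264)*(k:ℤ)^4 + 72*(k:ℤ)^5 + (-8)*(k:ℤ)^6 + (-984)*(n:ℤ) + 2652*(n:ℤ)*(k:ℤ) + (-3030)*(n:ℤ)*(k:ℤ)^2 + 2133*(n:ℤ)*(k:ℤ)^3 + (-888)*(n:ℤ)*(k:ℤ)^4 + 192*(n:ℤ)*(k:ℤ)^5 + (-16)*(n:ℤ)*(k:ℤ)^6 + (-2620)*(n:ℤ)^2 + 6204*(n:ℤ)^2*(k:ℤ) + (-6051)*(n:ℤ)^2*(k:ℤ)^2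 + 3454*(n:ℤ)^2*(k:ℤ)^3 + (-1104)*(n:ℤ)^2*(k:ℤ)^4 + 168*(n:ℤ)^2*(k:ℤ)^5 + (-8)*(n:ℤ)^2*(k:ℤ)^6 + (-3942)*(n:ℤ)^3 + 7959*(n:ℤ)^3*(k:ℤ) + (-6354)*(n:ℤ)^3*(k:ℤ)^2 + 2756*(n:ℤ)^3*(k:ℤ)^3 + (-600)*(n:ℤ)^3*(k:ℤ)^4 + 48*(n:ℤ)^3*(k:ℤ)^5 + (-3663)*(n:ℤ)^4 + 6042*(n:ℤ)^4*(k:ℤ) + (-3696)*(n:ℤ)^4*(k:ℤ)^2 + 1082*(n:ℤ)^4*(k:ℤ)^3 + (-120)*(n:ℤ)^4*(k:ℤ)^4 + (-2151)*(n:ℤ)^5 + 2712*(n:ℤ)^5*(k:ℤ) + (-1128)*(n:ℤ)^5*(k:ℤ)^2 + 167*(n:ℤ)^5*(k:ℤ)^3 + (-779)*(n:ℤ)^6 + 666*(n:ℤ)^6*(k:ℤ) + (-141)*(n:ℤ)^6*(k:ℤ)^2 + (-159)*(n:ℤ)^7 + 69*(n:ℤ)^7*(k:ℤ) + (-14)*(n:ℤ)^8)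 * (((n+2).choose k : ℤ))^3 = 0 := by
    calc ∑ k ∈ Finset.range (n+3), ((-160) + 480*(k:ℤ) + (-624)*(k:ℤ)^2 + 520*(k:ℤ)^3 + (-264)*(k:ℤ)^4 + 72*(k:ℤ)^5 + (-8)*(k:ℤ)^6 + (-984)*(n:ℤ) + 2652*(n:ℤ)*(k:ℤ) + (-3030)*(n:ℤ)*(k:ℤ)^2 + 2133*(n:ℤ)*(k:ℤ)^3 + (-888)*(n:ℤ)*(k:ℤ)^4 + 192*(n:ℤ)*(k:ℤ)^5 + (-16)*(n:ℤ)*(k:ℤ)^6 + (-2620)*(n:ℤ)^2 + 6204*(n:ℤ)^2*(k:ℤ) + (-6051)*(n:ℤ)^2*(k:ℤ)^2 + 3454*(n:ℤ)^2*(k:ℤ)^3 + (-1104)*(n:ℤ)^2*(k:ℤ)^4 + 168*(n:ℤ)^2*(k:ℤ)^5 + (-8)*(n:ℤ)^2*(k:ℤ)^6 + (-3942)*(n:ℤ)^3 + 7959*(n:ℤ)^3*(k:ℤ) + (-6354)*(n:ℤ)^3*(k:ℤ)^2 + 2756*(n:ℤ)^3*(k:ℤ)^3 + (-600)*(n:ℤ)^3*(k:ℤ)^4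 + 48*(n:ℤ)^3*(k:ℤ)^5 + (-3663)*(n:ℤ)^4 + 6042*(n:ℤ)^4*(k:ℤ) + (-3696)*(n:ℤ)^4*(k:ℤ)^2 + 1082*(n:ℤ)^4*(k:ℤ)^3 + (-120)*(n:ℤ)^4*(k:ℤ)^4 + (-2151)*(n:ℤ)^5 + 2712*(n:ℤ)^5*(k:ℤ) + (-1128)*(n:ℤ)^5*(k:ℤ)^2 + 167*(n:ℤ)^5*(k:ℤ)^3 + (-779)*(n:ℤ)^6 + 666*(n:ℤ)^6*(k:ℤ) + (-141)*(n:ℤ)^6*(k:ℤ)^2 + (-159)*(n:ℤ)^7 + 69*(n:ℤ)^7*(k:ℤ) + (-14)*(n:ℤ)^8) * (((n+2).choose k : ℤ))^3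
        = ∑ k ∈ Finset.range (n+3), (Sc100 n (k+1) - Sc100 n k) :=
          Finset.sum_congr rfl (fun k _ => (perk k).symm)
      _ = Sc100 n (n+3) - Sc100 n 0 := tel
      _ = 0 := by rw [hend, hzero]; ring
  have splitk : ∀ k : ℕ, ((-160) + 480*(k:ℤ) + (-624)*(k:ℤ)^2 + 520*(k:ℤ)^3 + (-264)*(k:ℤ)^4 + 72*(k:ℤ)^5 + (-8)*(k:ℤ)^6 + (-984)*(n:ℤ) + 2652*(n:ℤ)*(k:ℤ) + (-3030)*(n:ℤ)*(k:ℤ)^2 + 2133*(n:ℤ)*(k:ℤ)^3 + (-888)*(n:ℤ)*(k:ℤ)^4 + 192*(n:ℤ)*(k:ℤ)^5 + (-16)*(n:ℤ)*(k:ℤ)^6 + (-2620)*(n:ℤ)^2 + 6204*(n:ℤ)^2*(k:ℤ) + (-6051)*(n:ℤ)^2*(k:ℤ)^2 + 3454*(n:ℤ)^2*(k:ℤ)^3 + (-1104)*(n:ℤ)^2*(k:ℤ)^4 + 168*(n:ℤ)^2*(k:ℤ)^5 + (-8)*(n:ℤ)^2*(k:ℤ)^6 + (-3942)*(n:ℤ)^3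 + 7959*(n:ℤ)^3*(k:ℤ) + (-6354)*(n:ℤ)^3*(k:ℤ)^2 + 2756*(n:ℤ)^3*(k:ℤ)^3 + (-600)*(n:ℤ)^3*(k:ℤ)^4 + 48*(n:ℤ)^3*(k:ℤ)^5 + (-3663)*(n:ℤ)^4 + 6042*(n:ℤ)^4*(k:ℤ) + (-3696)*(n:ℤ)^4*(k:ℤ)^2 + 1082*(n:ℤ)^4*(k:ℤ)^3 + (-120)*(n:ℤ)^4*(k:ℤ)^4 + (-2151)*(n:ℤ)^5 + 2712*(n:ℤ)^5*(k:ℤ) + (-1128)*(n:ℤ)^5*(k:ℤ)^2 + 167*(n:ℤ)^5*(k:ℤ)^3 + (-779)*(n:ℤ)^6 + 666*(n:ℤ)^6*(k:ℤ) + (-141)*(n:ℤ)^6*(k:ℤ)^2 + (-159)*(n:ℤ)^7 + 69*(n:ℤ)^7*(k:ℤ) + (-14)*(n:ℤ)^8) * (((n+2).choose k : ℤ))^3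
      = ((n:ℤ)+2)^5*((n:ℤ)+1)^3 * (((n+2).choose k : ℤ))^3
        - (7*(n:ℤ)^2+21*(n:ℤ)+16)*((n:ℤ)+1)^3*((n:ℤ)+2)^3 * (((n+1).choose k : ℤ))^3
        - 8*((n:ℤ)+1)^5*((n:ℤ)+2)^3 * ((n.choose k : ℤ))^3 := by
    intro k
    have e1 : ((n:ℤ)+2-(k:ℤ)) * (((n+2).choose k : ℤ))
        = ((n:ℤ)+2) * (((n+1).choose k : ℤ)) := by
      have h := chooseId2 (n+1) k
      rw [show n+1+1 = n+2 from rfl] at h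
      push_cast at h
      linear_combination h
    have e2 := chooseId2 n k
    have h1c : (((n:ℤ)+2-(k:ℤ)) * (((n+2).choose k : ℤ)))^3
        = (((n:ℤ)+2) * (((n+1).choose k : ℤ)))^3 := by rw [e1]
    have h2c : (((n:ℤ)+1-(k:ℤ)) * (((n+1).choose k : ℤ)))^3
        = (((n:ℤ)+1) * ((n.choose k : ℤ)))^3 := by rw [e2]
    linear_combination (-((7*(n:ℤ)^2+21*(n:ℤ)+16)*((n:ℤ)+1)^3)
        - 8*((n:ℤ)+1)^2*((n:ℤ)+1-(k:ℤ))^3) * h1c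
      + (-8*((n:ℤ)+1)^2*((n:ℤ)+2)^3) * h2c
  rw [Finset.sum_congr rfl (fun k _ => splitk k)] at sum0
  rw [Finset.sum_sub_distrib, Finset.sum_sub_distrib,
      ← Finset.mul_sum, ← Finset.mul_sum, ← Finset.mul_sum] at sum0
  have sc : ∑ k ∈ Finset.range (n+3), (((n+2).choose k : ℤ))^3 = fr100 (n+2) := by
    rw [fr100, show n+2+1 = n+3 by omega]
  have sb : ∑ k ∈ Finset.range (n+3), (((n+1).choose k : ℤ))^3 = fr100 (n+1) := by
    rw [show n+3 = (n+2)+1 by omega, Finset.sum_range_succ, fr100,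
        show n+1+1 = n+2 by omega]
    simp [Nat.choose_eq_zero_of_lt (show n+1 < n+2 by omega)]
  have sa : ∑ k ∈ Finset.range (n+3), ((n.choose k : ℤ))^3 = fr100 n := by
    rw [show n+3 = (n+2)+1 by omega, Finset.sum_range_succ,
        show n+2 = (n+1)+1 by omega, Finset.sum_range_succ, fr100]
    simp [Nat.choose_eq_zero_of_lt (show n < n+1 by omega),
      Nat.choose_eq_zero_of_lt (show n < n+2 by omega)]
  rw [sc, sb, sa] at sum0
  have hne : ((n:ℤ)+1)^3*((n:ℤ)+2)^3 ≠ 0 := ne_of_gt (by positivity)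
  refine mul_left_cancel₀ hne ?_
  linear_combination sum0

lemma quad100 (n a b c d e g : ℤ)
    (h0 : n^2*g = (7*n^2-7*n+2)*e + 8*(n-1)^2*d)
    (h1 : (n-1)^2*e = (7*n^2-21*n+16)*d + 8*(n-2)^2*c)
    (h2 : (n-2)^2*d = (7*n^2-35*n+44)*c + 8*(n-3)^2*b)
    (h3 : (n-3)^2*c = (7*n^2-49*n+86)*b + 8*(n-4)^2*a)
    (hne : (n-1)*(n-2)*(n-3) ≠ 0) :
    n ^ 4 * g^2 =
        (73 * (n - 1) ^ 4 + 98 * (n - 1) ^ 3 + 77 * (n - 1) ^ 2 + 28 * (n - 1) + 4) * e^2 -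
        (520 * (n - 2) ^ 4 - 1040 * (n - 2) ^ 3 - 2904 * (n - 2) ^ 2 - 2048 * (n - 2) - 480) * d^2 -
        64 * (65 * (n - 3) ^ 4 + 390 * (n - 3) ^ 3 + 417 * (n - 3) ^ 2 + 180 * (n - 3) + 28) * c^2 +
        512 * (73 * (n - 4) ^ 4 + 194 * (n - 4) ^ 3 + 221 * (n - 4) ^ 2 + 124 * (n - 4) + 28) * b^2 -
        32768 * (n - 4) ^ 4 * a^2 := by
  refine mul_left_cancel₀ (pow_ne_zero 4 hne) ?_
  linear_combination (2592*e + 10368*d + (-28080)*n*e + (-96768)*n*d + 1296*n^2*g + 138240*n^2*e + 412992*n^2*d + (-9504)*n^3*g + (-408408)*n^3*e + (-1067712)*n^3*d + 31320*n^4*g + 807362*n^4*e + 1867208*n^4*d + (-61320)*n^5*g + (-1128847)*n^5*e + (-2335696)*n^5*d + 79441*n^6*g + 1151135*n^6*e + 2154600*n^6*d + (-71760)*n^7*g + (-870068)*n^7*e + (-1488704)*n^7*d + 46364*n^8*g + 490160*n^8*e + 774160*n^8*d + (-21600)*n^9*g + (-205002)*n^9*e + (-301536)*n^9*d + 7206*n^10*g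 + 62722*n^10*e + 86608*n^10*d + (-1680)*n^11*g + (-13628)*n^11*e + (-17792)*n^11*d + 260*n^12*g + 1990*n^12*e + 2472*n^12*d + (-24)*n^13*g + (-175)*n^13*e + (-208)*n^13*d + n^14*g + 7*n^14*e + 8*n^14*d) * h0 + ((-31104)*e + (-456192)*d + (-995328)*c + 290304*n*e + 3853440*n*d + 8294400*n*c + (-1238976)*n^2*e + (-14822784)*n^2*d + (-31601664)*n^2*c + 3203136*n^3*e + 34394304*n^3*d + 72972288*n^3*c + (-5601624)*n^4*e + (-53754592)*n^4*d + (-114117888)*n^4*c + 7007088*n^5*e + 59834312*n^5*d + 127895808*n^5*c + (-6463800)*n^6*e + (-48898744)*n^6*d + (-105971904)*n^6*c + 4466112*n^7*e + 29796448*n^7*d + 65974272*n^7*c + (-2322480)*n^8*e + (-13600096)*n^8*d + (-31024896)*n^8*c + 904608*n^9*e + 4625712*n^9*d + 10971648*n^9*c + (-259824)*n^10*e + (-1153616)*n^10*d + (-2873472)*n^10*c + 53376*n^11*e + 204448*n^11*d + 540672*n^11*c + (-7416)*n^12*e + (-24320)*n^12*d + (-69120)*n^12*c + 624*n^13*e +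 1736*n^13*d + 5376*n^13*c + (-24)*n^14*e + (-56)*n^14*d + (-192)*n^14*c) * h1 + (995328*d + 3317760*c + 17915904*b + (-8294400)*n*d + (-23749632)*n*c + (-143327232)*n*b + 31601664*n^2*d + 75340800*n^2*c + 522547200*n^2*b + (-72972288)*n^3*d + (-138690048)*n^3*c + (-1150930944)*n^3*b + 114117888*n^4*d + 161866240*n^4*c + 1711425024*n^4*b + (-127895808)*n^5*d + (-120644672)*n^5*c + (-1818326016)*n^5*b + 105971904*n^6*d + 50953792*n^6*c + 1424297472*n^6*b + (-65974272)*n^7*d + (-2376448)*n^7*c + (-836112384)*n^7*b + 31024896*n^8*d + (-12000512)*n^8*c + 369896448*n^8*b + (-10971648)*n^9*d + 8604288*n^9*c + (-122812416)*n^9*b + 2873472*n^10*d + (-3315328)*n^10*c + 30145536*n^10*b + (-540672)*n^11*d + 807680*n^11*c + (-5308416)*n^11*b + 69120*n^12*d + (-124672)*n^12*c + 634368*n^12*b + (-5376)*n^13*d + 11200*n^13*c + (-46080)*n^13*b + 192*n^14*d + (-448)*n^14*c + 1536*n^14*b) * h2 + ((-5971968)*c + 57065472*b + (-84934656)*a +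 47775744*n*c + (-450994176)*n*b + 665321472*n*a + (-174182400)*n^2*c + 1622163456*n^2*b + (-2369323008)*n^2*a + 383643648*n^3*c + (-3519860736)*n^3*b + 5083889664*n^3*a + (-570475008)*n^4*c + 5148593152*n^4*b + (-7343865856)*n^4*a + 606108672*n^5*c + (-5372523008)*n^5*b + 7557152768*n^5*a + (-474765824)*n^6*c + 4126531072*n^6*b + (-5715333120)*n^6*a + 278704128*n^7*c + (-2371459072)*n^7*b + 3228762112*n^7*a + (-123298816)*n^8*c + 1025363968*n^8*b + (-1369948160)*n^8*a + 40937472*n^9*c + (-332172288)*n^9*b + 434700288*n^9*a + (-10048512)*n^10*c + 79422464*n^10*b + (-101605376)*n^10*a + 1769472*n^11*c + (-13600768)*n^11*b + 16973824*n^11*a + (-211456)*n^12*c + 1577984*n^12*b + (-1916928)*n^12*a + 15360*n^13*c + (-111104)*n^13*b + 131072*n^13*a + (-512)*n^14*c + 3584*n^14*b + (-4096)*n^14*a) * h3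

/-- Case #100: A_n = (∑_{k=0}^n C(n,k)^3)^2, the square of the n-th Franel number,
satisfies the degree-5 recurrence. -/
theorem stmt_16
    (A : ℤ → ℤ)
    (hneg : ∀ m : ℤ, m < 0 → A m = 0)
    (hA : ∀ n : ℕ, A (n : ℤ) =
      (∑ k ∈ Finset.range (n + 1), ((n.choose k : ℤ)) ^ 3) ^ 2) :
    ∀ n : ℤ, 1 ≤ n →
      n ^ 4 * A n =
        (73 * (n - 1) ^ 4 + 98 * (n - 1) ^ 3 + 77 * (n - 1) ^ 2 + 28 * (n - 1) + 4) *
            A (n - 1) -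
        (520 * (n - 2) ^ 4 - 1040 * (n - 2) ^ 3 - 2904 * (n - 2) ^ 2 - 2048 * (n - 2) - 480) *
            A (n - 2) -
        64 * (65 * (n - 3) ^ 4 + 390 * (n - 3) ^ 3 + 417 * (n - 3) ^ 2 + 180 * (n - 3) + 28) *
            A (n - 3) +
        512 * (73 * (n - 4) ^ 4 + 194 * (n - 4) ^ 3 + 221 * (n - 4) ^ 2 + 124 * (n - 4) + 28) *
            A (n - 4) -
        32768 * (n - 4) ^ 4 * A (n - 5) := by
  have hAfr : ∀ m : ℕ, A (m : ℤ) = fr100 m ^ 2 := by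
    intro m; rw [hA m]; rfl
  intro n hn
  lift n to ℕ using (by linarith)
  have hn' : 1 ≤ n := by exact_mod_cast hn
  rcases lt_or_ge n 5 with h5 | h5
  · -- small cases
    have hfr0 : fr100 0 = 1 := by decide
    have hfr1 : fr100 1 = 2 := by decide
    have hfr2 : fr100 2 = 10 := by decide
    have hfr3 : fr100 3 = 56 := by decide
    have hfr4 : fr100 4 = 346 := by decide
    have hA0 : A 0 = 1 := by have h := hAfr 0; rw [hfr0] at h; norm_num at h; exact h
    have hA1 : A 1 = 4 := by have h := hAfr 1; rw [hfr1] at h; norm_num at h; exact h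
    have hA2 : A 2 = 100 := by have h := hAfr 2; rw [hfr2] at h; norm_num at h; exact h
    have hA3 : A 3 = 3136 := by have h := hAfr 3; rw [hfr3] at h; norm_num at h; exact h
    have hA4 : A 4 = 119716 := by have h := hAfr 4; rw [hfr4] at h; norm_num at h; exact h
    have hm1 : A (-1) = 0 := hneg _ (by norm_num)
    have hm2 : A (-2) = 0 := hneg _ (by norm_num)
    have hm3 : A (-3) = 0 := hneg _ (by norm_num)
    have hm4 : A (-4) = 0 := hneg _ (by norm_num)
    interval_cases n <;> norm_num [hA0, hA1, hA2, hA3, hA4, hm1, hm2, hm3, hm4]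
  · obtain ⟨m, rfl⟩ : ∃ m, n = m + 5 := ⟨n - 5, by omega⟩
    have h0 : ((m:ℤ)+5)^2 * fr100 (m+5)
        = (7*((m:ℤ)+5)^2-7*((m:ℤ)+5)+2) * fr100 (m+4) + 8*(((m:ℤ)+5)-1)^2 * fr100 (m+3) := by
      have h := franel100 (m+3)
      rw [show m+3+2 = m+5 by omega, show m+3+1 = m+4 by omega] at h
      push_cast at h
      linear_combination h
    have h1 : (((m:ℤ)+5)-1)^2 * fr100 (m+4)
        = (7*((m:ℤ)+5)^2-21*((m:ℤ)+5)+16) * fr100 (m+3) + 8*(((m:ℤ)+5)-2)^2 * fr100 (m+2) := by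
      have h := franel100 (m+2)
      rw [show m+2+2 = m+4 by omega, show m+2+1 = m+3 by omega] at h
      push_cast at h
      linear_combination h
    have h2 : (((m:ℤ)+5)-2)^2 * fr100 (m+3)
        = (7*((m:ℤ)+5)^2-35*((m:ℤ)+5)+44) * fr100 (m+2) + 8*(((m:ℤ)+5)-3)^2 * fr100 (m+1) := by
      have h := franel100 (m+1)
      rw [show m+1+2 = m+3 by omega, show m+1+1 = m+2 by omega] at h
      push_cast at h
      linear_combination h
    have h3 : (((m:ℤ)+5)-3)^2 * fr100 (m+2)
        = (7*((m:ℤ)+5)^2-49*((m:ℤ)+5)+86) * fr100 (m+1) + 8*(((m:ℤ)+5)-4)^2 * fr100 m := by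
      have h := franel100 m
      push_cast at h
      linear_combination h
    have hne : (((m:ℤ)+5)-1)*(((m:ℤ)+5)-2)*(((m:ℤ)+5)-3) ≠ 0 := by
      have : (((m:ℤ)+5)-1)*(((m:ℤ)+5)-2)*(((m:ℤ)+5)-3) = ((m:ℤ)+4)*((m:ℤ)+3)*((m:ℤ)+2) := by ring
      rw [this]; positivity
    have hmain := quad100 ((m:ℤ)+5) (fr100 m) (fr100 (m+1)) (fr100 (m+2)) (fr100 (m+3))
      (fr100 (m+4)) (fr100 (m+5)) h0 h1 h2 h3 hne
    have e1 : ((m+5:ℕ):ℤ) - 1 = ((m+4:ℕ):ℤ) := by push_cast; ring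
    have e2 : ((m+5:ℕ):ℤ) - 2 = ((m+3:ℕ):ℤ) := by push_cast; ring
    have e3 : ((m+5:ℕ):ℤ) - 3 = ((m+2:ℕ):ℤ) := by push_cast; ring
    have e4 : ((m+5:ℕ):ℤ) - 4 = ((m+1:ℕ):ℤ) := by push_cast; ring
    have e5 : ((m+5:ℕ):ℤ) - 5 = ((m:ℕ):ℤ) := by push_cast; ring
    rw [e1, e2, e3, e4, e5, hAfr (m+5), hAfr (m+4), hAfr (m+3), hAfr (m+2),
        hAfr (m+1), hAfr m]
    push_cast
    linear_combination hmain
end
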